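/- arXiv:2401.05372 — 9 statements merged into one kernel-verified Lean document; each statement's English description precedes it below -/
import Mathlib

section
/- Let τ = (1+√5)/2. If K_a and K_b are nonempty compact subsets of ℝ satisfying K_a = (−τ⁻¹)·K_a ∪ (−τ⁻¹)·K_b and K_b = (−τ⁻¹)·K_a − τ⁻¹, then K_a = [τ−2, τ−1] and K_b = [−1, τ−2]. In other words, the Fibonacci internal-space IFS has a unique fixed point among pairs of nonempty compact subsets of ℝ, given by these two intervals. -/
/-!
Substituting the second equation into the first shows that `K_a` alone is a fixed point of the
Hutchinson operator of the two contractions `f x = -τ⁻¹ x` and `f ∘ p`, where `p x = -τ⁻¹ x - τ⁻¹`.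
That operator contracts the Hausdorff distance between nonempty compact sets, so it has at most
one nonempty compact fixed point; since `τ⁻¹ = τ - 1` and `τ⁻² = 2 - τ`, the interval
`[τ - 2, τ - 1]` is one, and then `K_b = p '' K_a = [-1, τ - 2]`.
-/

open Metric Set Real
open scoped NNReal goldenRatio

theorem Set.image_const_mul_Icc_of_neg {K : Type*} [Field K] [LinearOrder K]
    [IsStrictOrderedRing K] {c : K} (hc : c < 0) (a b : K) :
    (c * ·) '' Icc a b = Icc (c * b) (c * a) := by
  have hc₀ : c ≠ 0 := hc.ne
  rw [image_eq_preimage_of_inverse (g := (c⁻¹ * ·)) (fun x => inv_mul_cancel_left₀ hc₀ x)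
    (fun x => mul_inv_cancel_left₀ hc₀ x), preimage_const_mul_Icc_of_neg _ _ (inv_lt_zero.2 hc)]
  simp only [div_inv_eq_mul, mul_comm]

section Hutchinson

variable {X : Type*} [PseudoMetricSpace X] {F : Set (X → X)} {r : ℝ≥0} {K L : Set X}

theorem exists_mem_biUnion_image_dist_le_mul_hausdorffDist (hF : ∀ g ∈ F, LipschitzWith r g)
    (hL : IsCompact L) (hL₀ : L.Nonempty) (hKL : hausdorffEDist K L ≠ ⊤) :
    ∀ x ∈ ⋃ g ∈ F, g '' K, ∃ y ∈ ⋃ g ∈ F, g '' L, dist x y ≤ r * hausdorffDist K L := by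
  simp only [mem_iUnion₂, mem_image]
  rintro _ ⟨g, hg, a, ha, rfl⟩
  obtain ⟨b, hb, hab⟩ := hL.exists_infDist_eq_dist hL₀ a
  refine ⟨g b, ⟨g, hg, b, hb, rfl⟩, (hF g hg).dist_le_mul a b |>.trans ?_⟩
  gcongr
  exact hab ▸ infDist_le_hausdorffDist_of_mem ha hKL

theorem hausdorffDist_biUnion_image_le (hF : ∀ g ∈ F, LipschitzWith r g)
    (hK : IsCompact K) (hK₀ : K.Nonempty) (hL : IsCompact L) (hL₀ : L.Nonempty) :
    hausdorffDist (⋃ g ∈ F, g '' K) (⋃ g ∈ F, g '' L) ≤ r * hausdorffDist K L := by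
  have hKL := hausdorffEDist_ne_top_of_nonempty_of_bounded hK₀ hL₀ hK.isBounded hL.isBounded
  refine hausdorffDist_le_of_mem_dist (mul_nonneg r.2 hausdorffDist_nonneg)
    (exists_mem_biUnion_image_dist_le_mul_hausdorffDist hF hL hL₀ hKL) ?_
  rw [hausdorffDist_comm]
  exact exists_mem_biUnion_image_dist_le_mul_hausdorffDist hF hK hK₀
    (hausdorffEDist_comm (s := K) ▸ hKL)

end Hutchinson

theorem eq_of_eq_biUnion_image {X : Type*} [MetricSpace X] {F : Set (X → X)} {r : ℝ≥0}
    {K L : Set X} (hr : r < 1) (hF : ∀ g ∈ F, LipschitzWith r g)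
    (hK : IsCompact K) (hK₀ : K.Nonempty) (hL : IsCompact L) (hL₀ : L.Nonempty)
    (hKF : K = ⋃ g ∈ F, g '' K) (hLF : L = ⋃ g ∈ F, g '' L) : K = L := by
  have hle : hausdorffDist K L ≤ r * hausdorffDist K L := by
    conv_lhs => rw [hKF, hLF]
    exact hausdorffDist_biUnion_image_le hF hK hK₀ hL hL₀
  have hr' : (r : ℝ) < 1 := hr
  have hzero : hausdorffDist K L = 0 := by nlinarith [hausdorffDist_nonneg (s := K) (t := L)]
  exact (hK.isClosed.hausdorffDist_zero_iff_eq hL.isClosed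
    (hausdorffEDist_ne_top_of_nonempty_of_bounded hK₀ hL₀ hK.isBounded hL.isBounded)).1 hzero

namespace Real

theorem inv_goldenRatio_eq_sub_one : φ⁻¹ = φ - 1 := by
  rw [inv_goldenRatio, ← one_sub_goldenConj, neg_sub]

theorem nnnorm_inv_goldenRatio_lt_one : ‖φ⁻¹‖₊ < 1 := by
  rw [← NNReal.coe_lt_coe, coe_nnnorm, Real.norm_eq_abs, abs_of_pos (inv_pos.2 goldenRatio_pos)]
  exact inv_lt_one_of_one_lt₀ one_lt_goldenRatio

theorem image_neg_inv_goldenRatio_mul_Icc (a b : ℝ) :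
    (fun x => -φ⁻¹ * x) '' Icc a b = Icc (-φ⁻¹ * b) (-φ⁻¹ * a) :=
  image_const_mul_Icc_of_neg (neg_neg_of_pos (inv_pos.2 goldenRatio_pos)) a b

theorem image_neg_inv_goldenRatio_mul_sub_inv_Icc :
    (fun x => -φ⁻¹ * x - φ⁻¹) '' Icc (φ - 2) (φ - 1) = Icc (-1) (φ - 2) := by
  rw [show (fun x => -φ⁻¹ * x - φ⁻¹) = (· - φ⁻¹) ∘ (fun x => -φ⁻¹ * x) from rfl, image_comp,
    image_neg_inv_goldenRatio_mul_Icc, image_sub_const_Icc, inv_goldenRatio_eq_sub_one]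
  congr 1 <;> linear_combination -goldenRatio_sq

theorem Icc_eq_image_neg_inv_goldenRatio_mul_union :
    Icc (φ - 2) (φ - 1) =
      (fun x => -φ⁻¹ * x) '' Icc (φ - 2) (φ - 1) ∪ (fun x => -φ⁻¹ * x) '' Icc (-1) (φ - 2) := by
  have h₁ := one_lt_goldenRatio
  rw [image_neg_inv_goldenRatio_mul_Icc, image_neg_inv_goldenRatio_mul_Icc,
    inv_goldenRatio_eq_sub_one, Icc_union_Icc_eq_Icc (by nlinarith) (by nlinarith)]
  congr 1
  · linear_combination goldenRatio_sq
  · ring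

end Real

theorem fibonacci_IFS_unique_fixed_point_general (τ : ℝ) (hτ : τ = (1 + Real.sqrt 5) / 2)
    (Ka Kb : Set ℝ) (hKa : Ka.Nonempty) (hca : IsCompact Ka)
    (h1 : Ka = (fun x : ℝ => -τ⁻¹ * x) '' Ka ∪ (fun x : ℝ => -τ⁻¹ * x) '' Kb)
    (h2 : Kb = (fun x : ℝ => -τ⁻¹ * x - τ⁻¹) '' Ka) :
    Ka = Set.Icc (τ - 2) (τ - 1) ∧ Kb = Set.Icc (-1) (τ - 2) := by
  have hτφ : τ = φ := hτ
  subst hτφ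
  set f : ℝ → ℝ := fun x => -φ⁻¹ * x
  set p : ℝ → ℝ := fun x => -φ⁻¹ * x - φ⁻¹
  have hf : LipschitzWith ‖-φ⁻¹‖₊ f := lipschitzWith_smul _
  have hp : LipschitzWith ‖-φ⁻¹‖₊ p := LipschitzWith.of_dist_le_mul fun x y => by
    show dist (f x - _) (f y - _) ≤ _
    rw [dist_sub_right]
    exact hf.dist_le_mul x y
  have hr : ‖-φ⁻¹‖₊ < 1 := nnnorm_neg φ⁻¹ ▸ nnnorm_inv_goldenRatio_lt_one
  have hfp : LipschitzWith ‖-φ⁻¹‖₊ (f ∘ p) :=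
    (hf.comp hp).weaken (mul_le_of_le_one_left (by positivity) hr.le)
  have hKa_fix : Ka = ⋃ g ∈ ({f, f ∘ p} : Set (ℝ → ℝ)), g '' Ka := by
    rw [biUnion_pair, image_comp, ← h2]
    exact h1
  have hI_fix : Icc (φ - 2) (φ - 1) =
      ⋃ g ∈ ({f, f ∘ p} : Set (ℝ → ℝ)), g '' Icc (φ - 2) (φ - 1) := by
    rw [biUnion_pair, image_comp, image_neg_inv_goldenRatio_mul_sub_inv_Icc]
    exact Icc_eq_image_neg_inv_goldenRatio_mul_union
  have hKa_eq : Ka = Icc (φ - 2) (φ - 1) :=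
    eq_of_eq_biUnion_image hr (by rintro g (rfl | rfl) <;> assumption) hca hKa isCompact_Icc
      (nonempty_Icc.2 (by linarith)) hKa_fix hI_fix
  exact ⟨hKa_eq, by rw [h2, hKa_eq, image_neg_inv_goldenRatio_mul_sub_inv_Icc]⟩

/-- The Fibonacci internal-space IFS has a unique fixed point among pairs of
nonempty compact subsets of `ℝ`, namely `([τ-2, τ-1], [-1, τ-2])`. -/
theorem fibonacci_IFS_unique_fixed_point (τ : ℝ) (hτ : τ = (1 + Real.sqrt 5) / 2)
    (Ka Kb : Set ℝ) (hKa : Ka.Nonempty) (hKb : Kb.Nonempty)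
    (hca : IsCompact Ka) (hcb : IsCompact Kb)
    (h1 : Ka = (fun x : ℝ => -τ⁻¹ * x) '' Ka ∪ (fun x : ℝ => -τ⁻¹ * x) '' Kb)
    (h2 : Kb = (fun x : ℝ => -τ⁻¹ * x - τ⁻¹) '' Ka) :
    Ka = Set.Icc (τ - 2) (τ - 1) ∧ Kb = Set.Icc (-1) (τ - 2) :=
  fibonacci_IFS_unique_fixed_point_general τ hτ Ka Kb hKa hca h1 h2
end

section
/- Let τ = (1+√5)/2 and let W_a, W_b be nonempty compact subsets of ℝ satisfying W_a = τ⁻²·W_a ∪ τ⁻²·(W_a − τ) ∪ τ⁻²·(W_b + τ²) and W_b = τ⁻²·(W_a − 2τ) ∪ τ⁻²·W_b. Then the interiors of W_a and W_b are disjoint: int(W_a) ∩ int(W_b) = ∅. -/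
/-!
Expanding by `φ²` undoes the IFS: every `p ∈ W_a` has `φ² p ∈ W_a`, `φ² p + φ ∈ W_a` or
`φ² p - φ² ∈ W_b`, and every `p ∈ W_b` has `φ² p + 2φ ∈ W_a` or `φ² p ∈ W_b`. Applied at the
extreme points this locates the windows: `W_a ⊆ [-1, 1]` and `W_b ⊆ [-φ, 0]`. Knowing this, most
combinations of branches are excluded for points of the four overlaps `W_a ∩ W_b`,
`W_a ∩ (W_a - φ)`, `W_a ∩ (W_b + φ)` and `W_a ∩ (W_a - 1)`, so that `φ²` maps each overlap into
translates of the others (up to one point). As `φ⁻² ≤ 2/5`, the resulting linear inequalities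
between the Lebesgue measures of the overlaps force `W_a ∩ W_b` to be null, so it has empty
interior.
-/

open MeasureTheory Set Real
open scoped goldenRatio ENNReal

theorem forall_mem_le_of_exists_mul_sub_le {ι : Type*} [Finite ι] {K : ι → Set ℝ}
    (hK : ∀ i, IsCompact (K i)) {a : ℝ} (ha : 1 < a) {u : ι → ℝ}
    (h : ∀ i, ∀ p ∈ K i, ∃ j, ∃ q ∈ K j, a * (p - u i) ≤ q - u j) :
    ∀ i, ∀ p ∈ K i, p ≤ u i := by
  set S := ⋃ i, (· - u i) '' K i
  have hS : IsCompact S := isCompact_iUnion fun i => (hK i).image (continuous_sub_right _)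
  intro i p hp
  have hpS : p - u i ∈ S := mem_iUnion.2 ⟨i, p, hp, rfl⟩
  obtain ⟨M, hMS, hM⟩ := hS.exists_isGreatest ⟨_, hpS⟩
  obtain ⟨k, r, hr, rfl⟩ := mem_iUnion.1 hMS
  obtain ⟨j, q, hq, hrq⟩ := h k r hr
  have hqM : q - u j ≤ r - u k := hM (mem_iUnion.2 ⟨j, q, hq, rfl⟩)
  have hM0 : r - u k ≤ 0 := by nlinarith
  linarith [hM hpS]

theorem forall_le_mem_of_exists_mul_sub_le {ι : Type*} [Finite ι] {K : ι → Set ℝ}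
    (hK : ∀ i, IsCompact (K i)) {a : ℝ} (ha : 1 < a) {l : ι → ℝ}
    (h : ∀ i, ∀ p ∈ K i, ∃ j, ∃ q ∈ K j, a * (l i - p) ≤ l j - q) :
    ∀ i, ∀ p ∈ K i, l i ≤ p := by
  have key := forall_mem_le_of_exists_mul_sub_le (K := fun i => -K i) (u := fun i => -l i)
    (fun i => (hK i).neg) ha fun i p hp => by
      obtain ⟨j, q, hq, hpq⟩ := h i (-p) hp
      exact ⟨j, -q, by simpa using hq, by linarith⟩
  intro i p hp
  linarith [key i (-p) (by simpa using hp)]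

theorem volume_le_ofReal_mul_of_mapsTo_mul {a : ℝ} (ha : a ≠ 0) {S T : Set ℝ}
    (h : MapsTo (a * ·) S T) : volume S ≤ ENNReal.ofReal |a⁻¹| * volume T :=
  (measure_mono h.subset_preimage).trans_eq (Real.volume_preimage_mul_left ha T)

theorem measure_union_preimage_add_le {G : Type*} [MeasurableSpace G] [AddGroup G]
    [MeasurableAdd G] (μ : Measure G) [μ.IsAddRightInvariant] (s t u : Set G) (g : G) :
    μ (s ∪ (· + g) ⁻¹' (t ∪ u)) ≤ μ s + (μ t + μ u) := by
  grw [measure_union_le, measure_preimage_add_right, measure_union_le]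

/- With `c` in place of `2 / 5`, these inequalities have a nonzero solution exactly when
`c ≥ √2 - 1 ≈ 0.414`; the constant `2 / 5` sits between `φ⁻² ≈ 0.382` and that threshold. -/
theorem eq_zero_of_le_two_fifths_mul {x y z w : ℝ≥0∞} (hx : x ≠ ∞) (hz : z ≠ ∞) (hw : w ≠ ∞)
    (h₁ : x ≤ 2 / 5 * (x + (y + z))) (h₂ : y ≤ 2 / 5 * x) (h₃ : z ≤ 2 / 5 * (w + z))
    (h₄ : w ≤ 2 / 5 * (x + (w + z))) : x = 0 := by
  have hy : y ≠ ∞ := ne_top_of_le_ne_top (by finiteness) h₂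
  lift x to NNReal using hx
  lift y to NNReal using hy
  lift z to NNReal using hz
  lift w to NNReal using hw
  rw [show (2 / 5 : ℝ≥0∞) = ((2 / 5 : NNReal) : ℝ≥0∞) by norm_num] at h₁ h₂ h₃ h₄
  norm_cast at h₁ h₂ h₃ h₄
  rw [← NNReal.coe_le_coe] at h₁ h₂ h₃ h₄
  push_cast at h₁ h₂ h₃ h₄
  have : (x : ℝ) ≤ 0 := by linarith [x.2, y.2, z.2, w.2]
  exact_mod_cast le_antisymm this x.2

theorem goldenRatio_cube : φ ^ 3 = 2 * φ + 1 := by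
  linear_combination (φ + 1) * goldenRatio_sq

theorem one_lt_goldenRatio_sq : 1 < φ ^ 2 := by
  nlinarith [one_lt_goldenRatio]

theorem inv_goldenRatio_sq_le : (φ ^ 2)⁻¹ ≤ 2 / 5 := by
  have h5 : 2 ≤ √5 := by nlinarith [sq_sqrt (show (0 : ℝ) ≤ 5 by norm_num), sqrt_nonneg 5]
  rw [inv_le_comm₀ (by positivity) (by norm_num), goldenRatio_sq, goldenRatio]
  linarith

theorem volume_le_two_fifths_mul_of_mapsTo {S T : Set ℝ} (h : MapsTo (φ ^ 2 * ·) S T) :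
    volume S ≤ 2 / 5 * volume T := by
  grw [volume_le_ofReal_mul_of_mapsTo_mul (by positivity) h, abs_of_pos (by positivity),
    inv_goldenRatio_sq_le]
  simp [ENNReal.ofReal_div_of_pos]

namespace RhoTilde

variable {Wa Wb : Set ℝ}

theorem expand_of_mem_a {τ : ℝ} (hτ : τ ≠ 0)
    (h : Wa ⊆ (fun x : ℝ => (τ ^ 2)⁻¹ * x) '' Wa ∪
              (fun x : ℝ => (τ ^ 2)⁻¹ * (x - τ)) '' Wa ∪
              (fun x : ℝ => (τ ^ 2)⁻¹ * (x + τ ^ 2)) '' Wb) :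
    ∀ p ∈ Wa, τ ^ 2 * p ∈ Wa ∨ τ ^ 2 * p + τ ∈ Wa ∨ τ ^ 2 * p - τ ^ 2 ∈ Wb := by
  intro p hp
  have hτ2 : τ ^ 2 ≠ 0 := pow_ne_zero 2 hτ
  rcases h hp with (⟨x, hx, rfl⟩ | ⟨x, hx, rfl⟩) | ⟨x, hx, rfl⟩
  · exact Or.inl (by rwa [mul_inv_cancel_left₀ hτ2])
  · exact Or.inr (Or.inl (by rwa [mul_inv_cancel_left₀ hτ2, sub_add_cancel]))
  · exact Or.inr (Or.inr (by rwa [mul_inv_cancel_left₀ hτ2, add_sub_cancel_right]))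

theorem expand_of_mem_b {τ : ℝ} (hτ : τ ≠ 0)
    (h : Wb ⊆ (fun x : ℝ => (τ ^ 2)⁻¹ * (x - 2 * τ)) '' Wa ∪
              (fun x : ℝ => (τ ^ 2)⁻¹ * x) '' Wb) :
    ∀ p ∈ Wb, τ ^ 2 * p + 2 * τ ∈ Wa ∨ τ ^ 2 * p ∈ Wb := by
  intro p hp
  have hτ2 : τ ^ 2 ≠ 0 := pow_ne_zero 2 hτ
  rcases h hp with ⟨x, hx, rfl⟩ | ⟨x, hx, rfl⟩
  · exact Or.inl (by rwa [mul_inv_cancel_left₀ hτ2, sub_add_cancel])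
  · exact Or.inr (by rwa [mul_inv_cancel_left₀ hτ2])

theorem windows_subset_Icc (hca : IsCompact Wa) (hcb : IsCompact Wb)
    (hA : ∀ p ∈ Wa, φ ^ 2 * p ∈ Wa ∨ φ ^ 2 * p + φ ∈ Wa ∨ φ ^ 2 * p - φ ^ 2 ∈ Wb)
    (hB : ∀ p ∈ Wb, φ ^ 2 * p + 2 * φ ∈ Wa ∨ φ ^ 2 * p ∈ Wb) :
    Wa ⊆ Icc (-1) 1 ∧ Wb ⊆ Icc (-φ) 0 := by
  have hK : ∀ i, IsCompact (![Wa, Wb] i) := Fin.forall_fin_two.2 ⟨hca, hcb⟩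
  have hφ := one_lt_goldenRatio
  have hφ2 := goldenRatio_sq
  have hφ3 := goldenRatio_cube
  have hup := forall_mem_le_of_exists_mul_sub_le hK one_lt_goldenRatio_sq (u := ![1, 0]) ?_
  have hlow := forall_le_mem_of_exists_mul_sub_le hK one_lt_goldenRatio_sq (l := ![-1, -φ]) ?_
  · exact ⟨fun p hp => ⟨hlow 0 p hp, hup 0 p hp⟩, fun p hp => ⟨hlow 1 p hp, hup 1 p hp⟩⟩
  all_goals
    simp only [Fin.forall_fin_two, Fin.exists_fin_two, Matrix.cons_val_zero, Matrix.cons_val_one]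
    refine ⟨fun p hp => ?_, fun p hp => ?_⟩
    · rcases hA p hp with h | h | h
      · exact Or.inl ⟨_, h, by linarith⟩
      · exact Or.inl ⟨_, h, by linarith⟩
      · exact Or.inr ⟨_, h, by linarith⟩
    · rcases hB p hp with h | h
      · exact Or.inl ⟨_, h, by linarith⟩
      · exact Or.inr ⟨_, h, by linarith⟩

theorem mapsTo_inter
    (hA : ∀ p ∈ Wa, φ ^ 2 * p ∈ Wa ∨ φ ^ 2 * p + φ ∈ Wa ∨ φ ^ 2 * p - φ ^ 2 ∈ Wb)
    (hB : ∀ p ∈ Wb, φ ^ 2 * p + 2 * φ ∈ Wa ∨ φ ^ 2 * p ∈ Wb)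
    (hWa : Wa ⊆ Icc (-1) 1) (hWb : Wb ⊆ Icc (-φ) 0) :
    MapsTo (φ ^ 2 * ·) (Wa ∩ Wb)
      (Wa ∩ Wb ∪ (· + φ) ⁻¹' (Wa ∩ (· + φ) ⁻¹' Wa ∪ Wa ∩ (· - φ) ⁻¹' Wb)) := by
  rintro p ⟨hpa, hpb⟩
  have hφ := one_lt_goldenRatio
  have hφ2 := goldenRatio_sq
  simp only [mem_union, mem_inter_iff, mem_preimage]
  rcases hA p hpa with h | h | h <;> rcases hB p hpb with h' | h'
  · linarith [(hWa h).1, (hWa h').2]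
  · exact Or.inl ⟨h, h'⟩
  · exact Or.inr (Or.inl ⟨h, by rwa [add_assoc, ← two_mul]⟩)
  · exact Or.inr (Or.inr ⟨h, by rwa [add_sub_cancel_right]⟩)
  · linarith [(hWb h).1, (hWa h').2]
  · linarith [(hWb h).1, (hWb h').2]

theorem mapsTo_inter_preimage_add_goldenRatio
    (hA : ∀ p ∈ Wa, φ ^ 2 * p ∈ Wa ∨ φ ^ 2 * p + φ ∈ Wa ∨ φ ^ 2 * p - φ ^ 2 ∈ Wb)
    (hWa : Wa ⊆ Icc (-1) 1) (hWb : Wb ⊆ Icc (-φ) 0) :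
    MapsTo (φ ^ 2 * ·) (Wa ∩ (· + φ) ⁻¹' Wa) ((· + φ) ⁻¹' (Wa ∩ Wb)) := by
  rintro p ⟨hpa, hpb⟩
  have hφ := one_lt_goldenRatio
  have hφ2 := goldenRatio_sq
  have hφ3 := goldenRatio_cube
  simp only [mem_preimage, mem_inter_iff] at hpb ⊢
  rcases hA p hpa with h | h | h <;> rcases hA _ hpb with h' | h' | h'
  · linarith [(hWa h).1, (hWa h').2]
  · linarith [(hWa h).1, (hWa h').2]
  · linarith [(hWa h).1, (hWb h').2]
  · linarith [(hWa h).1, (hWa h').2]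
  · linarith [(hWa h).1, (hWa h').2]
  · exact ⟨h, by convert h' using 1; linear_combination (-φ) * hφ2⟩
  · linarith [(hWb h).1, (hWa h').2]
  · linarith [(hWb h).1, (hWa h').2]
  · linarith [(hWb h).1, (hWb h').2]

theorem mapsTo_inter_preimage_sub_goldenRatio
    (hA : ∀ p ∈ Wa, φ ^ 2 * p ∈ Wa ∨ φ ^ 2 * p + φ ∈ Wa ∨ φ ^ 2 * p - φ ^ 2 ∈ Wb)
    (hB : ∀ p ∈ Wb, φ ^ 2 * p + 2 * φ ∈ Wa ∨ φ ^ 2 * p ∈ Wb)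
    (hWa : Wa ⊆ Icc (-1) 1) (hWb : Wb ⊆ Icc (-φ) 0) :
    MapsTo (φ ^ 2 * ·) (Wa ∩ (· - φ) ⁻¹' Wb)
      ((· - 1) ⁻¹' (Wa ∩ (· + 1) ⁻¹' Wa ∪ Wa ∩ (· - φ) ⁻¹' Wb) ∪ {φ ^ 2}) := by
  rintro p ⟨hpa, hpb⟩
  have hφ := one_lt_goldenRatio
  have hφ2 := goldenRatio_sq
  have hφ3 := goldenRatio_cube
  simp only [mem_preimage, mem_union, mem_inter_iff, mem_singleton_iff] at hpb ⊢
  have hpb' := hB _ hpb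
  rw [show φ ^ 2 * (p - φ) + 2 * φ = φ ^ 2 * p - 1 by linear_combination -hφ3] at hpb'
  rcases hA p hpa with h | h | h <;> rcases hpb' with h' | h'
  · exact Or.inl (Or.inl ⟨h', by rwa [sub_add_cancel]⟩)
  · linarith [(hWa h).2, (hWb h').1]
  · linarith [(hWa h).2, (hWa h').1]
  · linarith [(hWa h).2, (hWb h').1]
  · exact Or.inl (Or.inr ⟨h', by convert h using 1; linear_combination hφ2⟩)
  · exact Or.inr (by linarith [(hWb h).2, (hWb h').1])

theorem mapsTo_inter_preimage_add_one
    (hA : ∀ p ∈ Wa, φ ^ 2 * p ∈ Wa ∨ φ ^ 2 * p + φ ∈ Wa ∨ φ ^ 2 * p - φ ^ 2 ∈ Wb)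
    (hWa : Wa ⊆ Icc (-1) 1) (hWb : Wb ⊆ Icc (-φ) 0) :
    MapsTo (φ ^ 2 * ·) (Wa ∩ (· + 1) ⁻¹' Wa)
      (Wa ∩ Wb ∪ (· + φ) ⁻¹' (Wa ∩ (· + 1) ⁻¹' Wa ∪ Wa ∩ (· - φ) ⁻¹' Wb)) := by
  rintro p ⟨hpa, hpb⟩
  have hφ := one_lt_goldenRatio
  have hφ2 := goldenRatio_sq
  simp only [mem_preimage, mem_union, mem_inter_iff] at hpb ⊢
  rcases hA p hpa with h | h | h <;> rcases hA _ hpb with h' | h' | h'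
  · linarith [(hWa h).1, (hWa h').2]
  · linarith [(hWa h).1, (hWa h').2]
  · exact Or.inl ⟨h, by convert h' using 1; ring⟩
  · exact Or.inr (Or.inl ⟨h, by convert h' using 1; linear_combination -hφ2⟩)
  · linarith [(hWa h).1, (hWa h').2]
  · exact Or.inr (Or.inr ⟨h, by convert h' using 1; ring⟩)
  · linarith [(hWb h).1, (hWa h').2]
  · linarith [(hWb h).1, (hWa h').2]
  · linarith [(hWb h).1, (hWb h').2]

end RhoTilde

theorem rho_tilde_windows_disjoint_interiors_general (τ : ℝ) (hτ : τ = (1 + Real.sqrt 5) / 2)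
    (Wa Wb : Set ℝ)
    (hca : IsCompact Wa) (hcb : IsCompact Wb)
    (h1 : Wa = (fun x : ℝ => (τ ^ 2)⁻¹ * x) '' Wa ∪
               (fun x : ℝ => (τ ^ 2)⁻¹ * (x - τ)) '' Wa ∪
               (fun x : ℝ => (τ ^ 2)⁻¹ * (x + τ ^ 2)) '' Wb)
    (h2 : Wb = (fun x : ℝ => (τ ^ 2)⁻¹ * (x - 2 * τ)) '' Wa ∪
               (fun x : ℝ => (τ ^ 2)⁻¹ * x) '' Wb) :
    interior Wa ∩ interior Wb = ∅ := by
  subst hτ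
  have hA := RhoTilde.expand_of_mem_a goldenRatio_ne_zero h1.subset
  have hB := RhoTilde.expand_of_mem_b goldenRatio_ne_zero h2.subset
  obtain ⟨hWa, hWb⟩ := RhoTilde.windows_subset_Icc hca hcb hA hB
  have hfin (S : Set ℝ) : volume (Wa ∩ S) ≠ ∞ :=
    (measure_inter_lt_top_of_left_ne_top hca.measure_ne_top).ne
  have hX : volume (Wa ∩ Wb) = 0 := by
    refine eq_zero_of_le_two_fifths_mul (y := volume (Wa ∩ (· + φ) ⁻¹' Wa))
      (hfin Wb) (hfin ((· - φ) ⁻¹' Wb)) (hfin ((· + 1) ⁻¹' Wa)) ?_ ?_ ?_ ?_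
    · grw [volume_le_two_fifths_mul_of_mapsTo (RhoTilde.mapsTo_inter hA hB hWa hWb),
        measure_union_preimage_add_le]
    · grw [volume_le_two_fifths_mul_of_mapsTo
        (RhoTilde.mapsTo_inter_preimage_add_goldenRatio hA hWa hWb), measure_preimage_add_right]
    · grw [volume_le_two_fifths_mul_of_mapsTo
        (RhoTilde.mapsTo_inter_preimage_sub_goldenRatio hA hB hWa hWb), measure_union_le,
        measure_singleton, add_zero, ← measure_union_le]
      simp only [sub_eq_add_neg, measure_preimage_add_right, le_refl]
    · grw [volume_le_two_fifths_mul_of_mapsTo (RhoTilde.mapsTo_inter_preimage_add_one hA hWa hWb),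
        measure_union_preimage_add_le]
  rw [← interior_inter]
  exact Measure.interior_eq_empty_of_null hX

/-- The windows of the substitution ρ̃ = (a ↦ aab, b ↦ ba) have disjoint
interiors. -/
theorem rho_tilde_windows_disjoint_interiors (τ : ℝ) (hτ : τ = (1 + Real.sqrt 5) / 2)
    (Wa Wb : Set ℝ) (hWa : Wa.Nonempty) (hWb : Wb.Nonempty)
    (hca : IsCompact Wa) (hcb : IsCompact Wb)
    (h1 : Wa = (fun x : ℝ => (τ ^ 2)⁻¹ * x) '' Wa ∪
               (fun x : ℝ => (τ ^ 2)⁻¹ * (x - τ)) '' Wa ∪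
               (fun x : ℝ => (τ ^ 2)⁻¹ * (x + τ ^ 2)) '' Wb)
    (h2 : Wb = (fun x : ℝ => (τ ^ 2)⁻¹ * (x - 2 * τ)) '' Wa ∪
               (fun x : ℝ => (τ ^ 2)⁻¹ * x) '' Wb) :
    interior Wa ∩ interior Wb = ∅ :=
  rho_tilde_windows_disjoint_interiors_general τ hτ Wa Wb hca hcb h1 h2
end

section
/- Let τ = (1+√5)/2 and let W_a, W_b be nonempty compact subsets of ℝ satisfying W_a = τ⁻²·W_a ∪ τ⁻²·(W_a − τ) ∪ τ⁻²·(W_b + τ²) and W_b = τ⁻²·(W_a − 2τ) ∪ τ⁻²·W_b. Then W_a and W_b are perfect and topologically regular sets: each is equal to the closure of its interior, and neither has any isolated points. -/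
/-!
Write `ψ = -τ⁻¹`; the maps of the set equations become `x ↦ ψ²x + a` with `a ∈ {0, ψ, 1, 2ψ}`.
Everything rests on one contraction principle: if finitely many bounded sets `S i` are covered
by images of the `S j` under `r`-Lipschitz maps (`r < 1`) which also send the compact nonempty
`T j` into `T i`, then `S i ⊆ T i`, because every point of `S i` is within `rⁿ C` of `T i`.

Applied to four intervals and four unions of translates of the windows, it gives
`[ψ, 0] ⊆ W_a ∪ W_b`. The map `x ↦ ψ²(ψ²x + ψ) = ψ²(ψ²x + 1) + ψ` sends both windows into `W_a`,
so `W_a` has interior, and then so has `W_b ⊇ ψ²W_a + 2ψ`. Applied to the windows and the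
closures of their interiors, which inherit the set inclusions because the maps are open, it
gives regularity; a regular set in `ℝ` has no isolated points.
-/

open Set Metric Filter Topology Real goldenRatio
open scoped NNReal

section Contraction

variable {X ι : Type*} [MetricSpace X]

theorem exists_dist_le_pow_mul_of_contracting_cover [Finite ι] {S T : ι → Set X} {r : ℝ≥0}
    (hS : ∀ i, Bornology.IsBounded (S i)) (hT : ∀ i, Bornology.IsBounded (T i))
    (hTne : ∀ i, (T i).Nonempty)
    (hcover : ∀ i, ∀ x ∈ S i, ∃ j, ∃ f : X → X,
      LipschitzWith r f ∧ MapsTo f (T j) (T i) ∧ x ∈ f '' S j) :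
    ∃ C, ∀ n : ℕ, ∀ i, ∀ x ∈ S i, ∃ t ∈ T i, dist x t ≤ r ^ n * C := by
  have hbdd : Bornology.IsBounded (⋃ i, S i ∪ T i) :=
    Bornology.isBounded_iUnion.2 fun i => (hS i).union (hT i)
  refine ⟨diam (⋃ i, S i ∪ T i), fun n => ?_⟩
  induction n with
  | zero =>
    intro i x hx
    obtain ⟨t, ht⟩ := hTne i
    refine ⟨t, ht, ?_⟩
    rw [pow_zero, one_mul]
    exact dist_le_diam_of_mem hbdd (mem_iUnion.2 ⟨i, .inl hx⟩) (mem_iUnion.2 ⟨i, .inr ht⟩)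
  | succ n ih =>
    intro i x hx
    obtain ⟨j, f, hf, hfT, y, hy, rfl⟩ := hcover i x hx
    obtain ⟨t, ht, hyt⟩ := ih j y hy
    refine ⟨f t, hfT ht, ?_⟩
    calc dist (f y) (f t) ≤ r * dist y t := hf.dist_le_mul y t
      _ ≤ r * (r ^ n * diam (⋃ i, S i ∪ T i)) := by gcongr
      _ = r ^ (n + 1) * diam (⋃ i, S i ∪ T i) := by rw [pow_succ]; ring

theorem subset_of_contracting_cover [Finite ι] {S T : ι → Set X} {r : ℝ≥0} (hr : r < 1)
    (hS : ∀ i, Bornology.IsBounded (S i)) (hT : ∀ i, IsCompact (T i))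
    (hTne : ∀ i, (T i).Nonempty)
    (hcover : ∀ i, ∀ x ∈ S i, ∃ j, ∃ f : X → X,
      LipschitzWith r f ∧ MapsTo f (T j) (T i) ∧ x ∈ f '' S j) (i : ι) :
    S i ⊆ T i := by
  obtain ⟨C, hC⟩ :=
    exists_dist_le_pow_mul_of_contracting_cover hS (fun i => (hT i).isBounded) hTne hcover
  have hlim : Tendsto (fun n : ℕ => (r : ℝ) ^ n * C) atTop (𝓝 0) := by
    simpa using (tendsto_pow_atTop_nhds_zero_of_lt_one r.coe_nonneg hr).mul_const C
  intro x hx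
  rw [← (hT i).isClosed.closure_eq, Metric.mem_closure_iff]
  intro ε hε
  obtain ⟨n, hn⟩ := (hlim.eventually (gt_mem_nhds hε)).exists
  obtain ⟨t, ht, hxt⟩ := hC n i x hx
  exact ⟨t, ht, hxt.trans_lt hn⟩

theorem closure_interior_eq_of_contracting_cover [Finite ι] {W : ι → Set X} {r : ℝ≥0}
    (hr : r < 1) (hW : ∀ i, IsCompact (W i)) (hint : ∀ i, (interior (W i)).Nonempty)
    (hcover : ∀ i, ∀ x ∈ W i, ∃ j, ∃ f : X → X,
      LipschitzWith r f ∧ IsOpenMap f ∧ MapsTo f (W j) (W i) ∧ x ∈ f '' W j) (i : ι) :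
    closure (interior (W i)) = W i := by
  refine (closure_minimal interior_subset (hW i).isClosed).antisymm ?_
  refine subset_of_contracting_cover hr (fun i => (hW i).isBounded)
    (fun i => (hW i).closure_of_subset interior_subset) (fun i => (hint i).closure) ?_ i
  intro i x hx
  obtain ⟨j, f, hf, hf', hfW, hx⟩ := hcover i x hx
  exact ⟨j, f, hf, (hf'.mapsTo_interior hfW).closure hf.continuous, hx⟩

end Contraction

theorem perfect_of_closure_interior_eq {X : Type*} [TopologicalSpace X] [PerfectSpace X]
    {C : Set X} (h : closure (interior C) = C) : Perfect C :=
  h ▸ isOpen_interior.preperfect.perfect_closure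

theorem goldenConj_pow_three : ψ ^ 3 = 2 * ψ + 1 := by
  linear_combination (ψ + 1) * goldenConj_sq

noncomputable def goldenAffine (a x : ℝ) : ℝ := ψ ^ 2 * x + a

theorem lipschitzWith_goldenAffine (a : ℝ) : LipschitzWith ‖ψ ^ 2‖₊ (goldenAffine a) := by
  have := (isometry_add_right a).lipschitz.comp (lipschitzWith_smul (ψ ^ 2))
  rwa [one_mul] at this

theorem nnnorm_goldenConj_sq_lt_one : ‖ψ ^ 2‖₊ < 1 := by
  rw [← NNReal.coe_lt_coe, coe_nnnorm, norm_pow, Real.norm_eq_abs, sq_abs, NNReal.coe_one]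
  nlinarith [goldenConj_neg, neg_one_lt_goldenConj]

theorem isOpenMap_goldenAffine (a : ℝ) : IsOpenMap (goldenAffine a) :=
  ((Homeomorph.mulLeft₀ _ (pow_ne_zero 2 goldenConj_ne_zero)).trans
    (Homeomorph.addRight a)).isOpenMap

theorem mem_goldenAffine_image_Icc {a c d x : ℝ} (h₀ : ψ ^ 2 * c + a ≤ x)
    (h₁ : x ≤ ψ ^ 2 * d + a) : x ∈ goldenAffine a '' Icc c d := by
  change x ∈ (fun y => ψ ^ 2 * y + a) '' Icc c d
  rw [image_affine_Icc' (sq_pos_of_neg goldenConj_neg)]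
  exact ⟨h₀, h₁⟩

theorem mem_of_mapsTo_goldenAffine {S T : Set ℝ} {e w x : ℝ} (hf : MapsTo (goldenAffine e) S T)
    (hw : w ∈ S) (hx : ψ ^ 2 * w + e = x) : x ∈ T :=
  hx ▸ hf hw

theorem mem_preimage_of_mapsTo_goldenAffine {S T : Set ℝ} {e w c x : ℝ}
    (hf : MapsTo (goldenAffine e) S T) (hw : w ∈ S) (hx : ψ ^ 2 * w + e = x - c) :
    x ∈ (· - c) ⁻¹' T :=
  mem_of_mapsTo_goldenAffine (x := x - c) hf hw hx

/-- The set equations of the windows, after `τ⁻² = ψ²`, `τ⁻² τ = -ψ` and `τ⁻² τ² = 1`. -/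
structure IsWindowPair (A B : Set ℝ) : Prop where
  eq_left : A = goldenAffine 0 '' A ∪ goldenAffine ψ '' A ∪ goldenAffine 1 '' B
  eq_right : B = goldenAffine (2 * ψ) '' A ∪ goldenAffine 0 '' B

theorem inv_goldenRatio_sq : (φ ^ 2)⁻¹ = ψ ^ 2 := by
  rw [← inv_pow, inv_goldenRatio, neg_sq]

theorem isWindowPair_of_eq {A B : Set ℝ}
    (h1 : A = (fun x : ℝ => (φ ^ 2)⁻¹ * x) '' A ∪ (fun x : ℝ => (φ ^ 2)⁻¹ * (x - φ)) '' A ∪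
      (fun x : ℝ => (φ ^ 2)⁻¹ * (x + φ ^ 2)) '' B)
    (h2 : B = (fun x : ℝ => (φ ^ 2)⁻¹ * (x - 2 * φ)) '' A ∪ (fun x : ℝ => (φ ^ 2)⁻¹ * x) '' B) :
    IsWindowPair A B := by
  have hψφ := goldenConj_mul_goldenRatio
  simp only [inv_goldenRatio_sq] at h1 h2
  have e₀ : (fun x : ℝ => ψ ^ 2 * x) = goldenAffine 0 := funext fun x => (add_zero _).symm
  have e₁ : (fun x : ℝ => ψ ^ 2 * (x - φ)) = goldenAffine ψ :=
    funext fun x => by unfold goldenAffine; linear_combination (-ψ) * hψφ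
  have e₂ : (fun x : ℝ => ψ ^ 2 * (x + φ ^ 2)) = goldenAffine 1 :=
    funext fun x => by unfold goldenAffine; linear_combination (ψ * φ - 1) * hψφ
  have e₃ : (fun x : ℝ => ψ ^ 2 * (x - 2 * φ)) = goldenAffine (2 * ψ) :=
    funext fun x => by unfold goldenAffine; linear_combination (-2 * ψ) * hψφ
  rw [e₀, e₁, e₂] at h1
  rw [e₀, e₃] at h2
  exact ⟨h1, h2⟩

namespace IsWindowPair

variable {A B : Set ℝ}

theorem mapsTo_aa (h : IsWindowPair A B) : MapsTo (goldenAffine 0) A A :=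
  mapsTo_iff_image_subset.2 <|
    subset_union_left.trans <| subset_union_left.trans h.eq_left.superset

theorem mapsTo_aa' (h : IsWindowPair A B) : MapsTo (goldenAffine ψ) A A :=
  mapsTo_iff_image_subset.2 <|
    subset_union_right.trans <| subset_union_left.trans h.eq_left.superset

theorem mapsTo_ba (h : IsWindowPair A B) : MapsTo (goldenAffine 1) B A :=
  mapsTo_iff_image_subset.2 <| subset_union_right.trans h.eq_left.superset

theorem mapsTo_ab (h : IsWindowPair A B) : MapsTo (goldenAffine (2 * ψ)) A B :=
  mapsTo_iff_image_subset.2 <| subset_union_left.trans h.eq_right.superset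

theorem mapsTo_bb (h : IsWindowPair A B) : MapsTo (goldenAffine 0) B B :=
  mapsTo_iff_image_subset.2 <| subset_union_right.trans h.eq_right.superset

end IsWindowPair

def coverSet (A B : Set ℝ) : Fin 4 → Set ℝ :=
  ![A ∪ B, A ∪ (· - (1 - ψ)) ⁻¹' B, (· - ψ) ⁻¹' A ∪ (· - 1) ⁻¹' A ∪ (· - 1) ⁻¹' B,
    A ∪ (· - 1) ⁻¹' A]

def coverInterval : Fin 4 → Set ℝ :=
  ![Icc ψ 0, Icc 0 (-ψ), Icc 0 (ψ + 1), Icc 0 1]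

theorem isCompact_coverSet {A B : Set ℝ} (hA : IsCompact A) (hB : IsCompact B) (i : Fin 4) :
    IsCompact (coverSet A B i) := by
  have hsub : ∀ (c : ℝ) {S : Set ℝ}, IsCompact S → IsCompact ((· - c) ⁻¹' S) :=
    fun c _ hS => (Homeomorph.subRight c).isCompact_preimage.2 hS
  fin_cases i
  · exact hA.union hB
  · exact hA.union (hsub _ hB)
  · exact ((hsub _ hA).union (hsub _ hA)).union (hsub _ hB)
  · exact hA.union (hsub _ hA)

theorem coverSet_nonempty {A : Set ℝ} (B : Set ℝ) (hA : A.Nonempty) (i : Fin 4) :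
    (coverSet A B i).Nonempty := by
  obtain ⟨a, ha⟩ := hA
  fin_cases i
  · exact ⟨a, .inl ha⟩
  · exact ⟨a, .inl ha⟩
  · exact ⟨a + 1, .inl (.inr (by simpa using ha))⟩
  · exact ⟨a, .inl ha⟩

namespace IsWindowPair

variable {A B : Set ℝ}

theorem coverSet_step_zero (h : IsWindowPair A B) {x : ℝ} (hx : x ∈ Icc ψ 0) :
    ∃ j a, MapsTo (goldenAffine a) (coverSet A B j) (coverSet A B 0) ∧
      x ∈ goldenAffine a '' coverInterval j := by
  have hψ₂ := goldenConj_sq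
  have hψ₃ := goldenConj_pow_three
  rcases le_total x (-ψ - 1) with hx₁ | hx₁
  · refine ⟨1, ψ, ?_, mem_goldenAffine_image_Icc (by linarith [hx.1]) (by linarith)⟩
    rintro y (hy | hy)
    · exact .inl (h.mapsTo_aa' hy)
    · exact .inr (mem_of_mapsTo_goldenAffine h.mapsTo_bb hy (by unfold goldenAffine; linarith))
  rcases le_total x (2 * ψ + 1) with hx₂ | hx₂
  · refine ⟨2, -ψ - 1, ?_, mem_goldenAffine_image_Icc (by linarith) (by linarith)⟩
    rintro y ((hy | hy) | hy)
    · exact .inl (mem_of_mapsTo_goldenAffine h.mapsTo_aa' hy (by unfold goldenAffine; linarith))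
    · exact .inl (mem_of_mapsTo_goldenAffine h.mapsTo_aa hy (by unfold goldenAffine; linarith))
    · exact .inr (mem_of_mapsTo_goldenAffine h.mapsTo_bb hy (by unfold goldenAffine; linarith))
  · exact ⟨0, 0, h.mapsTo_aa.union_union h.mapsTo_bb,
      mem_goldenAffine_image_Icc (by linarith) (by linarith [hx.2])⟩

theorem coverSet_step_one (h : IsWindowPair A B) {x : ℝ} (hx : x ∈ Icc 0 (-ψ)) :
    ∃ j a, MapsTo (goldenAffine a) (coverSet A B j) (coverSet A B 1) ∧
      x ∈ goldenAffine a '' coverInterval j := by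
  have hψ₂ := goldenConj_sq
  have hψ₃ := goldenConj_pow_three
  rcases le_total x (ψ + 1) with hx₁ | hx₁
  · refine ⟨3, 0, ?_, mem_goldenAffine_image_Icc (by linarith [hx.1]) (by linarith)⟩
    rintro y (hy | hy)
    · exact .inl (h.mapsTo_aa hy)
    · exact .inr (mem_preimage_of_mapsTo_goldenAffine h.mapsTo_ab hy
        (by unfold goldenAffine; linarith))
  · refine ⟨1, ψ + 1, ?_, mem_goldenAffine_image_Icc (by linarith) (by linarith [hx.2])⟩
    rintro y (hy | hy)
    · exact .inr (mem_preimage_of_mapsTo_goldenAffine h.mapsTo_ab hy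
        (by unfold goldenAffine; linarith))
    · exact .inl (mem_of_mapsTo_goldenAffine h.mapsTo_ba hy (by unfold goldenAffine; linarith))

theorem coverSet_step_two (h : IsWindowPair A B) {x : ℝ} (hx : x ∈ Icc 0 (ψ + 1)) :
    ∃ j a, MapsTo (goldenAffine a) (coverSet A B j) (coverSet A B 2) ∧
      x ∈ goldenAffine a '' coverInterval j := by
  have hψ₂ := goldenConj_sq
  have hψ₃ := goldenConj_pow_three
  rcases le_total x (3 * ψ + 2) with hx₁ | hx₁
  · refine ⟨2, 0, ?_, mem_goldenAffine_image_Icc (by linarith [hx.1]) (by linarith)⟩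
    rintro y ((hy | hy) | hy)
    · exact .inr (mem_preimage_of_mapsTo_goldenAffine h.mapsTo_ab hy
        (by unfold goldenAffine; linarith))
    · exact .inl (.inr (mem_preimage_of_mapsTo_goldenAffine h.mapsTo_aa' hy
        (by unfold goldenAffine; linarith)))
    · exact .inl (.inl (mem_preimage_of_mapsTo_goldenAffine h.mapsTo_ba hy
        (by unfold goldenAffine; linarith)))
  · refine ⟨0, ψ + 1, ?_, mem_goldenAffine_image_Icc (by linarith) (by linarith [hx.2])⟩
    rintro y (hy | hy)
    · exact .inl (.inr (mem_preimage_of_mapsTo_goldenAffine h.mapsTo_aa' hy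
        (by unfold goldenAffine; linarith)))
    · exact .inl (.inl (mem_preimage_of_mapsTo_goldenAffine h.mapsTo_ba hy
        (by unfold goldenAffine; linarith)))

theorem coverSet_step_three (h : IsWindowPair A B) {x : ℝ} (hx : x ∈ Icc 0 1) :
    ∃ j a, MapsTo (goldenAffine a) (coverSet A B j) (coverSet A B 3) ∧
      x ∈ goldenAffine a '' coverInterval j := by
  have hψ₂ := goldenConj_sq
  have hψ₃ := goldenConj_pow_three
  rcases le_total x (ψ + 1) with hx₁ | hx₁
  · refine ⟨3, 0, ?_, mem_goldenAffine_image_Icc (by linarith [hx.1]) (by linarith)⟩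
    rintro y (hy | hy)
    · exact .inl (h.mapsTo_aa hy)
    · exact .inr (mem_preimage_of_mapsTo_goldenAffine h.mapsTo_aa' hy
        (by unfold goldenAffine; linarith))
  rcases le_total x (-ψ) with hx₂ | hx₂
  · refine ⟨1, ψ + 1, ?_, mem_goldenAffine_image_Icc (by linarith) (by linarith)⟩
    rintro y (hy | hy)
    · exact .inr (mem_preimage_of_mapsTo_goldenAffine h.mapsTo_aa' hy
        (by unfold goldenAffine; linarith))
    · exact .inl (mem_of_mapsTo_goldenAffine h.mapsTo_ba hy (by unfold goldenAffine; linarith))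
  rcases le_total x (2 * ψ + 2) with hx₃ | hx₃
  · refine ⟨2, -ψ, ?_, mem_goldenAffine_image_Icc (by linarith) (by linarith)⟩
    rintro y ((hy | hy) | hy)
    · exact .inr (mem_preimage_of_mapsTo_goldenAffine h.mapsTo_aa' hy
        (by unfold goldenAffine; linarith))
    · exact .inr (mem_preimage_of_mapsTo_goldenAffine h.mapsTo_aa hy
        (by unfold goldenAffine; linarith))
    · exact .inl (mem_of_mapsTo_goldenAffine h.mapsTo_ba hy (by unfold goldenAffine; linarith))
  · refine ⟨0, 1, ?_, mem_goldenAffine_image_Icc (by linarith) (by linarith [hx.2])⟩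
    rintro y (hy | hy)
    · exact .inr (mem_preimage_of_mapsTo_goldenAffine h.mapsTo_aa hy
        (by unfold goldenAffine; linarith))
    · exact .inl (h.mapsTo_ba hy)

theorem coverSet_step (h : IsWindowPair A B) (i : Fin 4) {x : ℝ} (hx : x ∈ coverInterval i) :
    ∃ j a, MapsTo (goldenAffine a) (coverSet A B j) (coverSet A B i) ∧
      x ∈ goldenAffine a '' coverInterval j := by
  fin_cases i
  · exact h.coverSet_step_zero hx
  · exact h.coverSet_step_one hx
  · exact h.coverSet_step_two hx
  · exact h.coverSet_step_three hx

theorem Icc_subset_union (h : IsWindowPair A B) (hA : IsCompact A) (hB : IsCompact B)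
    (hAne : A.Nonempty) : Icc ψ 0 ⊆ A ∪ B := by
  refine subset_of_contracting_cover (S := coverInterval) nnnorm_goldenConj_sq_lt_one
    (fun i => ?_) (isCompact_coverSet hA hB) (coverSet_nonempty B hAne) (fun i x hx => ?_) 0
  · fin_cases i <;> exact isBounded_Icc _ _
  · obtain ⟨j, a, hmaps, hxj⟩ := h.coverSet_step i hx
    exact ⟨j, goldenAffine a, lipschitzWith_goldenAffine a, hmaps, hxj⟩

theorem interior_nonempty_left (h : IsWindowPair A B) (hcover : Icc ψ 0 ⊆ A ∪ B) :
    (interior A).Nonempty := by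
  have hcomm : goldenAffine 0 ∘ goldenAffine ψ = goldenAffine ψ ∘ goldenAffine 1 := by
    funext x
    simp only [Function.comp, goldenAffine]
    linear_combination ψ * goldenConj_sq
  have hmaps : MapsTo (goldenAffine 0 ∘ goldenAffine ψ) (A ∪ B) A :=
    (h.mapsTo_aa.comp h.mapsTo_aa').union (hcomm ▸ h.mapsTo_aa'.comp h.mapsTo_ba)
  have hopen := (isOpenMap_goldenAffine 0).comp (isOpenMap_goldenAffine ψ)
  have hint : (interior (A ∪ B)).Nonempty :=
    (nonempty_Ioo.2 goldenConj_neg).mono (interior_Icc.symm.subset.trans (interior_mono hcover))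
  exact (hint.image _).mono (hopen.mapsTo_interior hmaps).image_subset

theorem interior_nonempty_right (h : IsWindowPair A B) (hA : (interior A).Nonempty) :
    (interior B).Nonempty :=
  (hA.image _).mono ((isOpenMap_goldenAffine _).mapsTo_interior h.mapsTo_ab).image_subset

theorem exists_mem_image (h : IsWindowPair A B) (i : Fin 2) {x : ℝ} (hx : x ∈ ![A, B] i) :
    ∃ j a, MapsTo (goldenAffine a) (![A, B] j) (![A, B] i) ∧ x ∈ goldenAffine a '' ![A, B] j := by
  fin_cases i
  · change x ∈ A at hx
    rw [h.eq_left] at hx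
    rcases hx with (hx | hx) | hx
    · exact ⟨0, 0, h.mapsTo_aa, hx⟩
    · exact ⟨0, ψ, h.mapsTo_aa', hx⟩
    · exact ⟨1, 1, h.mapsTo_ba, hx⟩
  · change x ∈ B at hx
    rw [h.eq_right] at hx
    rcases hx with hx | hx
    · exact ⟨0, 2 * ψ, h.mapsTo_ab, hx⟩
    · exact ⟨1, 0, h.mapsTo_bb, hx⟩

theorem closure_interior_eq (h : IsWindowPair A B) (hA : IsCompact A) (hB : IsCompact B)
    (hAne : A.Nonempty) : closure (interior A) = A ∧ closure (interior B) = B := by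
  have hintA := h.interior_nonempty_left (h.Icc_subset_union hA hB hAne)
  have hreg := closure_interior_eq_of_contracting_cover (W := ![A, B])
    nnnorm_goldenConj_sq_lt_one (fun i => by fin_cases i <;> assumption)
    (fun i => by fin_cases i; exacts [hintA, h.interior_nonempty_right hintA])
    (fun i x hx => ?_)
  · exact ⟨hreg 0, hreg 1⟩
  · obtain ⟨j, a, hmaps, hxj⟩ := h.exists_mem_image i hx
    exact ⟨j, goldenAffine a, lipschitzWith_goldenAffine a, isOpenMap_goldenAffine a, hmaps, hxj⟩

end IsWindowPair

theorem rho_tilde_windows_perfect_regular_general (τ : ℝ) (hτ : τ = (1 + Real.sqrt 5) / 2)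
    (Wa Wb : Set ℝ) (hWa : Wa.Nonempty)
    (hca : IsCompact Wa) (hcb : IsCompact Wb)
    (h1 : Wa = (fun x : ℝ => (τ ^ 2)⁻¹ * x) '' Wa ∪
               (fun x : ℝ => (τ ^ 2)⁻¹ * (x - τ)) '' Wa ∪
               (fun x : ℝ => (τ ^ 2)⁻¹ * (x + τ ^ 2)) '' Wb)
    (h2 : Wb = (fun x : ℝ => (τ ^ 2)⁻¹ * (x - 2 * τ)) '' Wa ∪
               (fun x : ℝ => (τ ^ 2)⁻¹ * x) '' Wb) :
    closure (interior Wa) = Wa ∧ closure (interior Wb) = Wb ∧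
    Perfect Wa ∧ Perfect Wb := by
  obtain rfl : τ = φ := hτ
  obtain ⟨hregA, hregB⟩ := (isWindowPair_of_eq h1 h2).closure_interior_eq hca hcb hWa
  exact ⟨hregA, hregB, perfect_of_closure_interior_eq hregA, perfect_of_closure_interior_eq hregB⟩

/-- The windows of the substitution ρ̃ = (a ↦ aab, b ↦ ba) are perfect
(closed with no isolated points) and topologically regular (equal to the
closure of their interior). -/
theorem rho_tilde_windows_perfect_regular (τ : ℝ) (hτ : τ = (1 + Real.sqrt 5) / 2)
    (Wa Wb : Set ℝ) (hWa : Wa.Nonempty) (hWb : Wb.Nonempty)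
    (hca : IsCompact Wa) (hcb : IsCompact Wb)
    (h1 : Wa = (fun x : ℝ => (τ ^ 2)⁻¹ * x) '' Wa ∪
               (fun x : ℝ => (τ ^ 2)⁻¹ * (x - τ)) '' Wa ∪
               (fun x : ℝ => (τ ^ 2)⁻¹ * (x + τ ^ 2)) '' Wb)
    (h2 : Wb = (fun x : ℝ => (τ ^ 2)⁻¹ * (x - 2 * τ)) '' Wa ∪
               (fun x : ℝ => (τ ^ 2)⁻¹ * x) '' Wb) :
    closure (interior Wa) = Wa ∧ closure (interior Wb) = Wb ∧
    Perfect Wa ∧ Perfect Wb :=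
  rho_tilde_windows_perfect_regular_general τ hτ Wa Wb hWa hca hcb h1 h2
end

section
/- Let τ = (1+√5)/2 and let W_a, W_b be nonempty compact subsets of ℝ satisfying W_a = τ⁻²·W_a ∪ τ⁻²·(W_a − τ) ∪ τ⁻²·(W_b + τ²) and W_b = τ⁻²·(W_a − 2τ) ∪ τ⁻²·W_b. Then the unions on the right-hand sides are measure disjoint: the Lebesgue measures of τ⁻²·W_a ∩ τ⁻²·(W_a − τ), of τ⁻²·W_a ∩ τ⁻²·(W_b + τ²), of τ⁻²·(W_a − τ) ∩ τ⁻²·(W_b + τ²), and of τ⁻²·(W_a − 2τ) ∩ τ⁻²·W_b are all zero. -/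
/-!
Writing `a = |W_a|`, `b = |W_b|` and `c = τ⁻²`, the set equations and subadditivity of Lebesgue
measure give `a + ε ≤ c (2a + b)` and `b + ε' ≤ c (a + b)`, where `ε`, `ε'` are the measures of
the overlaps. The matrix `c • !![2, 1; 1, 1]` (the rescaled substitution matrix of ρ̃) has the
positive left eigenvector `(τ, 1)` with eigenvalue `1`, so pairing the inequalities with it gives
`τ a + b + (τ ε + ε') ≤ τ a + b`; since `a`, `b` are finite, the overlaps are null.
-/

open MeasureTheory Set Pointwise Module Matrix
open scoped ENNReal goldenRatio

theorem MeasureTheory.Measure.addHaar_image_smul_add {E : Type*} [NormedAddCommGroup E]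
    [NormedSpace ℝ E] [MeasurableSpace E] [BorelSpace E] [FiniteDimensional ℝ E] (μ : Measure E)
    [μ.IsAddHaarMeasure] (c : ℝ) (t : E) (s : Set E) :
    μ ((fun x => c • (x + t)) '' s) = ENNReal.ofReal |c ^ finrank ℝ E| * μ s := by
  rw [← image_image (c • ·) (· + t), image_smul, Measure.addHaar_smul, image_add_right,
    measure_preimage_add_right]

section Overlap

variable {α : Type*} [MeasurableSpace α] (μ : Measure α) {s t u v : Set α}

theorem measure_add_measure_inter_eq_of_eq_union (h : s = t ∪ u) (hu : MeasurableSet u) :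
    μ s + μ (t ∩ u) = μ t + μ u :=
  h ▸ measure_union_add_inter t hu

theorem measure_add_measure_inter_le_of_eq_union (h : s = t ∪ u ∪ v) (hu : MeasurableSet u) :
    μ s + μ (t ∩ u) ≤ μ t + μ u + μ v := by
  subst h
  calc μ (t ∪ u ∪ v) + μ (t ∩ u) ≤ μ (t ∪ u) + μ v + μ (t ∩ u) := by
        gcongr; exact measure_union_le _ _
    _ = μ t + μ u + μ v := by rw [add_right_comm, measure_union_add_inter t hu]

end Overlap

theorem ENNReal.eq_zero_of_add_le_mulVec {ι : Type*} [Fintype ι] {M : Matrix ι ι ℝ≥0∞}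
    {p a e : ι → ℝ≥0∞} (hp₀ : ∀ i, p i ≠ 0) (hp : ∀ i, p i ≠ ∞) (ha : ∀ i, a i ≠ ∞)
    (hpM : p ᵥ* M = p) (h : a + e ≤ M *ᵥ a) : e = 0 := by
  have hpa : p ⬝ᵥ a ≠ ∞ := ENNReal.sum_ne_top.2 fun i _ => ENNReal.mul_ne_top (hp i) (ha i)
  have hle : p ⬝ᵥ a + p ⬝ᵥ e ≤ p ⬝ᵥ a + 0 := calc
    p ⬝ᵥ a + p ⬝ᵥ e = p ⬝ᵥ (a + e) := (dotProduct_add p a e).symm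
    _ ≤ p ⬝ᵥ (M *ᵥ a) := Finset.sum_le_sum fun i _ => mul_le_mul_right (h i) _
    _ = p ⬝ᵥ a + 0 := by rw [dotProduct_mulVec, hpM, add_zero]
  have hpe : p ⬝ᵥ e = 0 := nonpos_iff_eq_zero.1 (ENNReal.le_of_add_le_add_left hpa hle)
  funext i
  exact (mul_eq_zero.1 (Finset.sum_eq_zero_iff.1 hpe i (Finset.mem_univ i))).resolve_left (hp₀ i)

/-- Entry `(i, j)` counts the letters `i` in `ρ̃(j)`, for `ρ̃ = (a ↦ aab, b ↦ ba)`. -/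
def rhoTildeSubstMatrix : Matrix (Fin 2) (Fin 2) ℝ≥0∞ :=
  !![2, 1; 1, 1]

theorem goldenRatio_vecMul_rhoTildeSubstMatrix :
    ![ENNReal.ofReal φ, 1] ᵥ* (ENNReal.ofReal (φ ^ 2)⁻¹ • rhoTildeSubstMatrix) =
      ![ENNReal.ofReal φ, 1] := by
  have hφ := Real.goldenRatio_pos
  have hsq := Real.goldenRatio_sq
  -- otherwise `ring` unfolds `φ` into `(1 + √5) / 2`
  generalize φ = x at *
  ext i; fin_cases i <;> simp [rhoTildeSubstMatrix, vecMul, dotProduct]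
  · rw [← ENNReal.ofReal_ofNat 2, ← ENNReal.ofReal_mul (by positivity), ← ENNReal.ofReal_mul hφ.le,
      ← ENNReal.ofReal_add (by positivity) (by positivity)]
    congr 1
    field_simp
    linear_combination (-(x + 1)) * hsq
  · rw [← ENNReal.ofReal_mul hφ.le, ← ENNReal.ofReal_add (by positivity) (by positivity),
      ← ENNReal.ofReal_one]
    congr 1
    field_simp
    linear_combination -hsq

theorem eq_zero_of_add_le_rhoTilde {a b ε ε' : ℝ≥0∞} (ha : a ≠ ∞) (hb : b ≠ ∞)
    (h₁ : a + ε ≤ ENNReal.ofReal (φ ^ 2)⁻¹ * (2 * a + b))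
    (h₂ : b + ε' ≤ ENNReal.ofReal (φ ^ 2)⁻¹ * (a + b)) : ε = 0 ∧ ε' = 0 := by
  have h := ENNReal.eq_zero_of_add_le_mulVec (a := ![a, b]) (e := ![ε, ε'])
    (Fin.forall_fin_two.2 ⟨(ENNReal.ofReal_pos.2 Real.goldenRatio_pos).ne', one_ne_zero⟩)
    (by simp [Fin.forall_fin_two])
    (by simp [Fin.forall_fin_two, ha, hb]) goldenRatio_vecMul_rhoTildeSubstMatrix
    (Fin.forall_fin_two.2 ⟨?_, ?_⟩)
  · exact ⟨congrFun h 0, congrFun h 1⟩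
  · simpa [rhoTildeSubstMatrix, mulVec, dotProduct, mul_add, mul_assoc, -Real.goldenRatio_sq]
      using h₁
  · simpa [rhoTildeSubstMatrix, mulVec, dotProduct, mul_add, -Real.goldenRatio_sq] using h₂

theorem rho_tilde_IFS_measure_disjoint_general (τ : ℝ) (hτ : τ = (1 + Real.sqrt 5) / 2)
    (Wa Wb : Set ℝ)
    (hca : IsCompact Wa) (hcb : IsCompact Wb)
    (h1 : Wa = (fun x : ℝ => (τ ^ 2)⁻¹ * x) '' Wa ∪
               (fun x : ℝ => (τ ^ 2)⁻¹ * (x - τ)) '' Wa ∪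
               (fun x : ℝ => (τ ^ 2)⁻¹ * (x + τ ^ 2)) '' Wb)
    (h2 : Wb = (fun x : ℝ => (τ ^ 2)⁻¹ * (x - 2 * τ)) '' Wa ∪
               (fun x : ℝ => (τ ^ 2)⁻¹ * x) '' Wb) :
    volume ((fun x : ℝ => (τ ^ 2)⁻¹ * x) '' Wa ∩
            (fun x : ℝ => (τ ^ 2)⁻¹ * (x - τ)) '' Wa) = 0 ∧
    volume ((fun x : ℝ => (τ ^ 2)⁻¹ * x) '' Wa ∩
            (fun x : ℝ => (τ ^ 2)⁻¹ * (x + τ ^ 2)) '' Wb) = 0 ∧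
    volume ((fun x : ℝ => (τ ^ 2)⁻¹ * (x - τ)) '' Wa ∩
            (fun x : ℝ => (τ ^ 2)⁻¹ * (x + τ ^ 2)) '' Wb) = 0 ∧
    volume ((fun x : ℝ => (τ ^ 2)⁻¹ * (x - 2 * τ)) '' Wa ∩
            (fun x : ℝ => (τ ^ 2)⁻¹ * x) '' Wb) = 0 := by
  obtain rfl : τ = φ := hτ
  have vol (t : ℝ) (s : Set ℝ) :
      volume ((fun x => (φ ^ 2)⁻¹ * (x + t)) '' s) = ENNReal.ofReal (φ ^ 2)⁻¹ * volume s := by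
    have := Measure.addHaar_image_smul_add volume (φ ^ 2)⁻¹ t s
    rwa [finrank_self, pow_one, abs_of_pos (by positivity)] at this
  have vA := vol 0 Wa
  have vB := vol (-φ) Wa
  have vC := vol (φ ^ 2) Wb
  have vD := vol (-(2 * φ)) Wa
  have vE := vol 0 Wb
  simp only [add_zero, ← sub_eq_add_neg] at vA vB vD vE
  have hAB := measure_add_measure_inter_le_of_eq_union volume h1
    (hca.image (by fun_prop)).measurableSet
  have hAC := measure_add_measure_inter_le_of_eq_union volume (h1.trans (union_right_comm ..))
    (hcb.image (by fun_prop)).measurableSet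
  have hBC := measure_add_measure_inter_le_of_eq_union volume
    (h1.trans ((union_assoc ..).trans (union_comm ..))) (hcb.image (by fun_prop)).measurableSet
  have hDE := (measure_add_measure_inter_eq_of_eq_union volume h2
    (hcb.image (by fun_prop)).measurableSet).le
  rw [vA, vB, vC] at hAB hAC hBC
  rw [vD, vE, ← mul_add] at hDE
  have null_of_le {ε : ℝ≥0∞}
      (h : volume Wa + ε ≤ ENNReal.ofReal (φ ^ 2)⁻¹ * (2 * volume Wa + volume Wb)) :=
    eq_zero_of_add_le_rhoTilde hca.measure_lt_top.ne hcb.measure_lt_top.ne h hDE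
  exact ⟨(null_of_le (hAB.trans_eq (by ring))).1, (null_of_le (hAC.trans_eq (by ring))).1,
    (null_of_le (hBC.trans_eq (by ring))).1, (null_of_le (hAB.trans_eq (by ring))).2⟩

/-- The unions in the internal-space IFS of ρ̃ = (a ↦ aab, b ↦ ba) are
measure disjoint: all pairwise intersections of the pieces on the
right-hand sides have Lebesgue measure zero. -/
theorem rho_tilde_IFS_measure_disjoint (τ : ℝ) (hτ : τ = (1 + Real.sqrt 5) / 2)
    (Wa Wb : Set ℝ) (hWa : Wa.Nonempty) (hWb : Wb.Nonempty)
    (hca : IsCompact Wa) (hcb : IsCompact Wb)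
    (h1 : Wa = (fun x : ℝ => (τ ^ 2)⁻¹ * x) '' Wa ∪
               (fun x : ℝ => (τ ^ 2)⁻¹ * (x - τ)) '' Wa ∪
               (fun x : ℝ => (τ ^ 2)⁻¹ * (x + τ ^ 2)) '' Wb)
    (h2 : Wb = (fun x : ℝ => (τ ^ 2)⁻¹ * (x - 2 * τ)) '' Wa ∪
               (fun x : ℝ => (τ ^ 2)⁻¹ * x) '' Wb) :
    volume ((fun x : ℝ => (τ ^ 2)⁻¹ * x) '' Wa ∩
            (fun x : ℝ => (τ ^ 2)⁻¹ * (x - τ)) '' Wa) = 0 ∧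
    volume ((fun x : ℝ => (τ ^ 2)⁻¹ * x) '' Wa ∩
            (fun x : ℝ => (τ ^ 2)⁻¹ * (x + τ ^ 2)) '' Wb) = 0 ∧
    volume ((fun x : ℝ => (τ ^ 2)⁻¹ * (x - τ)) '' Wa ∩
            (fun x : ℝ => (τ ^ 2)⁻¹ * (x + τ ^ 2)) '' Wb) = 0 ∧
    volume ((fun x : ℝ => (τ ^ 2)⁻¹ * (x - 2 * τ)) '' Wa ∩
            (fun x : ℝ => (τ ^ 2)⁻¹ * x) '' Wb) = 0 :=
  rho_tilde_IFS_measure_disjoint_general τ hτ Wa Wb hca hcb h1 h2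
end

section
/- Let τ = (1+√5)/2, let W_a, W_b be nonempty compact subsets of ℝ satisfying W_a = τ⁻²·W_a ∪ τ⁻²·(W_a − τ) ∪ τ⁻²·(W_b + τ²) and W_b = τ⁻²·(W_a − 2τ) ∪ τ⁻²·W_b, and set W = W_a ∪ W_b. Then W has infinitely many connected components. -/
set_option maxHeartbeats 1000000 in
/-- The window $W = W_a ∪ W_b$ of ρ̃ = (a ↦ aab, b ↦ ba) has infinitely many
connected components. -/
theorem rho_tilde_window_infinitely_many_components (τ : ℝ) (hτ : τ = (1 + Real.sqrt 5) / 2)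
    (Wa Wb : Set ℝ) (hWa : Wa.Nonempty) (hWb : Wb.Nonempty)
    (hca : IsCompact Wa) (hcb : IsCompact Wb)
    (h1 : Wa = (fun x : ℝ => (τ ^ 2)⁻¹ * x) '' Wa ∪
               (fun x : ℝ => (τ ^ 2)⁻¹ * (x - τ)) '' Wa ∪
               (fun x : ℝ => (τ ^ 2)⁻¹ * (x + τ ^ 2)) '' Wb)
    (h2 : Wb = (fun x : ℝ => (τ ^ 2)⁻¹ * (x - 2 * τ)) '' Wa ∪
               (fun x : ℝ => (τ ^ 2)⁻¹ * x) '' Wb) :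
    {C : Set ℝ | ∃ x ∈ Wa ∪ Wb, C = connectedComponentIn (Wa ∪ Wb) x}.Infinite := by
  -- basic facts about τ
  have h5 : Real.sqrt 5 ^ 2 = 5 := Real.sq_sqrt (by norm_num)
  have h5nn : (0:ℝ) ≤ Real.sqrt 5 := Real.sqrt_nonneg 5
  have h5lb : (2.23:ℝ) < Real.sqrt 5 := by nlinarith
  have h5ub : Real.sqrt 5 < 2.24 := by nlinarith
  have hτ2 : τ ^ 2 = τ + 1 := by rw [hτ]; nlinarith
  have hτlb : (1.61:ℝ) < τ := by rw [hτ]; linarith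
  have hτub : τ < 1.62 := by rw [hτ]; linarith
  have hinv : (τ ^ 2)⁻¹ = 2 - τ := by
    have h : (τ ^ 2) * (2 - τ) = 1 := by nlinarith
    exact inv_eq_of_mul_eq_one_right h
  rw [hinv] at h1 h2
  have hs0 : (0:ℝ) < 2 - τ := by linarith
  have hs1 : (2:ℝ) - τ < 1 := by linarith
  -- suprema and infima
  set A := sSup Wa with hA
  set B := sSup Wb with hB
  set a := sInf Wa with ha
  set b := sInf Wb with hb
  have bA : ∀ x ∈ Wa, x ≤ A := fun x hx => le_csSup hca.bddAbove hx
  have bB : ∀ x ∈ Wb, x ≤ B := fun x hx => le_csSup hcb.bddAbove hx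
  have ba : ∀ x ∈ Wa, a ≤ x := fun x hx => csInf_le hca.bddBelow hx
  have bb : ∀ x ∈ Wb, b ≤ x := fun x hx => csInf_le hcb.bddBelow hx
  -- upper bound recursions
  have hA1 : A ≤ max ((2 - τ) * A) ((2 - τ) * B + 1) := by
    apply csSup_le hWa
    intro x hx
    rw [h1] at hx
    simp only [Set.mem_union, Set.mem_image] at hx
    rcases hx with (⟨u, hu, rfl⟩ | ⟨u, hu, rfl⟩) | ⟨v, hv, rfl⟩
    · exact le_max_of_le_left (by nlinarith [bA u hu])
    · exact le_max_of_le_left (by nlinarith [bA u hu])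
    · exact le_max_of_le_right (by nlinarith [bB v hv])
  have hB1 : B ≤ max ((2 - τ) * (A - 2 * τ)) ((2 - τ) * B) := by
    apply csSup_le hWb
    intro x hx
    rw [h2] at hx
    simp only [Set.mem_union, Set.mem_image] at hx
    rcases hx with ⟨u, hu, rfl⟩ | ⟨v, hv, rfl⟩
    · exact le_max_of_le_left (by nlinarith [bA u hu])
    · exact le_max_of_le_right (by nlinarith [bB v hv])
  -- lower bound recursions
  have ha1 : min ((2 - τ) * (a - τ)) (min ((2 - τ) * a) ((2 - τ) * b + 1)) ≤ a := by
    apply le_csInf hWa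
    intro x hx
    rw [h1] at hx
    simp only [Set.mem_union, Set.mem_image] at hx
    rcases hx with (⟨u, hu, rfl⟩ | ⟨u, hu, rfl⟩) | ⟨v, hv, rfl⟩
    · exact le_trans (min_le_right _ _) (le_trans (min_le_left _ _) (by nlinarith [ba u hu]))
    · exact le_trans (min_le_left _ _) (by nlinarith [ba u hu])
    · exact le_trans (min_le_right _ _) (le_trans (min_le_right _ _) (by nlinarith [bb v hv]))
  have hb1 : min ((2 - τ) * (a - 2 * τ)) ((2 - τ) * b) ≤ b := by
    apply le_csInf hWb
    intro x hx
    rw [h2] at hx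
    simp only [Set.mem_union, Set.mem_image] at hx
    rcases hx with ⟨u, hu, rfl⟩ | ⟨v, hv, rfl⟩
    · exact le_trans (min_le_left _ _) (by nlinarith [ba u hu])
    · exact le_trans (min_le_right _ _) (by nlinarith [bb v hv])
  -- derive the explicit bounds
  have hBle : B ≤ 0 := by
    rcases le_max_iff.mp hA1 with hA' | hA' <;>
      rcases le_max_iff.mp hB1 with hB' | hB' <;> nlinarith
  have hAle : A ≤ 1 := by
    rcases le_max_iff.mp hA1 with hA' | hA' <;> nlinarith
  have hage : (-1:ℝ) ≤ a := by
    rcases min_le_iff.mp ha1 with ha' | ha'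
    · nlinarith
    rcases min_le_iff.mp ha' with ha'' | ha''
    · nlinarith
    · rcases min_le_iff.mp hb1 with hb' | hb'
      · nlinarith [mul_le_mul_of_nonneg_left hb' (le_of_lt hs0)]
      · nlinarith
  have hbge : -τ ≤ b := by
    rcases min_le_iff.mp hb1 with hb' | hb'
    · rcases min_le_iff.mp ha1 with ha' | ha'
      · nlinarith
      rcases min_le_iff.mp ha' with ha'' | ha''
      · nlinarith
      · nlinarith
    · nlinarith
  -- pointwise bounds
  have uaWa : ∀ x ∈ Wa, x ≤ 1 := fun x hx => (bA x hx).trans hAle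
  have laWa : ∀ x ∈ Wa, -1 ≤ x := fun x hx => hage.trans (ba x hx)
  have ubWb : ∀ x ∈ Wb, x ≤ 0 := fun x hx => (bB x hx).trans hBle
  have lbWb : ∀ x ∈ Wb, -τ ≤ x := fun x hx => hbge.trans (bb x hx)
  -- 0 ∈ Wb
  obtain ⟨y, hy⟩ := hWb
  have hiter : ∀ n : ℕ, (2 - τ) ^ n * y ∈ Wb := by
    intro n
    induction n with
    | zero => simpa using hy
    | succ n ih =>
        rw [h2]
        refine Set.mem_union_right _ ⟨(2 - τ) ^ n * y, ih, ?_⟩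
        ring
  have h0b : (0:ℝ) ∈ Wb := by
    have hlim : Filter.Tendsto (fun n : ℕ => (2 - τ) ^ n * y) Filter.atTop (nhds 0) := by
      have := (tendsto_pow_atTop_nhds_zero_of_lt_one (by linarith : (0:ℝ) ≤ 2 - τ)
        (by linarith : (2:ℝ) - τ < 1)).mul_const y
      simpa using this
    exact hcb.isClosed.mem_of_tendsto hlim (Filter.Eventually.of_forall hiter)
  -- (2-τ)^n ∈ Wa
  have h1a : (1:ℝ) ∈ Wa := by
    rw [h1]
    refine Set.mem_union_right _ ⟨0, h0b, ?_⟩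
    simp only
    nlinarith
  have hpow : ∀ n : ℕ, (2 - τ) ^ n ∈ Wa := by
    intro n
    induction n with
    | zero => simpa using h1a
    | succ n ih =>
        rw [h1]
        refine Set.mem_union_left _ (Set.mem_union_left _ ⟨(2 - τ) ^ n, ih, ?_⟩)
        ring
  -- the gap of Wb
  have gapB : ∀ x ∈ Wb, x ≤ 4 - 3 * τ ∨ 1 - τ ≤ x := by
    intro x hx
    rw [h2] at hx
    simp only [Set.mem_union, Set.mem_image] at hx
    rcases hx with ⟨u, hu, rfl⟩ | ⟨v, hv, rfl⟩
    · exact Or.inl (by nlinarith [uaWa u hu])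
    · exact Or.inr (by nlinarith [lbWb v hv])
  -- the gaps of W at all scales
  have gapW : ∀ n : ℕ, ∀ x ∈ Wa ∪ Wb,
      x ≤ (2 - τ) ^ n * (12 - 7 * τ) ∨ (2 - τ) ^ n * (4 - 2 * τ) ≤ x := by
    clear hpow h1a h0b hiter hy hA1 hB1 ha1 hb1 hBle hAle hage hbge bA bB ba bb
    clear hA hB ha hb A B a b h5 h5nn h5lb h5ub hτ hinv laWa
    intro n
    induction n with
    | zero =>
        intro x hx
        rcases hx with hx | hx
        · rw [h1] at hx
          simp only [Set.mem_union, Set.mem_image] at hx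
          rcases hx with (⟨u, hu, rfl⟩ | ⟨u, hu, rfl⟩) | ⟨v, hv, rfl⟩
          · exact Or.inl (by nlinarith [uaWa u hu])
          · exact Or.inl (by nlinarith [uaWa u hu])
          · rcases gapB v hv with h | h
            · exact Or.inl (by nlinarith)
            · exact Or.inr (by nlinarith)
        · exact Or.inl (by nlinarith [ubWb x hx])
    | succ n ih =>
        have hcpos : (0:ℝ) < (2 - τ) ^ n := pow_pos hs0 n
        have hcle : (2 - τ) ^ n ≤ 1 := pow_le_one₀ (by linarith) (by linarith)
        have hps : (2 - τ) ^ (n + 1) = (2 - τ) ^ n * (2 - τ) := pow_succ _ _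
        have hprod : (0:ℝ) < (2 - τ) ^ n * (2 - τ) * (12 - 7 * τ) :=
          mul_pos (mul_pos hcpos hs0) (by linarith)
        intro x hx
        rcases hx with hx | hx
        · rw [h1] at hx
          simp only [Set.mem_union, Set.mem_image] at hx
          rcases hx with (⟨u, hu, rfl⟩ | ⟨u, hu, rfl⟩) | ⟨v, hv, rfl⟩
          · rcases ih u (Or.inl hu) with h | h
            · left
              rw [hps]
              nlinarith [mul_le_mul_of_nonneg_left h hs0.le]
            · right
              rw [hps]
              nlinarith [mul_le_mul_of_nonneg_left h hs0.le]
          · left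
            rw [hps]
            nlinarith [uaWa u hu, hprod]
          · right
            rw [hps]
            have h1' : (2 - τ) ^ n * (4 - 2 * τ) ≤ 1 * (4 - 2 * τ) :=
              mul_le_mul_of_nonneg_right hcle (by linarith)
            have h2' : (2 - τ) ^ n * (4 - 2 * τ) ≤ 1 := by linarith
            nlinarith [lbWb v hv, mul_le_mul_of_nonneg_left h2' hs0.le]
        · left
          rw [hps]
          nlinarith [ubWb x hx, hprod]
  -- distinct components
  set W := Wa ∪ Wb with hW
  have hinj : Function.Injective (fun n : ℕ => connectedComponentIn W ((2 - τ) ^ n)) := by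
    have key : ∀ n m : ℕ, n < m →
        connectedComponentIn W ((2 - τ) ^ n) ≠ connectedComponentIn W ((2 - τ) ^ m) := by
      intro n m hnm hEq
      clear h1a h0b hiter hy hA1 hB1 ha1 hb1 hBle hAle hage hbge bA bB ba bb
      clear hA hB ha hb A B a b h5 h5nn h5lb h5ub hτ hinv laWa uaWa ubWb lbWb gapB h1 h2
      have hcpos : (0:ℝ) < (2 - τ) ^ n := pow_pos hs0 n
      set z := (2 - τ) ^ n * ((16 - 9 * τ) / 2) with hz
      have hxm : ((2 - τ) ^ m) ∈ connectedComponentIn W ((2 - τ) ^ n) := by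
        rw [hEq]
        exact mem_connectedComponentIn (Set.mem_union_left _ (hpow m))
      have hxn : ((2 - τ) ^ n) ∈ connectedComponentIn W ((2 - τ) ^ n) :=
        mem_connectedComponentIn (Set.mem_union_left _ (hpow n))
      have hpre : IsPreconnected (connectedComponentIn W ((2 - τ) ^ n)) :=
        (isPreconnected_connectedComponentIn)
      have hord : (connectedComponentIn W ((2 - τ) ^ n)).OrdConnected :=
        hpre.ordConnected
      have hmle : (2 - τ) ^ m ≤ (2 - τ) ^ (n + 1) :=
        pow_le_pow_of_le_one (by linarith) (by linarith) hnm
      have hz1 : (2 - τ) ^ m ≤ z := by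
        rw [hz]
        have he : (2 - τ) ^ (n + 1) = (2 - τ) ^ n * (2 - τ) := pow_succ _ _
        nlinarith [mul_le_mul_of_nonneg_left
          (show (2 - τ:ℝ) ≤ (16 - 9 * τ) / 2 by linarith) hcpos.le]
      have hz2 : z ≤ (2 - τ) ^ n := by
        rw [hz]
        nlinarith [mul_le_mul_of_nonneg_left
          (show ((16 - 9 * τ) / 2 : ℝ) ≤ 1 by linarith) hcpos.le]
      have hzmem : z ∈ connectedComponentIn W ((2 - τ) ^ n) :=
        hord.out hxm hxn ⟨hz1, hz2⟩
      have hzW : z ∈ W := connectedComponentIn_subset _ _ hzmem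
      rcases gapW n z hzW with h | h
      · rw [hz] at h
        nlinarith [mul_lt_mul_of_pos_left
          (show (12 - 7 * τ:ℝ) < (16 - 9 * τ) / 2 by linarith) hcpos]
      · rw [hz] at h
        nlinarith [mul_lt_mul_of_pos_left
          (show ((16 - 9 * τ) / 2:ℝ) < 4 - 2 * τ by linarith) hcpos]
    intro n m hnm
    by_contra hne
    rcases lt_or_gt_of_ne hne with h | h
    · exact key n m h hnm
    · exact key m n h hnm.symm
  exact Set.infinite_of_injective_forall_mem hinj
    (fun n => ⟨(2 - τ) ^ n, Set.mem_union_left _ (hpow n), rfl⟩)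
end

section
/- Let τ = (1+√5)/2, let W_a, W_b be nonempty compact subsets of ℝ satisfying W_a = τ⁻²·W_a ∪ τ⁻²·(W_a − τ) ∪ τ⁻²·(W_b + τ²) and W_b = τ⁻²·(W_a − 2τ) ∪ τ⁻²·W_b, and set W = W_a ∪ W_b. Then the topological boundary ∂W is a Cantor set: it is nonempty, compact, has no isolated points, and is totally disconnected (all its connected components are singletons). -/
set_option maxHeartbeats 1000000
open Set

/-- Context: all facts about the window pair that the combinatorial lemmas need. -/
structure RhoCtx (τ : ℝ) (Wa Wb : Set ℝ) : Prop where
  hq : τ^2 = τ + 1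
  ht1 : 1.618 < τ
  ht2 : τ < 1.6181
  hca : IsCompact Wa
  hcb : IsCompact Wb
  decompA : ∀ y ∈ Wa, (∃ z ∈ Wa, y = (2-τ)*z) ∨ (∃ z ∈ Wa, y = (2-τ)*z + (1-τ)) ∨
      (∃ z ∈ Wb, y = (2-τ)*z + 1)
  decompB : ∀ y ∈ Wb, (∃ z ∈ Wa, y = (2-τ)*z + (2-2*τ)) ∨ (∃ z ∈ Wb, y = (2-τ)*z)
  memA1 : ∀ z ∈ Wa, (2-τ)*z ∈ Wa
  memA2 : ∀ z ∈ Wa, (2-τ)*z + (1-τ) ∈ Wa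
  memA3 : ∀ z ∈ Wb, (2-τ)*z + 1 ∈ Wa
  memB1 : ∀ z ∈ Wa, (2-τ)*z + (2-2*τ) ∈ Wb
  memB2 : ∀ z ∈ Wb, (2-τ)*z ∈ Wb
  boundA : ∀ y ∈ Wa, -1 ≤ y ∧ y ≤ 1
  boundB : ∀ y ∈ Wb, -τ ≤ y ∧ y ≤ 0
  oneA : (1:ℝ) ∈ Wa
  negoneA : (-1:ℝ) ∈ Wa
  zeroB : (0:ℝ) ∈ Wb
  negtB : -τ ∈ Wb

namespace RhoCtx

variable {τ : ℝ} {Wa Wb : Set ℝ} (C : RhoCtx τ Wa Wb)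
include C

lemma hc0 : 0 < 2 - τ := by linarith [C.ht2]
lemma hc1 : 2 - τ < 1 := by linarith [C.ht1]
lemma powpos (m : ℕ) : 0 < (2-τ)^m := pow_pos C.hc0 m
lemma powle1 (m : ℕ) : (2-τ)^m ≤ 1 := pow_le_one₀ C.hc0.le C.hc1.le

lemma pow_succ_le (m : ℕ) : (2-τ)^(m+1) ≤ 2-τ := by
  calc (2-τ)^(m+1) ≤ (2-τ)^1 := pow_le_pow_of_le_one C.hc0.le C.hc1.le (by omega)
  _ = 2-τ := pow_one _

/-- L1: the fundamental gaps of `Wb` accumulating at its max `0`. -/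
lemma gapB0 : ∀ m : ℕ, ∀ z ∈ Wb, z ∉ Ioo ((2-τ)^m*(4-3*τ)) ((2-τ)^m*(1-τ)) := by
  intro m
  induction m with
  | zero =>
    intro z hz hmem
    simp only [pow_zero, one_mul, mem_Ioo] at hmem
    rcases C.decompB z hz with ⟨w, hw, rfl⟩ | ⟨w, hw, rfl⟩
    · have := (C.boundA w hw).2
      nlinarith [hmem.1, mul_nonneg (sub_nonneg.mpr this) C.hc0.le, C.ht1]
    · have := (C.boundB w hw).1
      have h2 := C.hq
      nlinarith [hmem.2, C.hc0]
  | succ k ih =>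
    intro z hz hmem
    simp only [mem_Ioo] at hmem
    have hlow : (4-3*τ) ≤ (2-τ)^(k+1)*(4-3*τ) := by
      have := mul_le_mul_of_nonpos_right (C.powle1 (k+1)) (by nlinarith [C.ht1] : (4-3*τ) ≤ 0)
      linarith
    rcases C.decompB z hz with ⟨w, hw, rfl⟩ | ⟨w, hw, rfl⟩
    · have := (C.boundA w hw).2
      nlinarith [hmem.1, mul_nonneg (sub_nonneg.mpr this) C.hc0.le, C.ht1]
    · refine ih w hw ?_
      have hpow : (2-τ)^(k+1) = (2-τ)*(2-τ)^k := by ring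
      constructor
      · nlinarith [hmem.1, C.hc0]
      · nlinarith [hmem.2, C.hc0]

/-- L2: gaps of `Wa` accumulating at its max `1`. -/
lemma gapAtop : ∀ m : ℕ, ∀ z ∈ Wa,
    z ∉ Ioo (1+(2-τ)^(m+1)*(4-3*τ)) (1+(2-τ)^(m+1)*(1-τ)) := by
  intro m z hz hmem
  simp only [mem_Ioo] at hmem
  have hq := C.hq; have h1 := C.ht1; have h2 := C.ht2
  have hlow : (2-τ)*(4-3*τ) ≤ (2-τ)^(m+1)*(4-3*τ) :=
    mul_le_mul_of_nonpos_right (C.pow_succ_le m) (by nlinarith [C.ht1])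
  -- so z > 1 + (2-τ)(4-3τ) = 12 - 7τ (using τ² = τ+1)
  have hzlow : 12 - 7*τ < z := by nlinarith [hmem.1]
  rcases C.decompA z hz with ⟨w, hw, rfl⟩ | ⟨w, hw, rfl⟩ | ⟨w, hw, rfl⟩
  · have := (C.boundA w hw).2; nlinarith
  · have := (C.boundA w hw).2; nlinarith
  · refine C.gapB0 m w hw ?_
    have hpow : (2-τ)^(m+1) = (2-τ)*(2-τ)^m := by ring
    constructor
    · nlinarith [hmem.1, C.hc0]
    · nlinarith [hmem.2, C.hc0]

/-- L3: an explicit gap of `Wa` in the middle. -/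
lemma gapAmid : ∀ z ∈ Wa, z ∉ Ioo (31-19*τ) (10-6*τ) := by
  intro z hz hmem
  simp only [mem_Ioo] at hmem
  have hq := C.hq; have h1 := C.ht1; have h2 := C.ht2
  rcases C.decompA z hz with ⟨w, hw, rfl⟩ | ⟨w, hw, rfl⟩ | ⟨w, hw, rfl⟩
  · refine C.gapAtop 0 w hw ?_
    have : (2-τ)^(0+1) = (2-τ) := by ring
    rw [this]
    constructor
    · nlinarith [hmem.1, C.hc0]
    · nlinarith [hmem.2, C.hc0]
  · have := (C.boundA w hw).2; nlinarith [hmem.1]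
  · have := (C.boundB w hw).1; nlinarith [hmem.2]

/-- L4: an explicit gap of `Wa` near its min. -/
lemma gapAneg : ∀ z ∈ Wa, z ∉ Ioo (82-51*τ) (27-17*τ) := by
  intro z hz hmem
  simp only [mem_Ioo] at hmem
  have hq := C.hq; have h1 := C.ht1; have h2 := C.ht2
  rcases C.decompA z hz with ⟨w, hw, rfl⟩ | ⟨w, hw, rfl⟩ | ⟨w, hw, rfl⟩
  · have := (C.boundA w hw).1; nlinarith [hmem.2]
  · refine C.gapAmid w hw ?_
    constructor
    · nlinarith [hmem.1, C.hc0]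
    · nlinarith [hmem.2, C.hc0]
  · have := (C.boundB w hw).1; nlinarith [hmem.2]

/-- L5: gaps of `Wa` accumulating at its min `-1`. -/
lemma gapAbot : ∀ m : ℕ, ∀ z ∈ Wa,
    z ∉ Ioo (-1+(2-τ)^m*(83-51*τ)) (-1+(2-τ)^m*(28-17*τ)) := by
  intro m
  induction m with
  | zero =>
    intro z hz hmem
    simp only [pow_zero, one_mul] at hmem
    refine C.gapAneg z hz ?_
    rw [mem_Ioo] at hmem ⊢; constructor <;> linarith [hmem.1, hmem.2]
  | succ k ih =>
    intro z hz hmem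
    simp only [mem_Ioo] at hmem
    have hq := C.hq; have h1 := C.ht1; have h2 := C.ht2
    have hup : (2-τ)^(k+1)*(28-17*τ) ≤ (2-τ)*(28-17*τ) :=
      mul_le_mul_of_nonneg_right (C.pow_succ_le k) (by nlinarith [C.ht2])
    have hzup : z < 72 - 45*τ := by nlinarith [hmem.2]
    have hzlow : -1 < z := by nlinarith [hmem.1, C.powpos (k+1)]
    rcases C.decompA z hz with ⟨w, hw, rfl⟩ | ⟨w, hw, rfl⟩ | ⟨w, hw, rfl⟩
    · have := (C.boundA w hw).1; nlinarith
    · refine ih w hw ?_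
      have hpow : (2-τ)^(k+1) = (2-τ)*(2-τ)^k := by ring
      rw [mem_Ioo]
      constructor
      · nlinarith [hmem.1, C.hc0]
      · nlinarith [hmem.2, C.hc0]
    · have := (C.boundB w hw).1; nlinarith

/-- L6: gaps of `Wb` accumulating at its min `-τ`. -/
lemma gapBbot : ∀ m : ℕ, ∀ z ∈ Wb,
    z ∉ Ioo (-τ+(2-τ)^(m+1)*(83-51*τ)) (-τ+(2-τ)^(m+1)*(28-17*τ)) := by
  intro m z hz hmem
  simp only [mem_Ioo] at hmem
  have hq := C.hq; have h1 := C.ht1; have h2 := C.ht2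
  have hup : (2-τ)^(m+1)*(28-17*τ) ≤ (2-τ)*(28-17*τ) :=
    mul_le_mul_of_nonneg_right (C.pow_succ_le m) (by nlinarith)
  have hzup : z < 73 - 46*τ := by nlinarith [hmem.2]
  rcases C.decompB z hz with ⟨w, hw, rfl⟩ | ⟨w, hw, rfl⟩
  · refine C.gapAbot m w hw ?_
    have hpow : (2-τ)^(m+1) = (2-τ)*(2-τ)^m := by ring
    rw [mem_Ioo]
    constructor
    · nlinarith [hmem.1, C.hc0]
    · nlinarith [hmem.2, C.hc0]
  · have := (C.boundB w hw).1
    nlinarith [mul_le_mul_of_nonneg_left this C.hc0.le]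

end RhoCtx

open RhoCtx

/-- Generic branch lemma, right-gap version: if the affine branch `z ↦ c z + d` of a
piece `T` avoids the gap `(y, y+ε)` to the right of `y`, and (in case `y` is in the
branch image) the pulled-back point has the scaled missing intervals, then the branch
image misses the intervals `(y + c^m p, y + c^m q)` for all large `m`. -/
lemma branch_right (c d y ε p q : ℝ) (hc0 : 0 < c) (hc1 : c < 1)
    (hp : -2 ≤ p) (hq0 : q ≤ 0)
    (T : Set ℝ) (hT : IsCompact T)
    (havoid : ∀ z ∈ T, c*z + d ∉ Set.Ioo y (y+ε))
    (hpull : ∀ y' ∈ T, c*y' + d = y →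
      ∃ N, ∀ m ≥ N, ∀ z ∈ T, z ∉ Set.Ioo (y' + c^m*p) (y' + c^m*q)) :
    ∃ N, ∀ m ≥ N, ∀ z ∈ T, c*z + d ∉ Set.Ioo (y + c^m*p) (y + c^m*q) := by
  by_cases hy : ∃ y' ∈ T, c*y' + d = y
  · obtain ⟨y', hy'T, hy'⟩ := hy
    obtain ⟨N, hN⟩ := hpull y' hy'T hy'
    refine ⟨N+1, ?_⟩
    intro m hm z hz hmem
    obtain ⟨k, rfl⟩ : ∃ k, m = k + 1 := ⟨m-1, by omega⟩
    rw [Set.mem_Ioo] at hmem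
    refine hN k (by omega) z hz ?_
    rw [Set.mem_Ioo]
    have hpow : c^(k+1) = c*c^k := by ring
    constructor
    · have h := hmem.1
      rw [← hy'] at h
      nlinarith [hc0]
    · have h := hmem.2
      rw [← hy'] at h
      nlinarith [hc0]
  · set S : Set ℝ := T ∩ {z | c*z + d ≤ y} with hS
    by_cases hSne : S.Nonempty
    · have hScpt : IsCompact S := hT.inter_right (isClosed_le (by continuity) continuous_const)
      have huS : sSup S ∈ S := hScpt.sSup_mem hSne
      set u' := sSup S with hu'
      have hu'T : u' ∈ T := huS.1
      have hule : c*u' + d ≤ y := huS.2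
      have hune : c*u' + d ≠ y := fun h => hy ⟨u', hu'T, h⟩
      have hult : c*u' + d < y := lt_of_le_of_ne hule hune
      obtain ⟨N, hN⟩ := exists_pow_lt_of_lt_one
        (show (0:ℝ) < (y - (c*u' + d))/2 by linarith) hc1
      refine ⟨N, ?_⟩
      intro m hm z hz hmem
      rw [Set.mem_Ioo] at hmem
      have hcm : c^m ≤ c^N := pow_le_pow_of_le_one hc0.le hc1.le hm
      have hcmpos : 0 < c^m := pow_pos hc0 m
      have hwle : c*z + d ≤ y := by nlinarith [hmem.2]
      have hzS : z ∈ S := ⟨hz, hwle⟩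
      have hzle : z ≤ u' := le_csSup (hScpt.bddAbove) hzS
      have : c*z + d ≤ c*u' + d := by nlinarith
      -- but c*z + d > y + c^m p ≥ y - 2 c^m > y - (y - (c u'+d)) = c u' + d
      nlinarith [hmem.1, mul_le_mul_of_nonneg_right hcm (le_of_lt hcmpos), hN]
    · refine ⟨0, ?_⟩
      intro m hm z hz hmem
      rw [Set.mem_Ioo] at hmem
      have hzgt : ¬ (c*z + d ≤ y) := fun h => hSne ⟨z, hz, h⟩
      push_neg at hzgt
      have hcmpos : 0 < c^m := pow_pos hc0 m
      have : c*z + d ∈ Set.Ioo y (y+ε) := by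
        rw [Set.mem_Ioo]
        constructor
        · exact hzgt
        · nlinarith [hmem.2]
      exact havoid z hz this

/-- Generic branch lemma, left-gap version. -/
lemma branch_left (c d y ε p q : ℝ) (hc0 : 0 < c) (hc1 : c < 1)
    (hp : 0 ≤ p) (hq2 : q ≤ 2)
    (T : Set ℝ) (hT : IsCompact T)
    (havoid : ∀ z ∈ T, c*z + d ∉ Set.Ioo (y-ε) y)
    (hpull : ∀ y' ∈ T, c*y' + d = y →
      ∃ N, ∀ m ≥ N, ∀ z ∈ T, z ∉ Set.Ioo (y' + c^m*p) (y' + c^m*q)) :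
    ∃ N, ∀ m ≥ N, ∀ z ∈ T, c*z + d ∉ Set.Ioo (y + c^m*p) (y + c^m*q) := by
  by_cases hy : ∃ y' ∈ T, c*y' + d = y
  · obtain ⟨y', hy'T, hy'⟩ := hy
    obtain ⟨N, hN⟩ := hpull y' hy'T hy'
    refine ⟨N+1, ?_⟩
    intro m hm z hz hmem
    obtain ⟨k, rfl⟩ : ∃ k, m = k + 1 := ⟨m-1, by omega⟩
    rw [Set.mem_Ioo] at hmem
    refine hN k (by omega) z hz ?_
    rw [Set.mem_Ioo]
    have hpow : c^(k+1) = c*c^k := by ring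
    constructor
    · have h := hmem.1
      rw [← hy'] at h
      nlinarith [hc0]
    · have h := hmem.2
      rw [← hy'] at h
      nlinarith [hc0]
  · set S : Set ℝ := T ∩ {z | y ≤ c*z + d} with hS
    by_cases hSne : S.Nonempty
    · have hScpt : IsCompact S := hT.inter_right (isClosed_le continuous_const (by continuity))
      have huS : sInf S ∈ S := hScpt.sInf_mem hSne
      set u' := sInf S with hu'
      have hu'T : u' ∈ T := huS.1
      have hule : y ≤ c*u' + d := huS.2
      have hune : c*u' + d ≠ y := fun h => hy ⟨u', hu'T, h⟩
      have hult : y < c*u' + d := lt_of_le_of_ne hule (Ne.symm hune)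
      obtain ⟨N, hN⟩ := exists_pow_lt_of_lt_one
        (show (0:ℝ) < ((c*u' + d) - y)/2 by linarith) hc1
      refine ⟨N, ?_⟩
      intro m hm z hz hmem
      rw [Set.mem_Ioo] at hmem
      have hcm : c^m ≤ c^N := pow_le_pow_of_le_one hc0.le hc1.le hm
      have hcmpos : 0 < c^m := pow_pos hc0 m
      have hwge : y ≤ c*z + d := by nlinarith [hmem.1]
      have hzS : z ∈ S := ⟨hz, hwge⟩
      have hzge : u' ≤ z := csInf_le (hScpt.bddBelow) hzS
      have : c*u' + d ≤ c*z + d := by nlinarith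
      nlinarith [hmem.2, mul_le_mul_of_nonneg_right hcm (le_of_lt hcmpos), hN]
    · refine ⟨0, ?_⟩
      intro m hm z hz hmem
      rw [Set.mem_Ioo] at hmem
      have hzlt : ¬ (y ≤ c*z + d) := fun h => hSne ⟨z, hz, h⟩
      push_neg at hzlt
      have hcmpos : 0 < c^m := pow_pos hc0 m
      have : c*z + d ∈ Set.Ioo (y-ε) y := by
        rw [Set.mem_Ioo]
        constructor
        · nlinarith [hmem.1]
        · exact hzlt
      exact havoid z hz this

namespace RhoCtx
variable {τ : ℝ} {Wa Wb : Set ℝ} (C : RhoCtx τ Wa Wb)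
include C

/-- Right-gap master induction: any point of `Wa`/`Wb` with a gap of length `ε > 2 (2-τ)ⁿ`
immediately to its right has, to its left, the scaled missing intervals for all
sufficiently large scales. -/
lemma DR : ∀ n : ℕ, ∀ y ε : ℝ, 0 < ε → 2*(2-τ)^n < ε →
    ((y ∈ Wa → (∀ z ∈ Wa, z ∉ Set.Ioo y (y+ε)) →
      ∃ N, ∀ m ≥ N, ∀ z ∈ Wa, z ∉ Set.Ioo (y+(2-τ)^m*(4-3*τ)) (y+(2-τ)^m*(1-τ))) ∧
     (y ∈ Wb → (∀ z ∈ Wb, z ∉ Set.Ioo y (y+ε)) →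
      ∃ N, ∀ m ≥ N, ∀ z ∈ Wb, z ∉ Set.Ioo (y+(2-τ)^m*(4-3*τ)) (y+(2-τ)^m*(1-τ)))) := by
  intro n
  induction n with
  | zero =>
    intro y ε hε h2
    rw [pow_zero] at h2
    have ht1 := C.ht1; have ht2 := C.ht2
    constructor
    · intro hyA hgap
      have hy1 : y = 1 := by
        by_contra hne
        have hle := (C.boundA y hyA).2
        have hlt : y < 1 := lt_of_le_of_ne hle hne
        have h1m : (1:ℝ) ∈ Set.Ioo y (y+ε) := by
          rw [Set.mem_Ioo]
          exact ⟨hlt, by linarith [(C.boundA y hyA).1]⟩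
        exact hgap 1 C.oneA h1m
      subst hy1
      refine ⟨1, ?_⟩
      intro m hm z hz hmem
      obtain ⟨k, rfl⟩ : ∃ k, m = k + 1 := ⟨m-1, by omega⟩
      exact C.gapAtop k z hz (by rw [Set.mem_Ioo] at hmem ⊢; constructor <;> linarith [hmem.1, hmem.2])
    · intro hyB hgap
      have hy0 : y = 0 := by
        by_contra hne
        have hle := (C.boundB y hyB).2
        have hlt : y < 0 := lt_of_le_of_ne hle hne
        have h0m : (0:ℝ) ∈ Set.Ioo y (y+ε) := by
          rw [Set.mem_Ioo]
          exact ⟨hlt, by linarith [(C.boundB y hyB).1]⟩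
        exact hgap 0 C.zeroB h0m
      subst hy0
      refine ⟨0, ?_⟩
      intro m hm z hz hmem
      exact C.gapB0 m z hz (by rw [Set.mem_Ioo] at hmem ⊢; constructor <;> linarith [hmem.1, hmem.2])
  | succ n IH =>
    intro y ε hε h2
    have hc0 := C.hc0; have hc1 := C.hc1
    have hεr : 0 < ε/(2-τ) := div_pos hε hc0
    have hce : (2-τ)*(ε/(2-τ)) = ε := by field_simp
    have h2r : 2*(2-τ)^n < ε/(2-τ) := by
      rw [lt_div_iff₀ hc0]
      nlinarith [pow_succ (2-τ) n]
    have ht1 := C.ht1; have ht2 := C.ht2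
    have hpm2 : (-2:ℝ) ≤ 4-3*τ := by nlinarith
    have hq0 : (1-τ:ℝ) ≤ 0 := by nlinarith
    constructor
    · intro hyA hgap
      obtain ⟨N₁, h₁⟩ := branch_right (2-τ) 0 y ε (4-3*τ) (1-τ) hc0 hc1 hpm2 hq0 Wa C.hca
        (fun z hz h => hgap _ (by simpa using C.memA1 z hz) h)
        (fun y' hy' heq => by
          refine (IH y' (ε/(2-τ)) hεr h2r).1 hy' ?_
          intro z hz hmem
          rw [Set.mem_Ioo] at hmem
          refine hgap _ (C.memA1 z hz) ?_
          rw [Set.mem_Ioo]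
          constructor <;> nlinarith [hmem.1, hmem.2])
      obtain ⟨N₂, h₂⟩ := branch_right (2-τ) (1-τ) y ε (4-3*τ) (1-τ) hc0 hc1 hpm2 hq0 Wa C.hca
        (fun z hz h => hgap _ (C.memA2 z hz) h)
        (fun y' hy' heq => by
          refine (IH y' (ε/(2-τ)) hεr h2r).1 hy' ?_
          intro z hz hmem
          rw [Set.mem_Ioo] at hmem
          refine hgap _ (C.memA2 z hz) ?_
          rw [Set.mem_Ioo]
          constructor <;> nlinarith [hmem.1, hmem.2])
      obtain ⟨N₃, h₃⟩ := branch_right (2-τ) 1 y ε (4-3*τ) (1-τ) hc0 hc1 hpm2 hq0 Wb C.hcb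
        (fun z hz h => hgap _ (C.memA3 z hz) h)
        (fun y' hy' heq => by
          refine (IH y' (ε/(2-τ)) hεr h2r).2 hy' ?_
          intro z hz hmem
          rw [Set.mem_Ioo] at hmem
          refine hgap _ (C.memA3 z hz) ?_
          rw [Set.mem_Ioo]
          constructor <;> nlinarith [hmem.1, hmem.2])
      refine ⟨max N₁ (max N₂ N₃), ?_⟩
      intro m hm z hz hmem
      rcases C.decompA z hz with ⟨w, hw, rfl⟩ | ⟨w, hw, rfl⟩ | ⟨w, hw, rfl⟩
      · exact h₁ m (by omega) w hw (by simpa using hmem)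
      · exact h₂ m (by omega) w hw hmem
      · exact h₃ m (by omega) w hw hmem
    · intro hyB hgap
      obtain ⟨N₁, h₁⟩ := branch_right (2-τ) (2-2*τ) y ε (4-3*τ) (1-τ) hc0 hc1 hpm2 hq0 Wa C.hca
        (fun z hz h => hgap _ (C.memB1 z hz) h)
        (fun y' hy' heq => by
          refine (IH y' (ε/(2-τ)) hεr h2r).1 hy' ?_
          intro z hz hmem
          rw [Set.mem_Ioo] at hmem
          refine hgap _ (C.memB1 z hz) ?_
          rw [Set.mem_Ioo]
          constructor <;> nlinarith [hmem.1, hmem.2])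
      obtain ⟨N₂, h₂⟩ := branch_right (2-τ) 0 y ε (4-3*τ) (1-τ) hc0 hc1 hpm2 hq0 Wb C.hcb
        (fun z hz h => hgap _ (by simpa using C.memB2 z hz) h)
        (fun y' hy' heq => by
          refine (IH y' (ε/(2-τ)) hεr h2r).2 hy' ?_
          intro z hz hmem
          rw [Set.mem_Ioo] at hmem
          refine hgap _ (C.memB2 z hz) ?_
          rw [Set.mem_Ioo]
          constructor <;> nlinarith [hmem.1, hmem.2])
      refine ⟨max N₁ N₂, ?_⟩
      intro m hm z hz hmem
      rcases C.decompB z hz with ⟨w, hw, rfl⟩ | ⟨w, hw, rfl⟩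
      · exact h₁ m (by omega) w hw hmem
      · exact h₂ m (by omega) w hw (by simpa using hmem)

end RhoCtx
namespace RhoCtx
variable {τ : ℝ} {Wa Wb : Set ℝ} (C : RhoCtx τ Wa Wb)
include C

/-- Left-gap master induction. -/
lemma DL : ∀ n : ℕ, ∀ y ε : ℝ, 0 < ε → 2*(2-τ)^n < ε →
    ((y ∈ Wa → (∀ z ∈ Wa, z ∉ Set.Ioo (y-ε) y) →
      ∃ N, ∀ m ≥ N, ∀ z ∈ Wa, z ∉ Set.Ioo (y+(2-τ)^m*(83-51*τ)) (y+(2-τ)^m*(28-17*τ))) ∧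
     (y ∈ Wb → (∀ z ∈ Wb, z ∉ Set.Ioo (y-ε) y) →
      ∃ N, ∀ m ≥ N, ∀ z ∈ Wb, z ∉ Set.Ioo (y+(2-τ)^m*(83-51*τ)) (y+(2-τ)^m*(28-17*τ)))) := by
  intro n
  induction n with
  | zero =>
    intro y ε hε h2
    rw [pow_zero] at h2
    have ht1 := C.ht1; have ht2 := C.ht2
    constructor
    · intro hyA hgap
      have hy1 : y = -1 := by
        by_contra hne
        have hge := (C.boundA y hyA).1
        have hlt : -1 < y := lt_of_le_of_ne hge (Ne.symm hne)
        have h1m : (-1:ℝ) ∈ Set.Ioo (y-ε) y := by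
          rw [Set.mem_Ioo]
          exact ⟨by linarith [(C.boundA y hyA).2], hlt⟩
        exact hgap (-1) C.negoneA h1m
      subst hy1
      refine ⟨0, ?_⟩
      intro m hm z hz hmem
      exact C.gapAbot m z hz hmem
    · intro hyB hgap
      have hy0 : y = -τ := by
        by_contra hne
        have hge := (C.boundB y hyB).1
        have hlt : -τ < y := lt_of_le_of_ne hge (Ne.symm hne)
        have h0m : -τ ∈ Set.Ioo (y-ε) y := by
          rw [Set.mem_Ioo]
          exact ⟨by linarith [(C.boundB y hyB).2], hlt⟩
        exact hgap (-τ) C.negtB h0m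
      subst hy0
      refine ⟨1, ?_⟩
      intro m hm z hz hmem
      obtain ⟨k, rfl⟩ : ∃ k, m = k + 1 := ⟨m-1, by omega⟩
      exact C.gapBbot k z hz hmem
  | succ n IH =>
    intro y ε hε h2
    have hc0 := C.hc0; have hc1 := C.hc1
    have hεr : 0 < ε/(2-τ) := div_pos hε hc0
    have hce : (2-τ)*(ε/(2-τ)) = ε := by field_simp
    have h2r : 2*(2-τ)^n < ε/(2-τ) := by
      rw [lt_div_iff₀ hc0]
      nlinarith [pow_succ (2-τ) n]
    have ht1 := C.ht1; have ht2 := C.ht2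
    have hpm2 : (0:ℝ) ≤ 83-51*τ := by nlinarith
    have hq0 : (28-17*τ:ℝ) ≤ 2 := by nlinarith
    constructor
    · intro hyA hgap
      obtain ⟨N₁, h₁⟩ := branch_left (2-τ) 0 y ε (83-51*τ) (28-17*τ) hc0 hc1 hpm2 hq0 Wa C.hca
        (fun z hz h => hgap _ (by simpa using C.memA1 z hz) h)
        (fun y' hy' heq => by
          refine (IH y' (ε/(2-τ)) hεr h2r).1 hy' ?_
          intro z hz hmem
          rw [Set.mem_Ioo] at hmem
          refine hgap _ (C.memA1 z hz) ?_
          rw [Set.mem_Ioo]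
          constructor <;> nlinarith [hmem.1, hmem.2])
      obtain ⟨N₂, h₂⟩ := branch_left (2-τ) (1-τ) y ε (83-51*τ) (28-17*τ) hc0 hc1 hpm2 hq0 Wa C.hca
        (fun z hz h => hgap _ (C.memA2 z hz) h)
        (fun y' hy' heq => by
          refine (IH y' (ε/(2-τ)) hεr h2r).1 hy' ?_
          intro z hz hmem
          rw [Set.mem_Ioo] at hmem
          refine hgap _ (C.memA2 z hz) ?_
          rw [Set.mem_Ioo]
          constructor <;> nlinarith [hmem.1, hmem.2])
      obtain ⟨N₃, h₃⟩ := branch_left (2-τ) 1 y ε (83-51*τ) (28-17*τ) hc0 hc1 hpm2 hq0 Wb C.hcb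
        (fun z hz h => hgap _ (C.memA3 z hz) h)
        (fun y' hy' heq => by
          refine (IH y' (ε/(2-τ)) hεr h2r).2 hy' ?_
          intro z hz hmem
          rw [Set.mem_Ioo] at hmem
          refine hgap _ (C.memA3 z hz) ?_
          rw [Set.mem_Ioo]
          constructor <;> nlinarith [hmem.1, hmem.2])
      refine ⟨max N₁ (max N₂ N₃), ?_⟩
      intro m hm z hz hmem
      rcases C.decompA z hz with ⟨w, hw, rfl⟩ | ⟨w, hw, rfl⟩ | ⟨w, hw, rfl⟩
      · exact h₁ m (by omega) w hw (by simpa using hmem)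
      · exact h₂ m (by omega) w hw hmem
      · exact h₃ m (by omega) w hw hmem
    · intro hyB hgap
      obtain ⟨N₁, h₁⟩ := branch_left (2-τ) (2-2*τ) y ε (83-51*τ) (28-17*τ) hc0 hc1 hpm2 hq0 Wa C.hca
        (fun z hz h => hgap _ (C.memB1 z hz) h)
        (fun y' hy' heq => by
          refine (IH y' (ε/(2-τ)) hεr h2r).1 hy' ?_
          intro z hz hmem
          rw [Set.mem_Ioo] at hmem
          refine hgap _ (C.memB1 z hz) ?_
          rw [Set.mem_Ioo]
          constructor <;> nlinarith [hmem.1, hmem.2])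
      obtain ⟨N₂, h₂⟩ := branch_left (2-τ) 0 y ε (83-51*τ) (28-17*τ) hc0 hc1 hpm2 hq0 Wb C.hcb
        (fun z hz h => hgap _ (by simpa using C.memB2 z hz) h)
        (fun y' hy' heq => by
          refine (IH y' (ε/(2-τ)) hεr h2r).2 hy' ?_
          intro z hz hmem
          rw [Set.mem_Ioo] at hmem
          refine hgap _ (C.memB2 z hz) ?_
          rw [Set.mem_Ioo]
          constructor <;> nlinarith [hmem.1, hmem.2])
      refine ⟨max N₁ N₂, ?_⟩
      intro m hm z hz hmem
      rcases C.decompB z hz with ⟨w, hw, rfl⟩ | ⟨w, hw, rfl⟩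
      · exact h₁ m (by omega) w hw hmem
      · exact h₂ m (by omega) w hw (by simpa using hmem)

/-- Two-sided gap impossibility. -/
lemma DA : ∀ n : ℕ, ∀ y ε₁ ε₂ : ℝ, 0 < ε₁ → 0 < ε₂ → 2*(2-τ)^n < ε₁ → 2*(2-τ)^n < ε₂ →
    ((y ∈ Wa → (∀ z ∈ Wa, z ∉ Set.Ioo (y-ε₁) y) → (∀ z ∈ Wa, z ∉ Set.Ioo y (y+ε₂)) → False) ∧
     (y ∈ Wb → (∀ z ∈ Wb, z ∉ Set.Ioo (y-ε₁) y) → (∀ z ∈ Wb, z ∉ Set.Ioo y (y+ε₂)) → False)) := by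
  intro n
  induction n with
  | zero =>
    intro y ε₁ ε₂ hε₁ hε₂ h21 h22
    rw [pow_zero] at h21 h22
    have ht1 := C.ht1; have ht2 := C.ht2
    constructor
    · intro hyA hgapL hgapR
      have hy1 : y = 1 := by
        by_contra hne
        have hle := (C.boundA y hyA).2
        refine hgapR 1 C.oneA ?_
        rw [Set.mem_Ioo]
        exact ⟨lt_of_le_of_ne hle hne, by linarith [(C.boundA y hyA).1]⟩
      have hy2 : y = -1 := by
        by_contra hne
        have hge := (C.boundA y hyA).1
        refine hgapL (-1) C.negoneA ?_
        rw [Set.mem_Ioo]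
        exact ⟨by linarith [(C.boundA y hyA).2], lt_of_le_of_ne hge (Ne.symm hne)⟩
      rw [hy1] at hy2
      norm_num at hy2
    · intro hyB hgapL hgapR
      have hy1 : y = 0 := by
        by_contra hne
        have hle := (C.boundB y hyB).2
        refine hgapR 0 C.zeroB ?_
        rw [Set.mem_Ioo]
        exact ⟨lt_of_le_of_ne hle hne, by linarith [(C.boundB y hyB).1]⟩
      have hy2 : y = -τ := by
        by_contra hne
        have hge := (C.boundB y hyB).1
        refine hgapL (-τ) C.negtB ?_
        rw [Set.mem_Ioo]
        exact ⟨by linarith [(C.boundB y hyB).2], lt_of_le_of_ne hge (Ne.symm hne)⟩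
      rw [hy1] at hy2
      have : τ = 0 := by linarith
      linarith
  | succ n IH =>
    intro y ε₁ ε₂ hε₁ hε₂ h21 h22
    have hc0 := C.hc0; have hc1 := C.hc1
    have h2r1 : 2*(2-τ)^n < ε₁/(2-τ) := by
      rw [lt_div_iff₀ hc0]; nlinarith [pow_succ (2-τ) n]
    have h2r2 : 2*(2-τ)^n < ε₂/(2-τ) := by
      rw [lt_div_iff₀ hc0]; nlinarith [pow_succ (2-τ) n]
    have hε1r : 0 < ε₁/(2-τ) := div_pos hε₁ hc0
    have hε2r : 0 < ε₂/(2-τ) := div_pos hε₂ hc0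
    have hce1 : (2-τ)*(ε₁/(2-τ)) = ε₁ := by field_simp
    have hce2 : (2-τ)*(ε₂/(2-τ)) = ε₂ := by field_simp
    constructor
    · intro hyA hgapL hgapR
      rcases C.decompA y hyA with ⟨w, hw, hwe⟩ | ⟨w, hw, hwe⟩ | ⟨w, hw, hwe⟩
      · refine (IH w (ε₁/(2-τ)) (ε₂/(2-τ)) hε1r hε2r h2r1 h2r2).1 hw ?_ ?_
        · intro z hz hmem
          rw [Set.mem_Ioo] at hmem
          refine hgapL _ (C.memA1 z hz) ?_
          rw [Set.mem_Ioo]; rw [hwe]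
          constructor <;> nlinarith [hmem.1, hmem.2, hc0, hce1, hce2]
        · intro z hz hmem
          rw [Set.mem_Ioo] at hmem
          refine hgapR _ (C.memA1 z hz) ?_
          rw [Set.mem_Ioo]; rw [hwe]
          constructor <;> nlinarith [hmem.1, hmem.2, hc0, hce1, hce2]
      · refine (IH w (ε₁/(2-τ)) (ε₂/(2-τ)) hε1r hε2r h2r1 h2r2).1 hw ?_ ?_
        · intro z hz hmem
          rw [Set.mem_Ioo] at hmem
          refine hgapL _ (C.memA2 z hz) ?_
          rw [Set.mem_Ioo]; rw [hwe]
          constructor <;> nlinarith [hmem.1, hmem.2, hc0, hce1, hce2]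
        · intro z hz hmem
          rw [Set.mem_Ioo] at hmem
          refine hgapR _ (C.memA2 z hz) ?_
          rw [Set.mem_Ioo]; rw [hwe]
          constructor <;> nlinarith [hmem.1, hmem.2, hc0, hce1, hce2]
      · refine (IH w (ε₁/(2-τ)) (ε₂/(2-τ)) hε1r hε2r h2r1 h2r2).2 hw ?_ ?_
        · intro z hz hmem
          rw [Set.mem_Ioo] at hmem
          refine hgapL _ (C.memA3 z hz) ?_
          rw [Set.mem_Ioo]; rw [hwe]
          constructor <;> nlinarith [hmem.1, hmem.2, hc0, hce1, hce2]
        · intro z hz hmem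
          rw [Set.mem_Ioo] at hmem
          refine hgapR _ (C.memA3 z hz) ?_
          rw [Set.mem_Ioo]; rw [hwe]
          constructor <;> nlinarith [hmem.1, hmem.2, hc0, hce1, hce2]
    · intro hyB hgapL hgapR
      rcases C.decompB y hyB with ⟨w, hw, hwe⟩ | ⟨w, hw, hwe⟩
      · refine (IH w (ε₁/(2-τ)) (ε₂/(2-τ)) hε1r hε2r h2r1 h2r2).1 hw ?_ ?_
        · intro z hz hmem
          rw [Set.mem_Ioo] at hmem
          refine hgapL _ (C.memB1 z hz) ?_
          rw [Set.mem_Ioo]; rw [hwe]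
          constructor <;> nlinarith [hmem.1, hmem.2, hc0, hce1, hce2]
        · intro z hz hmem
          rw [Set.mem_Ioo] at hmem
          refine hgapR _ (C.memB1 z hz) ?_
          rw [Set.mem_Ioo]; rw [hwe]
          constructor <;> nlinarith [hmem.1, hmem.2, hc0, hce1, hce2]
      · refine (IH w (ε₁/(2-τ)) (ε₂/(2-τ)) hε1r hε2r h2r1 h2r2).2 hw ?_ ?_
        · intro z hz hmem
          rw [Set.mem_Ioo] at hmem
          refine hgapL _ (C.memB2 z hz) ?_
          rw [Set.mem_Ioo]; rw [hwe]
          constructor <;> nlinarith [hmem.1, hmem.2, hc0, hce1, hce2]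
        · intro z hz hmem
          rw [Set.mem_Ioo] at hmem
          refine hgapR _ (C.memB2 z hz) ?_
          rw [Set.mem_Ioo]; rw [hwe]
          constructor <;> nlinarith [hmem.1, hmem.2, hc0, hce1, hce2]

end RhoCtx
namespace RhoCtx
variable {τ : ℝ} {Wa Wb : Set ℝ} (C : RhoCtx τ Wa Wb)
include C

lemma main : (frontier (Wa ∪ Wb)).Nonempty ∧ IsCompact (frontier (Wa ∪ Wb)) ∧
    Perfect (frontier (Wa ∪ Wb)) ∧ IsTotallyDisconnected (frontier (Wa ∪ Wb)) := by
  have ht1 := C.ht1; have ht2 := C.ht2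
  have hc0 := C.hc0; have hc1 := C.hc1
  set W := Wa ∪ Wb with hW
  have hWcpt : IsCompact W := C.hca.union C.hcb
  have hWcl : IsClosed W := hWcpt.isClosed
  have hbnd : ∀ z ∈ W, -τ ≤ z ∧ z ≤ 1 := by
    rintro z (hz | hz)
    · exact ⟨by linarith [(C.boundA z hz).1], (C.boundA z hz).2⟩
    · exact ⟨(C.boundB z hz).1, by linarith [(C.boundB z hz).2]⟩
  have h1W : (1:ℝ) ∈ W := Or.inl C.oneA
  -- boundary membership from a one-sided gap
  have frontier_of_rightgap : ∀ c q : ℝ, c ∈ W → c < q → (∀ z ∈ W, z ∉ Set.Ioo c q) →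
      c ∈ frontier W := by
    intro c q hcW hcq hgap
    rw [hWcl.frontier_eq, Set.mem_diff]
    refine ⟨hcW, fun hint => ?_⟩
    obtain ⟨δ, hδ, hball⟩ := Metric.mem_nhds_iff.1 (mem_interior_iff_mem_nhds.1 hint)
    set z := c + min δ (q - c) / 2 with hz
    have h2 : 0 < min δ (q - c) := lt_min hδ (by linarith)
    have hz1 : z ∈ Metric.ball c δ := by
      rw [Metric.mem_ball, Real.dist_eq, hz,
        show c + min δ (q - c)/2 - c = min δ (q - c)/2 by ring,
        abs_of_nonneg (by linarith)]
      linarith [min_le_left δ (q - c)]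
    have hz2 : z ∈ Set.Ioo c q := by
      rw [Set.mem_Ioo, hz]
      exact ⟨by linarith, by linarith [min_le_right δ (q - c)]⟩
    exact hgap z (hball hz1) hz2
  have frontier_of_leftgap : ∀ p c : ℝ, c ∈ W → p < c → (∀ z ∈ W, z ∉ Set.Ioo p c) →
      c ∈ frontier W := by
    intro p c hcW hpc hgap
    rw [hWcl.frontier_eq, Set.mem_diff]
    refine ⟨hcW, fun hint => ?_⟩
    obtain ⟨δ, hδ, hball⟩ := Metric.mem_nhds_iff.1 (mem_interior_iff_mem_nhds.1 hint)
    set z := c - min δ (c - p) / 2 with hz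
    have h2 : 0 < min δ (c - p) := lt_min hδ (by linarith)
    have hz1 : z ∈ Metric.ball c δ := by
      rw [Metric.mem_ball, Real.dist_eq, hz]
      rw [show c - min δ (c - p)/2 - c = -(min δ (c - p)/2) by ring, abs_neg,
        abs_of_nonneg (by positivity)]
      linarith [min_le_left δ (c - p)]
    have hz2 : z ∈ Set.Ioo p c := by
      rw [Set.mem_Ioo, hz]
      exact ⟨by linarith [min_le_right δ (c - p)], by linarith⟩
    exact hgap z (hball hz1) hz2
  refine ⟨?_, ?_, ?_, ?_⟩
  · -- Nonempty : 1 is a boundary point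
    exact ⟨1, frontier_of_rightgap 1 2 h1W (by norm_num)
      (fun z hz hmem => by rw [Set.mem_Ioo] at hmem; linarith [(hbnd z hz).2, hmem.1])⟩
  · -- Compact
    refine IsCompact.of_isClosed_subset hWcpt isClosed_frontier ?_
    intro z hz
    have := frontier_subset_closure (s := W) hz
    rwa [hWcl.closure_eq] at this
  · -- Perfect
    constructor
    · exact isClosed_frontier
    intro x hx
    rw [accPt_iff_nhds]
    intro U hU
    obtain ⟨ε₀, hε₀, hball⟩ := Metric.mem_nhds_iff.1 hU
    have hxW : x ∈ W := by
      have := frontier_subset_closure (s := W) hx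
      rwa [hWcl.closure_eq] at this
    have hxcl : x ∈ closure Wᶜ := by
      rw [frontier_eq_closure_inter_closure] at hx
      exact hx.2
    obtain ⟨w, hwc, hwd⟩ := Metric.mem_closure_iff.1 hxcl (ε₀/2) (by linarith)
    have hwW : w ∉ W := hwc
    have hwx : w ≠ x := fun h => hwW (h ▸ hxW)
    -- helper : missing-interval packages near x for each of Wa, Wb on the right side
    have missR : ∀ (y : ℝ) (V : Set ℝ), IsCompact V → (V = Wa ∨ V = Wb) →
        (y ∈ V → ∀ ε > 0, (∀ z ∈ V, z ∉ Set.Ioo (y-ε) y) →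
          ∃ N, ∀ m ≥ N, ∀ z ∈ V, z ∉ Set.Ioo (y+(2-τ)^m*(83-51*τ)) (y+(2-τ)^m*(28-17*τ))) := by
      rintro y V hV (rfl | rfl) hxV ε hε hgap
      · obtain ⟨n, hn⟩ := exists_pow_lt_of_lt_one (show (0:ℝ) < ε/2 by linarith) hc1
        exact (C.DL n y ε hε (by linarith)).1 hxV hgap
      · obtain ⟨n, hn⟩ := exists_pow_lt_of_lt_one (show (0:ℝ) < ε/2 by linarith) hc1
        exact (C.DL n y ε hε (by linarith)).2 hxV hgap
    have missL : ∀ (y : ℝ) (V : Set ℝ), IsCompact V → (V = Wa ∨ V = Wb) →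
        (y ∈ V → ∀ ε > 0, (∀ z ∈ V, z ∉ Set.Ioo y (y+ε)) →
          ∃ N, ∀ m ≥ N, ∀ z ∈ V, z ∉ Set.Ioo (y+(2-τ)^m*(4-3*τ)) (y+(2-τ)^m*(1-τ))) := by
      rintro y V hV (rfl | rfl) hxV ε hε hgap
      · obtain ⟨n, hn⟩ := exists_pow_lt_of_lt_one (show (0:ℝ) < ε/2 by linarith) hc1
        exact (C.DR n y ε hε (by linarith)).1 hxV hgap
      · obtain ⟨n, hn⟩ := exists_pow_lt_of_lt_one (show (0:ℝ) < ε/2 by linarith) hc1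
        exact (C.DR n y ε hε (by linarith)).2 hxV hgap
    -- if x ∉ V (closed), intervals near x eventually avoid V
    have missOut : ∀ (y : ℝ) (V : Set ℝ), IsCompact V → y ∉ V → ∀ (P Q : ℝ), -2 ≤ P → Q ≤ 2 →
        ∃ N, ∀ m ≥ N, ∀ z ∈ V, z ∉ Set.Ioo (y+(2-τ)^m*P) (y+(2-τ)^m*Q) := by
      intro y V hV hxV P Q hP hQ
      have : IsOpen Vᶜ := hV.isClosed.isOpen_compl
      obtain ⟨δ, hδ, hsub⟩ := Metric.isOpen_iff.1 this y hxV
      obtain ⟨N, hN⟩ := exists_pow_lt_of_lt_one (show (0:ℝ) < δ/2 by linarith) hc1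
      refine ⟨N, ?_⟩
      intro m hm z hz hmem
      rw [Set.mem_Ioo] at hmem
      have hcm : (2-τ)^m ≤ (2-τ)^N := pow_le_pow_of_le_one hc0.le hc1.le hm
      have hcmpos : 0 < (2-τ)^m := pow_pos hc0 m
      have : z ∈ Metric.ball y δ := by
        rw [Metric.mem_ball, Real.dist_eq, abs_lt]
        constructor
        · nlinarith [hmem.1]
        · nlinarith [hmem.2]
      exact hsub this hz
    rcases lt_or_gt_of_ne hwx with hwlt | hwgt
    · -- w < x : left side
      set K := W ∩ Set.Icc w x with hK
      have hKcpt : IsCompact K := hWcpt.inter_right isClosed_Icc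
      have hKne : K.Nonempty := ⟨x, hxW, le_of_lt hwlt, le_refl x⟩
      have hcK := hKcpt.sInf_mem hKne
      set c := sInf K with hc
      have hcW : c ∈ W := hcK.1
      have hcge : w ≤ c := hcK.2.1
      have hcle : c ≤ x := hcK.2.2
      have hcnw : c ≠ w := fun h => hwW (h ▸ hcW)
      have hwc : w < c := lt_of_le_of_ne hcge (Ne.symm hcnw)
      have hgapWc : ∀ z ∈ W, z ∉ Set.Ioo w c := by
        intro z hz hmem
        rw [Set.mem_Ioo] at hmem
        have : z ∈ K := ⟨hz, le_of_lt hmem.1, le_trans (le_of_lt hmem.2) hcle⟩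
        exact absurd (csInf_le hKcpt.bddBelow this) (not_le.2 hmem.2)
      by_cases hcx : c = x
      · -- left gap exactly at x
        set ε := c - w with hε
        have hεpos : 0 < ε := by linarith
        have hgapx : ∀ (V : Set ℝ), V ⊆ W → ∀ z ∈ V, z ∉ Set.Ioo (c-ε) c := by
          intro V hVW z hz hmem
          exact hgapWc z (hVW hz) (by rw [Set.mem_Ioo] at hmem ⊢; constructor <;>
            [linarith [hmem.1]; exact hmem.2])
        have hA : ∃ N, ∀ m ≥ N, ∀ z ∈ Wa,
            z ∉ Set.Ioo (c+(2-τ)^m*(83-51*τ)) (c+(2-τ)^m*(28-17*τ)) := by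
          by_cases hxA : c ∈ Wa
          · exact missR c Wa C.hca (Or.inl rfl) hxA ε hεpos (hgapx Wa Set.subset_union_left)
          · exact missOut c Wa C.hca hxA (83-51*τ) (28-17*τ) (by nlinarith) (by nlinarith)
        have hB : ∃ N, ∀ m ≥ N, ∀ z ∈ Wb,
            z ∉ Set.Ioo (c+(2-τ)^m*(83-51*τ)) (c+(2-τ)^m*(28-17*τ)) := by
          by_cases hxB : c ∈ Wb
          · exact missR c Wb C.hcb (Or.inr rfl) hxB ε hεpos (hgapx Wb Set.subset_union_right)
          · exact missOut c Wb C.hcb hxB (83-51*τ) (28-17*τ) (by nlinarith) (by nlinarith)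
        obtain ⟨Na, hNa⟩ := hA
        obtain ⟨Nb, hNb⟩ := hB
        obtain ⟨N', hN'⟩ := exists_pow_lt_of_lt_one (show (0:ℝ) < ε₀/4 by linarith) hc1
        set M := max (max Na Nb) N' with hM
        have hcmpos : 0 < (2-τ)^M := pow_pos hc0 M
        have hcmN' : (2-τ)^M ≤ (2-τ)^N' := pow_le_pow_of_le_one hc0.le hc1.le (by omega)
        set p := c + (2-τ)^M*(83-51*τ) with hp
        set q := c + (2-τ)^M*(28-17*τ) with hqd
        have hpq : p < q := by nlinarith
        have hxp : c < p := by nlinarith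
        have hqx : q - c < ε₀/2 := by nlinarith
        have hmissW : ∀ z ∈ W, z ∉ Set.Ioo p q := by
          rintro z (hz | hz) hmem
          · exact hNa M (by omega) z hz hmem
          · exact hNb M (by omega) z hz hmem
        -- there is a W-point strictly between x and p
        have hWpt : ∃ t, t ∈ W ∧ t ∈ Set.Ioo c p := by
          by_contra hno
          push_neg at hno
          have hgapR : ∀ z ∈ W, z ∉ Set.Ioo c (c + (p - c)) := by
            intro z hz hmem
            exact hno z hz (by rwa [show c + (p - c) = p by ring] at hmem)
          obtain ⟨n₂, hn₂⟩ := exists_pow_lt_of_lt_one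
            (show (0:ℝ) < (min ε (p-c))/2 by
              have := lt_min hεpos (by linarith : (0:ℝ) < p - c); linarith) hc1
          have h2n : 2*(2-τ)^n₂ < min ε (p-c) := by linarith
          rcases hcW with hxA | hxB
          · exact (C.DA n₂ c ε (p-c) hεpos (by linarith)
              (lt_of_lt_of_le h2n (min_le_left _ _)) (lt_of_lt_of_le h2n (min_le_right _ _))).1
              hxA (fun z hz => hgapx Wa Set.subset_union_left z hz)
              (fun z hz hm => hgapR z (Or.inl hz) hm)
          · exact (C.DA n₂ c ε (p-c) hεpos (by linarith)
              (lt_of_lt_of_le h2n (min_le_left _ _)) (lt_of_lt_of_le h2n (min_le_right _ _))).2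
              hxB (fun z hz => hgapx Wb Set.subset_union_right z hz)
              (fun z hz hm => hgapR z (Or.inr hz) hm)
        obtain ⟨t, htW, htI⟩ := hWpt
        rw [Set.mem_Ioo] at htI
        set K2 := W ∩ Set.Icc c p with hK2
        have hK2cpt : IsCompact K2 := hWcpt.inter_right isClosed_Icc
        have hK2ne : K2.Nonempty := ⟨t, htW, le_of_lt htI.1, le_of_lt htI.2⟩
        have hc'K := hK2cpt.sSup_mem hK2ne
        set c' := sSup K2 with hc'
        have hc'W : c' ∈ W := hc'K.1
        have hc'ge : c ≤ c' := hc'K.2.1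
        have hc'le : c' ≤ p := hc'K.2.2
        have htc' : t ≤ c' := le_csSup hK2cpt.bddAbove ⟨htW, le_of_lt htI.1, le_of_lt htI.2⟩
        have hc'gt : c < c' := lt_of_lt_of_le htI.1 htc'
        have hgapc' : ∀ z ∈ W, z ∉ Set.Ioo c' q := by
          intro z hz hmem
          rw [Set.mem_Ioo] at hmem
          by_cases hzp : z ≤ p
          · have : z ∈ K2 := ⟨hz, by linarith, hzp⟩
            exact absurd (le_csSup hK2cpt.bddAbove this) (not_le.2 hmem.1)
          · exact hmissW z hz (by rw [Set.mem_Ioo]; exact ⟨not_le.1 hzp, hmem.2⟩)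
        refine ⟨c', ⟨hball ?_, frontier_of_rightgap c' q hc'W (by linarith) hgapc'⟩, by
          rw [← hcx]; exact ne_of_gt hc'gt⟩
        rw [Metric.mem_ball, Real.dist_eq, ← hcx, abs_of_nonneg (by linarith)]
        linarith
      · -- c ≠ x : c itself is a nearby boundary point
        refine ⟨c, ⟨hball ?_, frontier_of_leftgap w c hcW hwc hgapWc⟩, hcx⟩
        have h1 : |x - w| = x - w := abs_of_nonneg (by linarith)
        rw [Real.dist_eq, h1] at hwd
        rw [Metric.mem_ball, Real.dist_eq, abs_of_nonpos (by linarith)]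
        linarith
    · -- w > x : right side, mirror
      set K := W ∩ Set.Icc x w with hK
      have hKcpt : IsCompact K := hWcpt.inter_right isClosed_Icc
      have hKne : K.Nonempty := ⟨x, hxW, le_refl x, le_of_lt hwgt⟩
      have hcK := hKcpt.sSup_mem hKne
      set c := sSup K with hc
      have hcW : c ∈ W := hcK.1
      have hcge : x ≤ c := hcK.2.1
      have hcle : c ≤ w := hcK.2.2
      have hcnw : c ≠ w := fun h => hwW (h ▸ hcW)
      have hwc : c < w := lt_of_le_of_ne hcle hcnw
      have hgapWc : ∀ z ∈ W, z ∉ Set.Ioo c w := by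
        intro z hz hmem
        rw [Set.mem_Ioo] at hmem
        have : z ∈ K := ⟨hz, le_trans hcge (le_of_lt hmem.1), le_of_lt hmem.2⟩
        exact absurd (le_csSup hKcpt.bddAbove this) (not_le.2 hmem.1)
      by_cases hcx : c = x
      · set ε := w - c with hε
        have hεpos : 0 < ε := by linarith
        have hgapx : ∀ (V : Set ℝ), V ⊆ W → ∀ z ∈ V, z ∉ Set.Ioo c (c+ε) := by
          intro V hVW z hz hmem
          exact hgapWc z (hVW hz) (by rw [Set.mem_Ioo] at hmem ⊢; constructor <;>
            [exact hmem.1; linarith [hmem.2]])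
        have hA : ∃ N, ∀ m ≥ N, ∀ z ∈ Wa,
            z ∉ Set.Ioo (c+(2-τ)^m*(4-3*τ)) (c+(2-τ)^m*(1-τ)) := by
          by_cases hxA : c ∈ Wa
          · exact missL c Wa C.hca (Or.inl rfl) hxA ε hεpos (hgapx Wa Set.subset_union_left)
          · exact missOut c Wa C.hca hxA (4-3*τ) (1-τ) (by nlinarith) (by nlinarith)
        have hB : ∃ N, ∀ m ≥ N, ∀ z ∈ Wb,
            z ∉ Set.Ioo (c+(2-τ)^m*(4-3*τ)) (c+(2-τ)^m*(1-τ)) := by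
          by_cases hxB : c ∈ Wb
          · exact missL c Wb C.hcb (Or.inr rfl) hxB ε hεpos (hgapx Wb Set.subset_union_right)
          · exact missOut c Wb C.hcb hxB (4-3*τ) (1-τ) (by nlinarith) (by nlinarith)
        obtain ⟨Na, hNa⟩ := hA
        obtain ⟨Nb, hNb⟩ := hB
        obtain ⟨N', hN'⟩ := exists_pow_lt_of_lt_one (show (0:ℝ) < ε₀/4 by linarith) hc1
        set M := max (max Na Nb) N' with hM
        have hcmpos : 0 < (2-τ)^M := pow_pos hc0 M
        have hcmN' : (2-τ)^M ≤ (2-τ)^N' := pow_le_pow_of_le_one hc0.le hc1.le (by omega)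
        set p := c + (2-τ)^M*(4-3*τ) with hp
        set q := c + (2-τ)^M*(1-τ) with hqd
        have hpq : p < q := by nlinarith
        have hqx : q < c := by nlinarith
        have hpx : c - p < ε₀/2 := by nlinarith
        have hmissW : ∀ z ∈ W, z ∉ Set.Ioo p q := by
          rintro z (hz | hz) hmem
          · exact hNa M (by omega) z hz hmem
          · exact hNb M (by omega) z hz hmem
        have hWpt : ∃ t, t ∈ W ∧ t ∈ Set.Ioo q c := by
          by_contra hno
          push_neg at hno
          have hgapL : ∀ z ∈ W, z ∉ Set.Ioo (c - (c - q)) c := by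
            intro z hz hmem
            exact hno z hz (by rwa [show c - (c - q) = q by ring] at hmem)
          obtain ⟨n₂, hn₂⟩ := exists_pow_lt_of_lt_one
            (show (0:ℝ) < (min ε (c-q))/2 by
              have := lt_min hεpos (by linarith : (0:ℝ) < c - q); linarith) hc1
          have h2n : 2*(2-τ)^n₂ < min ε (c-q) := by linarith
          rcases hcW with hxA | hxB
          · exact (C.DA n₂ c (c-q) ε (by linarith) hεpos
              (lt_of_lt_of_le h2n (min_le_right _ _)) (lt_of_lt_of_le h2n (min_le_left _ _))).1
              hxA (fun z hz hm => hgapL z (Or.inl hz) hm)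
              (fun z hz => hgapx Wa Set.subset_union_left z hz)
          · exact (C.DA n₂ c (c-q) ε (by linarith) hεpos
              (lt_of_lt_of_le h2n (min_le_right _ _)) (lt_of_lt_of_le h2n (min_le_left _ _))).2
              hxB (fun z hz hm => hgapL z (Or.inr hz) hm)
              (fun z hz => hgapx Wb Set.subset_union_right z hz)
        obtain ⟨t, htW, htI⟩ := hWpt
        rw [Set.mem_Ioo] at htI
        set K2 := W ∩ Set.Icc q c with hK2
        have hK2cpt : IsCompact K2 := hWcpt.inter_right isClosed_Icc
        have hK2ne : K2.Nonempty := ⟨t, htW, le_of_lt htI.1, le_of_lt htI.2⟩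
        have hc'K := hK2cpt.sInf_mem hK2ne
        set c' := sInf K2 with hc'
        have hc'W : c' ∈ W := hc'K.1
        have hc'ge : q ≤ c' := hc'K.2.1
        have hc'le : c' ≤ c := hc'K.2.2
        have htc' : c' ≤ t := csInf_le hK2cpt.bddBelow ⟨htW, le_of_lt htI.1, le_of_lt htI.2⟩
        have hc'lt : c' < c := lt_of_le_of_lt htc' htI.2
        have hgapc' : ∀ z ∈ W, z ∉ Set.Ioo p c' := by
          intro z hz hmem
          rw [Set.mem_Ioo] at hmem
          by_cases hzq : q ≤ z
          · have : z ∈ K2 := ⟨hz, hzq, by linarith⟩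
            exact absurd (csInf_le hK2cpt.bddBelow this) (not_le.2 hmem.2)
          · exact hmissW z hz (by rw [Set.mem_Ioo]; exact ⟨hmem.1, not_le.1 hzq⟩)
        refine ⟨c', ⟨hball ?_, frontier_of_leftgap p c' hc'W (by linarith) hgapc'⟩, by
          rw [← hcx]; exact ne_of_lt hc'lt⟩
        rw [Metric.mem_ball, Real.dist_eq, ← hcx, abs_of_nonpos (by linarith)]
        linarith
      · refine ⟨c, ⟨hball ?_, frontier_of_rightgap c w hcW hwc hgapWc⟩, hcx⟩
        have h1 : |x - w| = w - x := by rw [abs_of_nonpos (by linarith)]; ring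
        rw [Real.dist_eq, h1] at hwd
        rw [Metric.mem_ball, Real.dist_eq, abs_of_nonneg (by linarith)]
        linarith
  · -- Totally disconnected
    intro t hts htconn
    intro a ha b hb
    by_contra hne
    rcases lt_or_gt_of_ne hne with hab | hab
    · have hIcc : Set.Icc a b ⊆ t := htconn.Icc_subset ha hb
      have hIoo : Set.Ioo a b ⊆ interior W := by
        apply interior_maximal _ isOpen_Ioo
        intro z hz
        have : z ∈ frontier W := hts (hIcc ⟨le_of_lt hz.1, le_of_lt hz.2⟩)
        rw [hWcl.frontier_eq] at this
        exact this.1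
      have hmid : (a+b)/2 ∈ Set.Ioo a b := ⟨by linarith, by linarith⟩
      have h1 : (a+b)/2 ∈ frontier W := hts (hIcc ⟨by linarith [hmid.1], by linarith [hmid.2]⟩)
      rw [hWcl.frontier_eq] at h1
      exact h1.2 (hIoo hmid)
    · have hIcc : Set.Icc b a ⊆ t := htconn.Icc_subset hb ha
      have hIoo : Set.Ioo b a ⊆ interior W := by
        apply interior_maximal _ isOpen_Ioo
        intro z hz
        have : z ∈ frontier W := hts (hIcc ⟨le_of_lt hz.1, le_of_lt hz.2⟩)
        rw [hWcl.frontier_eq] at this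
        exact this.1
      have hmid : (a+b)/2 ∈ Set.Ioo b a := ⟨by linarith, by linarith⟩
      have h1 : (a+b)/2 ∈ frontier W := hts (hIcc ⟨by linarith [hmid.1], by linarith [hmid.2]⟩)
      rw [hWcl.frontier_eq] at h1
      exact h1.2 (hIoo hmid)

end RhoCtx

/-- The boundary of the window $W = W_a ∪ W_b$ of ρ̃ = (a ↦ aab, b ↦ ba) is a
Cantor set: nonempty, compact, perfect (no isolated points), and totally
disconnected. -/
theorem rho_tilde_boundary_is_Cantor_set (τ : ℝ) (hτ : τ = (1 + Real.sqrt 5) / 2)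
    (Wa Wb : Set ℝ) (hWa : Wa.Nonempty) (hWb : Wb.Nonempty)
    (hca : IsCompact Wa) (hcb : IsCompact Wb)
    (h1 : Wa = (fun x : ℝ => (τ ^ 2)⁻¹ * x) '' Wa ∪
               (fun x : ℝ => (τ ^ 2)⁻¹ * (x - τ)) '' Wa ∪
               (fun x : ℝ => (τ ^ 2)⁻¹ * (x + τ ^ 2)) '' Wb)
    (h2 : Wb = (fun x : ℝ => (τ ^ 2)⁻¹ * (x - 2 * τ)) '' Wa ∪
               (fun x : ℝ => (τ ^ 2)⁻¹ * x) '' Wb) :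
    (frontier (Wa ∪ Wb)).Nonempty ∧
    IsCompact (frontier (Wa ∪ Wb)) ∧
    Perfect (frontier (Wa ∪ Wb)) ∧
    IsTotallyDisconnected (frontier (Wa ∪ Wb)) := by
  -- basic arithmetic facts about the golden ratio
  have hs5 : Real.sqrt 5 ^ 2 = 5 := Real.sq_sqrt (by norm_num)
  have hs5u : Real.sqrt 5 < 2.2362 := by
    rw [show (2.2362:ℝ) = Real.sqrt (2.2362^2) by rw [Real.sqrt_sq]; norm_num]
    exact Real.sqrt_lt_sqrt (by norm_num) (by norm_num)
  have hs5l : (2.236:ℝ) < Real.sqrt 5 := by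
    rw [show (2.236:ℝ) = Real.sqrt (2.236^2) by rw [Real.sqrt_sq]; norm_num]
    exact Real.sqrt_lt_sqrt (by norm_num) (by norm_num)
  have hq : τ^2 = τ + 1 := by rw [hτ]; nlinarith
  have ht1 : 1.618 < τ := by rw [hτ]; linarith
  have ht2 : τ < 1.6181 := by rw [hτ]; linarith
  have hτ2pos : (0:ℝ) < τ^2 := by nlinarith
  have hrinv : (τ^2)⁻¹ = 2 - τ := by
    have hm : (τ^2) * (2-τ) = 1 := by nlinarith
    field_simp
    nlinarith
  -- pointwise membership lemmas
  have memA1 : ∀ z ∈ Wa, (2-τ)*z ∈ Wa := by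
    intro z hz
    rw [h1]
    exact Or.inl (Or.inl ⟨z, hz, by rw [hrinv]⟩)
  have memA2 : ∀ z ∈ Wa, (2-τ)*z + (1-τ) ∈ Wa := by
    intro z hz
    rw [h1]
    exact Or.inl (Or.inr ⟨z, hz, by rw [hrinv]; linear_combination hq⟩)
  have memA3 : ∀ z ∈ Wb, (2-τ)*z + 1 ∈ Wa := by
    intro z hz
    rw [h1]
    exact Or.inr ⟨z, hz, by rw [hrinv]; linear_combination (1-τ)*hq⟩
  have memB1 : ∀ z ∈ Wa, (2-τ)*z + (2-2*τ) ∈ Wb := by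
    intro z hz
    rw [h2]
    exact Or.inl ⟨z, hz, by rw [hrinv]; linear_combination 2*hq⟩
  have memB2 : ∀ z ∈ Wb, (2-τ)*z ∈ Wb := by
    intro z hz
    rw [h2]
    exact Or.inr ⟨z, hz, by rw [hrinv]⟩
  have decompA : ∀ y ∈ Wa, (∃ z ∈ Wa, y = (2-τ)*z) ∨ (∃ z ∈ Wa, y = (2-τ)*z + (1-τ)) ∨
      (∃ z ∈ Wb, y = (2-τ)*z + 1) := by
    intro y hy
    rw [h1] at hy
    rcases hy with (⟨z, hz, he⟩ | ⟨z, hz, he⟩) | ⟨z, hz, he⟩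
    · exact Or.inl ⟨z, hz, by rw [← he, hrinv]⟩
    · exact Or.inr (Or.inl ⟨z, hz, by rw [← he, hrinv]; linear_combination hq⟩)
    · exact Or.inr (Or.inr ⟨z, hz, by rw [← he, hrinv]; linear_combination (1-τ)*hq⟩)
  have decompB : ∀ y ∈ Wb, (∃ z ∈ Wa, y = (2-τ)*z + (2-2*τ)) ∨ (∃ z ∈ Wb, y = (2-τ)*z) := by
    intro y hy
    rw [h2] at hy
    rcases hy with ⟨z, hz, he⟩ | ⟨z, hz, he⟩
    · exact Or.inl ⟨z, hz, by rw [← he, hrinv]; linear_combination 2*hq⟩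
    · exact Or.inr ⟨z, hz, by rw [← he, hrinv]⟩
  -- extrema analysis
  have hMaW : sSup Wa ∈ Wa := hca.sSup_mem hWa
  have hMbW : sSup Wb ∈ Wb := hcb.sSup_mem hWb
  have hmaW : sInf Wa ∈ Wa := hca.sInf_mem hWa
  have hmbW : sInf Wb ∈ Wb := hcb.sInf_mem hWb
  have hubA : ∀ y ∈ Wa, y ≤ sSup Wa := fun y hy => le_csSup hca.bddAbove hy
  have hubB : ∀ y ∈ Wb, y ≤ sSup Wb := fun y hy => le_csSup hcb.bddAbove hy
  have hlbA : ∀ y ∈ Wa, sInf Wa ≤ y := fun y hy => csInf_le hca.bddBelow hy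
  have hlbB : ∀ y ∈ Wb, sInf Wb ≤ y := fun y hy => csInf_le hcb.bddBelow hy
  set Ma := sSup Wa
  set Mb := sSup Wb
  set ma := sInf Wa
  set mb := sInf Wb
  have hMb0 : 0 ≤ Mb := by
    have := hubB _ (memB2 Mb hMbW)
    nlinarith
  have hMa0 : 0 ≤ Ma := by
    have := hubA _ (memA1 Ma hMaW)
    nlinarith
  have hMa1 : (2-τ)*Mb + 1 ≤ Ma := hubA _ (memA3 Mb hMbW)
  have hMb : Mb = 0 ∧ Ma = 1 := by
    have hMb0' : Mb = 0 := by
      rcases decompB Mb hMbW with ⟨z, hz, he⟩ | ⟨z, hz, he⟩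
      · -- Mb = (2-τ) z + 2 - 2τ with z ≤ Ma, Ma ≤ (2-τ) Mb + 1 is needed: get Ma ≤ ...
        have hzM : z ≤ Ma := hubA z hz
        rcases decompA Ma hMaW with ⟨u, hu, heu⟩ | ⟨u, hu, heu⟩ | ⟨u, hu, heu⟩
        · have huM : u ≤ Ma := hubA u hu
          nlinarith
        · have huM : u ≤ Ma := hubA u hu
          nlinarith
        · have huM : u ≤ Mb := hubB u hu
          -- Ma ≤ (2-τ)Mb + 1 so Mb ≤ (2-τ)((2-τ)Mb+1) + 2-2τ, contradiction with Mb ≥ 0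
          nlinarith
      · have hzM : z ≤ Mb := hubB z hz
        nlinarith
    refine ⟨hMb0', ?_⟩
    rcases decompA Ma hMaW with ⟨u, hu, heu⟩ | ⟨u, hu, heu⟩ | ⟨u, hu, heu⟩
    · have huM : u ≤ Ma := hubA u hu
      nlinarith
    · have huM : u ≤ Ma := hubA u hu
      nlinarith
    · have huM : u ≤ Mb := hubB u hu
      nlinarith
  have hma1 : ma ≤ -1 := by
    have := hlbA _ (memA2 ma hmaW)
    nlinarith
  have hmbm : mb ≤ (2-τ)*ma + (2-2*τ) := hlbB _ (memB1 ma hmaW)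
  have hm : ma = -1 ∧ mb = -τ := by
    have hmb' : mb = (2-τ)*ma + (2-2*τ) := by
      rcases decompB mb hmbW with ⟨z, hz, he⟩ | ⟨z, hz, he⟩
      · have hzm : ma ≤ z := hlbA z hz
        nlinarith
      · have hzm : mb ≤ z := hlbB z hz
        nlinarith
    have hma' : ma = -1 := by
      rcases decompA ma hmaW with ⟨u, hu, heu⟩ | ⟨u, hu, heu⟩ | ⟨u, hu, heu⟩
      · have hum : ma ≤ u := hlbA u hu
        nlinarith
      · have hum : ma ≤ u := hlbA u hu
        nlinarith
      · have hum : mb ≤ u := hlbB u hu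
        nlinarith
    exact ⟨hma', by rw [hmb', hma']; ring⟩
  have C : RhoCtx τ Wa Wb := {
    hq := hq, ht1 := ht1, ht2 := ht2, hca := hca, hcb := hcb,
    decompA := decompA, decompB := decompB,
    memA1 := memA1, memA2 := memA2, memA3 := memA3, memB1 := memB1, memB2 := memB2,
    boundA := fun y hy => ⟨by rw [← hm.1]; exact hlbA y hy, by rw [← hMb.2]; exact hubA y hy⟩,
    boundB := fun y hy => ⟨by rw [← hm.2]; exact hlbB y hy, by rw [← hMb.1]; exact hubB y hy⟩,
    oneA := by rw [← hMb.2]; exact hMaW,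
    negoneA := by rw [← hm.1]; exact hmaW,
    zeroB := by rw [← hMb.1]; exact hMbW,
    negtB := by rw [← hm.2]; exact hmbW }
  exact C.main
end

section
/- Let τ = (1+√5)/2 and let W_a, W_b be nonempty compact subsets of ℝ satisfying W_a = τ⁻²·W_a ∪ τ⁻²·(W_a − τ) ∪ τ⁻²·(W_b + τ²) and W_b = τ⁻²·(W_a − 2τ) ∪ τ⁻²·W_b. Then the boundary intersection sets satisfy: W_a ∩ (W_b − 1) = {−1} and W_b ∩ (W_b − τ) = {−τ}. -/
set_option maxHeartbeats 1000000 in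
/-- The boundary intersection sets $O_{ab}(-1) = W_a ∩ (W_b - 1)$ and
$O_{bb}(τ-1) = W_b ∩ (W_b - τ)$ for ρ̃ = (a ↦ aab, b ↦ ba) are the
singletons $\{-1\}$ and $\{-τ\}$. -/
theorem rho_tilde_singleton_intersections (τ : ℝ) (hτ : τ = (1 + Real.sqrt 5) / 2)
    (Wa Wb : Set ℝ) (hWa : Wa.Nonempty) (hWb : Wb.Nonempty)
    (hca : IsCompact Wa) (hcb : IsCompact Wb)
    (h1 : Wa = (fun x : ℝ => (τ ^ 2)⁻¹ * x) '' Wa ∪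
               (fun x : ℝ => (τ ^ 2)⁻¹ * (x - τ)) '' Wa ∪
               (fun x : ℝ => (τ ^ 2)⁻¹ * (x + τ ^ 2)) '' Wb)
    (h2 : Wb = (fun x : ℝ => (τ ^ 2)⁻¹ * (x - 2 * τ)) '' Wa ∪
               (fun x : ℝ => (τ ^ 2)⁻¹ * x) '' Wb) :
    Wa ∩ ((fun x : ℝ => x - 1) '' Wb) = {-1} ∧
    Wb ∩ ((fun x : ℝ => x - τ) '' Wb) = {-τ} := by
  -- basic facts about τ
  have h5 : Real.sqrt 5 ^ 2 = 5 := Real.sq_sqrt (by norm_num)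
  have h5' : Real.sqrt 5 > 2 := by
    nlinarith [Real.sqrt_nonneg 5]
  have hτ1 : 1 < τ := by rw [hτ]; linarith
  have hτ2 : τ ^ 2 = τ + 1 := by rw [hτ]; nlinarith
  have ht0 : (0:ℝ) < τ ^ 2 := by nlinarith
  have htne : (τ ^ 2) ≠ 0 := ne_of_gt ht0
  -- extremal elements
  obtain ⟨A1, hA1⟩ := hca.exists_isLeast hWa
  obtain ⟨A2, hA2⟩ := hca.exists_isGreatest hWa
  obtain ⟨B1, hB1⟩ := hcb.exists_isLeast hWb
  obtain ⟨B2, hB2⟩ := hcb.exists_isGreatest hWb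
  -- helper memberships
  have memA : ∀ y ∈ Wb, (τ ^ 2)⁻¹ * (y + τ ^ 2) ∈ Wa := by
    intro y hy
    have : (τ ^ 2)⁻¹ * (y + τ ^ 2) ∈
        (fun x : ℝ => (τ ^ 2)⁻¹ * x) '' Wa ∪
        (fun x : ℝ => (τ ^ 2)⁻¹ * (x - τ)) '' Wa ∪
        (fun x : ℝ => (τ ^ 2)⁻¹ * (x + τ ^ 2)) '' Wb :=
      Or.inr ⟨y, hy, rfl⟩
    rwa [← h1] at this
  have memA2 : ∀ y ∈ Wa, (τ ^ 2)⁻¹ * (y - τ) ∈ Wa := by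
    intro y hy
    have : (τ ^ 2)⁻¹ * (y - τ) ∈
        (fun x : ℝ => (τ ^ 2)⁻¹ * x) '' Wa ∪
        (fun x : ℝ => (τ ^ 2)⁻¹ * (x - τ)) '' Wa ∪
        (fun x : ℝ => (τ ^ 2)⁻¹ * (x + τ ^ 2)) '' Wb :=
      Or.inl (Or.inr ⟨y, hy, rfl⟩)
    rwa [← h1] at this
  have memB : ∀ y ∈ Wb, (τ ^ 2)⁻¹ * y ∈ Wb := by
    intro y hy
    have : (τ ^ 2)⁻¹ * y ∈
        (fun x : ℝ => (τ ^ 2)⁻¹ * (x - 2 * τ)) '' Wa ∪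
        (fun x : ℝ => (τ ^ 2)⁻¹ * x) '' Wb := Or.inr ⟨y, hy, rfl⟩
    rwa [← h2] at this
  have memB2 : ∀ y ∈ Wa, (τ ^ 2)⁻¹ * (y - 2 * τ) ∈ Wb := by
    intro y hy
    have : (τ ^ 2)⁻¹ * (y - 2 * τ) ∈
        (fun x : ℝ => (τ ^ 2)⁻¹ * (x - 2 * τ)) '' Wa ∪
        (fun x : ℝ => (τ ^ 2)⁻¹ * x) '' Wb := Or.inl ⟨y, hy, rfl⟩
    rwa [← h2] at this
  -- Step 1 : B2 ≥ 0
  have hB2nn : 0 ≤ B2 := by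
    have h := hB2.2 (memB B2 hB2.1)
    -- (τ²)⁻¹ * B2 ≤ B2
    have h' : B2 ≤ τ ^ 2 * B2 := by
      have := mul_le_mul_of_nonneg_left h (le_of_lt ht0)
      rwa [mul_inv_cancel_left₀ htne] at this
    nlinarith
  -- Step 2 : A2 ≥ (τ²)⁻¹ * B2 + 1, hence A2 ≥ 1
  have hA2ge : (τ ^ 2)⁻¹ * (B2 + τ ^ 2) ≤ A2 := hA2.2 (memA B2 hB2.1)
  have hA2ge1 : 1 ≤ A2 := by
    have h' : B2 + τ ^ 2 ≤ τ ^ 2 * A2 := by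
      have := mul_le_mul_of_nonneg_left hA2ge (le_of_lt ht0)
      rwa [mul_inv_cancel_left₀ htne] at this
    nlinarith
  -- Step 3 : A2 = (τ²)⁻¹ * B2 + 1  (multiplied form: τ² * A2 = B2 + τ²)
  have hA2eq : τ ^ 2 * A2 = B2 + τ ^ 2 := by
    have hmem := hA2.1
    rw [h1] at hmem
    rcases hmem with (⟨a, ha, heq⟩ | ⟨a, ha, heq⟩) | ⟨b, hb, heq⟩
    · -- A2 = a/τ², a ≤ A2 ⇒ A2 ≤ 0 : contradiction
      exfalso
      have ha' := hA2.2 ha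
      have : τ ^ 2 * A2 = a := by
        rw [← heq]; rw [mul_inv_cancel_left₀ htne]
      nlinarith
    · exfalso
      have ha' := hA2.2 ha
      have : τ ^ 2 * A2 = a - τ := by
        rw [← heq]; rw [mul_inv_cancel_left₀ htne]
      nlinarith
    · have hb' := hB2.2 hb
      have h' : τ ^ 2 * A2 = b + τ ^ 2 := by
        rw [← heq]; rw [mul_inv_cancel_left₀ htne]
      have h'' : B2 + τ ^ 2 ≤ τ ^ 2 * A2 := by
        have := mul_le_mul_of_nonneg_left hA2ge (le_of_lt ht0)
        rwa [mul_inv_cancel_left₀ htne] at this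
      linarith
  -- Step 4 : B2 = 0
  have hB2eq : B2 = 0 := by
    have hmem := hB2.1
    rw [h2] at hmem
    rcases hmem with ⟨a, ha, heq⟩ | ⟨b, hb, heq⟩
    · exfalso
      have ha' := hA2.2 ha
      have h' : τ ^ 2 * B2 = a - 2 * τ := by
        rw [← heq]; rw [mul_inv_cancel_left₀ htne]
      -- τ² B2 ≤ A2 - 2τ, τ² A2 = B2 + τ² ⇒ B2 ≤ -1, contradicting B2 ≥ 0
      nlinarith [mul_le_mul_of_nonneg_left (hA2.2 ha) (le_of_lt ht0)]
    · have hb' := hB2.2 hb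
      have h' : τ ^ 2 * B2 = b := by
        rw [← heq]; rw [mul_inv_cancel_left₀ htne]
      nlinarith
  -- Step 5 : A1 = -1
  have hA1le : A1 ≤ -1 := by
    have h := hA1.2 (memA2 A1 hA1.1)
    have h' : A1 * τ ^ 2 ≤ A1 - τ := by
      have := mul_le_mul_of_nonneg_left h (le_of_lt ht0)
      rw [mul_inv_cancel_left₀ htne] at this
      linarith
    nlinarith
  have hA1eq : A1 = -1 := by
    have hmem := hA1.1
    rw [h1] at hmem
    rcases hmem with (⟨a, ha, heq⟩ | ⟨a, ha, heq⟩) | ⟨b, hb, heq⟩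
    · exfalso
      have ha' := hA1.2 ha
      have : τ ^ 2 * A1 = a := by
        rw [← heq]; rw [mul_inv_cancel_left₀ htne]
      nlinarith
    · have ha' := hA1.2 ha
      have h' : τ ^ 2 * A1 = a - τ := by
        rw [← heq]; rw [mul_inv_cancel_left₀ htne]
      nlinarith
    · exfalso
      have hb' := hB1.2 hb
      have h' : τ ^ 2 * A1 = b + τ ^ 2 := by
        rw [← heq]; rw [mul_inv_cancel_left₀ htne]
      -- b ≥ B1, need B1 bounded below: cases on B1
      have hmemB1 := hB1.1
      rw [h2] at hmemB1
      rcases hmemB1 with ⟨a, ha, heqB⟩ | ⟨c, hc, heqB⟩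
      · have ha2 := hA1.2 ha
        have hB1eq' : τ ^ 2 * B1 = a - 2 * τ := by
          rw [← heqB]; rw [mul_inv_cancel_left₀ htne]
        -- τ² B1 = a - 2τ ≥ A1 - 2τ ; τ² A1 = b + τ² ≥ B1 + τ²
        have ht4 : τ ^ 2 * τ ^ 2 = 3 * τ + 2 := by rw [hτ2]; ring_nf; linarith [hτ2]
        have e1 : τ ^ 2 * (B1 + τ ^ 2) ≤ τ ^ 2 * (τ ^ 2 * A1) :=
          mul_le_mul_of_nonneg_left (by linarith) ht0.le
        have e3 : τ ^ 2 * (τ ^ 2 * A1) = (3 * τ + 2) * A1 := by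
          rw [← mul_assoc, ht4]
        have e4 : τ ^ 2 * (B1 + τ ^ 2) = (a - 2 * τ) + (3 * τ + 2) := by
          rw [mul_add, hB1eq', ht4]
        nlinarith [e1, e3, e4, ha2, hA1le, hτ1]
      · have hc2 := hB1.2 hc
        have hB1eq' : τ ^ 2 * B1 = c := by
          rw [← heqB]; rw [mul_inv_cancel_left₀ htne]
        -- τ² B1 = c ≥ B1 ⇒ B1 ≥ 0 ⇒ τ² A1 = b + τ² ≥ τ² ⇒ A1 ≥ 1, contra
        have e1 : τ ^ 2 * A1 ≤ -τ ^ 2 := by nlinarith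
        have hB1neg : B1 ≤ -2 * τ ^ 2 := by linarith
        nlinarith [hB1neg, hB1eq', hc2, hτ2, hτ1]
  -- Step 6 : B1 = -τ
  have hB1le : B1 ≤ -τ := by
    have h := hB1.2 (memB2 A1 hA1.1)
    have h' : τ ^ 2 * B1 ≤ A1 - 2 * τ := by
      have := mul_le_mul_of_nonneg_left h (le_of_lt ht0)
      rw [mul_inv_cancel_left₀ htne] at this
      linarith
    rw [hA1eq] at h'
    nlinarith
  have hB1eq : B1 = -τ := by
    have hmem := hB1.1
    rw [h2] at hmem
    rcases hmem with ⟨a, ha, heq⟩ | ⟨b, hb, heq⟩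
    · have ha' := hA1.2 ha
      rw [hA1eq] at ha'
      have h' : τ ^ 2 * B1 = a - 2 * τ := by
        rw [← heq]; rw [mul_inv_cancel_left₀ htne]
      nlinarith
    · exfalso
      have hb' := hB1.2 hb
      have h' : τ ^ 2 * B1 = b := by
        rw [← heq]; rw [mul_inv_cancel_left₀ htne]
      nlinarith
  -- key memberships
  have h0mem : (0:ℝ) ∈ Wb := hB2eq ▸ hB2.1
  have hm1mem : (-1:ℝ) ∈ Wa := hA1eq ▸ hA1.1
  have hmτmem : (-τ) ∈ Wb := hB1eq ▸ hB1.1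
  constructor
  · ext x
    simp only [Set.mem_inter_iff, Set.mem_image, Set.mem_singleton_iff]
    constructor
    · rintro ⟨hxa, y, hy, rfl⟩
      have h1' : A1 ≤ y - 1 := hA1.2 hxa
      have h2' : y ≤ B2 := hB2.2 hy
      rw [hA1eq] at h1'; rw [hB2eq] at h2'
      linarith
    · rintro rfl
      exact ⟨hm1mem, 0, h0mem, by norm_num⟩
  · ext x
    simp only [Set.mem_inter_iff, Set.mem_image, Set.mem_singleton_iff]
    constructor
    · rintro ⟨hxb, y, hy, rfl⟩
      have h1' : B1 ≤ y - τ := hB1.2 hxb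
      have h2' : y ≤ B2 := hB2.2 hy
      rw [hB1eq] at h1'; rw [hB2eq] at h2'
      linarith
    · rintro rfl
      exact ⟨hmτmem, 0, h0mem, by ring⟩
end

section
/- Let τ = (1+√5)/2 and let W_a, W_b be nonempty compact subsets of ℝ satisfying W_a = τ⁻²·W_a ∪ τ⁻²·(W_a − τ) ∪ τ⁻²·(W_b + τ²) and W_b = τ⁻²·(W_a − 2τ) ∪ τ⁻²·W_b. Define B = W_b ∩ (W_a − τ), A = W_a ∩ (W_a − 1), C = W_a ∩ W_b, and D = W_a ∩ (W_a − τ). Then these sets satisfy the reduced boundary graph-directed iterated function system: B = {−τ⁻¹} ∪ (τ⁻²·A − 2τ⁻¹) ∪ (τ⁻²·B − τ⁻¹); A = (τ⁻²·A − τ⁻¹) ∪ τ⁻²·B ∪ τ⁻²·C; C = τ⁻²·C ∪ (τ⁻²·D − τ⁻¹) ∪ τ⁻²·B; and D = τ⁻²·C − τ⁻¹. -/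
open Filter Topology

private lemma gifs_aux_a1 (τ K p y : ℝ) (ht2 : τ^2 = τ+1) (hτ1 : 1 < τ) (hτ2 : τ < 2)
    (hK : 0 ≤ K) (hp : 0 ≤ p) (h1 : y ≤ 1+p*K) (h2 : -1-p*K ≤ y) :
    (2-τ)*y ≤ 1+((2-τ)*p)*K ∧ -1-((2-τ)*p)*K ≤ (2-τ)*y := by
  constructor <;> nlinarith [mul_nonneg hp hK]

private lemma gifs_aux_a2 (τ K p y : ℝ) (ht2 : τ^2 = τ+1) (hτ1 : 1 < τ) (hτ2 : τ < 2)
    (hK : 0 ≤ K) (hp : 0 ≤ p) (h1 : y ≤ 1+p*K) (h2 : -1-p*K ≤ y) :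
    (2-τ)*(y-τ) ≤ 1+((2-τ)*p)*K ∧ -1-((2-τ)*p)*K ≤ (2-τ)*(y-τ) := by
  constructor <;> nlinarith [mul_nonneg hp hK]

private lemma gifs_aux_a3 (τ K p y : ℝ) (ht2 : τ^2 = τ+1) (hτ1 : 1 < τ) (hτ2 : τ < 2)
    (hK : 0 ≤ K) (hp : 0 ≤ p) (h1 : y ≤ p*K) (h2 : -τ-p*K ≤ y) :
    (2-τ)*(y+τ^2) ≤ 1+((2-τ)*p)*K ∧ -1-((2-τ)*p)*K ≤ (2-τ)*(y+τ^2) := by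
  constructor <;> nlinarith [mul_nonneg hp hK]

private lemma gifs_aux_b1 (τ K p y : ℝ) (ht2 : τ^2 = τ+1) (hτ1 : 1 < τ) (hτ2 : τ < 2)
    (hK : 0 ≤ K) (hp : 0 ≤ p) (h1 : y ≤ 1+p*K) (h2 : -1-p*K ≤ y) :
    (2-τ)*(y-2*τ) ≤ ((2-τ)*p)*K ∧ -τ-((2-τ)*p)*K ≤ (2-τ)*(y-2*τ) := by
  constructor <;> nlinarith [mul_nonneg hp hK]

private lemma gifs_aux_b2 (τ K p y : ℝ) (ht2 : τ^2 = τ+1) (hτ1 : 1 < τ) (hτ2 : τ < 2)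
    (hK : 0 ≤ K) (hp : 0 ≤ p) (h1 : y ≤ p*K) (h2 : -τ-p*K ≤ y) :
    (2-τ)*y ≤ ((2-τ)*p)*K ∧ -τ-((2-τ)*p)*K ≤ (2-τ)*y := by
  constructor <;> nlinarith [mul_nonneg hp hK]

private lemma gifs_cancel {τ a : ℝ} (hτ2 : τ < 2) (h : (2-τ)*a = 0) : a = 0 := by
  rcases mul_eq_zero.mp h with h' | h'
  · linarith
  · exact h'

set_option maxHeartbeats 1000000 in
/-- The reduced boundary GIFS for ρ̃ = (a ↦ aab, b ↦ ba): with
$B = W_b ∩ (W_a - τ)$, $A = W_a ∩ (W_a - 1)$, $C = W_a ∩ W_b$ and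
$D = W_a ∩ (W_a - τ)$, the stated graph-directed equations hold. -/
theorem rho_tilde_boundary_GIFS (τ : ℝ) (hτ : τ = (1 + Real.sqrt 5) / 2)
    (Wa Wb : Set ℝ) (hWa : Wa.Nonempty) (hWb : Wb.Nonempty)
    (hca : IsCompact Wa) (hcb : IsCompact Wb)
    (h1 : Wa = (fun x : ℝ => (τ ^ 2)⁻¹ * x) '' Wa ∪
               (fun x : ℝ => (τ ^ 2)⁻¹ * (x - τ)) '' Wa ∪
               (fun x : ℝ => (τ ^ 2)⁻¹ * (x + τ ^ 2)) '' Wb)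
    (h2 : Wb = (fun x : ℝ => (τ ^ 2)⁻¹ * (x - 2 * τ)) '' Wa ∪
               (fun x : ℝ => (τ ^ 2)⁻¹ * x) '' Wb) :
    let B : Set ℝ := Wb ∩ ((fun x : ℝ => x - τ) '' Wa)
    let A : Set ℝ := Wa ∩ ((fun x : ℝ => x - 1) '' Wa)
    let C : Set ℝ := Wa ∩ Wb
    let D : Set ℝ := Wa ∩ ((fun x : ℝ => x - τ) '' Wa)
    B = {-τ⁻¹} ∪ (fun x : ℝ => (τ ^ 2)⁻¹ * x - 2 * τ⁻¹) '' A ∪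
        (fun x : ℝ => (τ ^ 2)⁻¹ * x - τ⁻¹) '' B ∧
    A = (fun x : ℝ => (τ ^ 2)⁻¹ * x - τ⁻¹) '' A ∪
        (fun x : ℝ => (τ ^ 2)⁻¹ * x) '' B ∪
        (fun x : ℝ => (τ ^ 2)⁻¹ * x) '' C ∧
    C = (fun x : ℝ => (τ ^ 2)⁻¹ * x) '' C ∪
        (fun x : ℝ => (τ ^ 2)⁻¹ * x - τ⁻¹) '' D ∪
        (fun x : ℝ => (τ ^ 2)⁻¹ * x) '' B ∧
    D = (fun x : ℝ => (τ ^ 2)⁻¹ * x - τ⁻¹) '' C := by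
  have h5 : Real.sqrt 5 ^ 2 = 5 := Real.sq_sqrt (by norm_num)
  have hs5 : 1 < Real.sqrt 5 := by nlinarith [Real.sqrt_nonneg 5]
  have ht2 : τ ^ 2 = τ + 1 := by rw [hτ]; nlinarith
  have hτ1 : 1 < τ := by rw [hτ]; linarith
  have hτ2 : τ < 2 := by nlinarith
  have hτ0 : (0:ℝ) < τ := by linarith
  have hse : (τ^2)⁻¹ = 2 - τ := by
    have h : (2 - τ) * τ^2 = 1 := by nlinarith
    field_simp
    linarith [h]
  have hti : τ⁻¹ = τ - 1 := by
    have h : (τ - 1) * τ = 1 := by nlinarith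
    field_simp
    linarith [h]
  rw [hse] at h1 h2
  rw [hse, hti]
  -- s = 2 - τ, with 0 < s < 1
  have hs0 : (0:ℝ) < 2 - τ := by linarith
  have hs1 : 2 - τ < 1 := by linarith
  -- membership maps
  have hA1 : ∀ x ∈ Wa, (2-τ)*x ∈ Wa := by
    intro x hx; rw [h1]; exact Or.inl (Or.inl ⟨x, hx, rfl⟩)
  have hA2 : ∀ x ∈ Wa, (2-τ)*(x-τ) ∈ Wa := by
    intro x hx; rw [h1]; exact Or.inl (Or.inr ⟨x, hx, rfl⟩)
  have hA3 : ∀ x ∈ Wb, (2-τ)*(x+τ^2) ∈ Wa := by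
    intro x hx; rw [h1]; exact Or.inr ⟨x, hx, rfl⟩
  have hB1 : ∀ x ∈ Wa, (2-τ)*(x-2*τ) ∈ Wb := by
    intro x hx; rw [h2]; exact Or.inl ⟨x, hx, rfl⟩
  have hB2 : ∀ x ∈ Wb, (2-τ)*x ∈ Wb := by
    intro x hx; rw [h2]; exact Or.inr ⟨x, hx, rfl⟩
  have hAcases : ∀ x ∈ Wa, (∃ y ∈ Wa, (2-τ)*y = x) ∨ (∃ y ∈ Wa, (2-τ)*(y-τ) = x) ∨
      (∃ y ∈ Wb, (2-τ)*(y+τ^2) = x) := by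
    intro x hx
    rw [h1] at hx
    rcases hx with (⟨y, hy, hyx⟩ | ⟨y, hy, hyx⟩) | ⟨y, hy, hyx⟩
    · exact Or.inl ⟨y, hy, hyx⟩
    · exact Or.inr (Or.inl ⟨y, hy, hyx⟩)
    · exact Or.inr (Or.inr ⟨y, hy, hyx⟩)
  have hBcases : ∀ x ∈ Wb, (∃ y ∈ Wa, (2-τ)*(y-2*τ) = x) ∨ (∃ y ∈ Wb, (2-τ)*y = x) := by
    intro x hx
    rw [h2] at hx
    rcases hx with ⟨y, hy, hyx⟩ | ⟨y, hy, hyx⟩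
    · exact Or.inl ⟨y, hy, hyx⟩
    · exact Or.inr ⟨y, hy, hyx⟩
  -- bounds
  obtain ⟨Ma, hMa⟩ := hca.bddAbove
  obtain ⟨ma, hma⟩ := hca.bddBelow
  obtain ⟨Mb, hMb⟩ := hcb.bddAbove
  obtain ⟨mb, hmb⟩ := hcb.bddBelow
  set K : ℝ := |Ma| + |ma| + |Mb| + |mb| + 10 with hK
  have hK0 : (0:ℝ) ≤ K := by
    have := abs_nonneg Ma; have := abs_nonneg ma; have := abs_nonneg Mb
    have := abs_nonneg mb; positivity
  have bound : ∀ n : ℕ, (∀ x ∈ Wa, x ≤ 1 + (2-τ)^n * K ∧ -1 - (2-τ)^n * K ≤ x) ∧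
      (∀ x ∈ Wb, x ≤ (2-τ)^n * K ∧ -τ - (2-τ)^n * K ≤ x) := by
    intro n
    induction n with
    | zero =>
      have k1 := le_abs_self Ma; have k2 := neg_abs_le ma
      have k3 := le_abs_self Mb; have k4 := neg_abs_le mb
      have k5 := abs_nonneg Ma; have k6 := abs_nonneg ma
      have k7 := abs_nonneg Mb; have k8 := abs_nonneg mb
      constructor
      · intro x hx
        have h1' := hMa hx; have h2' := hma hx
        constructor <;> simp only [pow_zero, one_mul, hK] <;> linarith
      · intro x hx
        have h1' := hMb hx; have h2' := hmb hx
        constructor <;> simp only [pow_zero, one_mul, hK] <;> linarith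
    | succ n ih =>
      obtain ⟨iha, ihb⟩ := ih
      have hpn : (0:ℝ) ≤ (2-τ)^n := by positivity
      have hps : (2-τ)^(n+1) = (2-τ) * (2-τ)^n := by ring
      rw [hps]
      constructor
      · intro x hx
        rcases hAcases x hx with ⟨y, hy, rfl⟩ | ⟨y, hy, rfl⟩ | ⟨y, hy, rfl⟩
        · obtain ⟨hy1, hy2⟩ := iha y hy
          exact gifs_aux_a1 τ K _ y ht2 hτ1 hτ2 hK0 hpn hy1 hy2
        · obtain ⟨hy1, hy2⟩ := iha y hy
          exact gifs_aux_a2 τ K _ y ht2 hτ1 hτ2 hK0 hpn hy1 hy2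
        · obtain ⟨hy1, hy2⟩ := ihb y hy
          exact gifs_aux_a3 τ K _ y ht2 hτ1 hτ2 hK0 hpn hy1 hy2
      · intro x hx
        rcases hBcases x hx with ⟨y, hy, rfl⟩ | ⟨y, hy, rfl⟩
        · obtain ⟨hy1, hy2⟩ := iha y hy
          exact gifs_aux_b1 τ K _ y ht2 hτ1 hτ2 hK0 hpn hy1 hy2
        · obtain ⟨hy1, hy2⟩ := ihb y hy
          exact gifs_aux_b2 τ K _ y ht2 hτ1 hτ2 hK0 hpn hy1 hy2
  have hlim : Tendsto (fun n : ℕ => (2-τ)^n * K) atTop (𝓝 0) := by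
    have := tendsto_pow_atTop_nhds_zero_of_lt_one (le_of_lt hs0) hs1
    simpa using this.mul_const K
  have hWaUB : ∀ x ∈ Wa, x ≤ 1 := by
    intro x hx
    have : Tendsto (fun n : ℕ => 1 + (2-τ)^n * K) atTop (𝓝 1) := by
      simpa using (tendsto_const_nhds (x := (1:ℝ)) (f := atTop)).add hlim
    exact ge_of_tendsto' this (fun n => ((bound n).1 x hx).1)
  have hWaLB : ∀ x ∈ Wa, -1 ≤ x := by
    intro x hx
    have : Tendsto (fun n : ℕ => -1 - (2-τ)^n * K) atTop (𝓝 (-1)) := by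
      simpa using (tendsto_const_nhds (x := (-1:ℝ)) (f := atTop)).sub hlim
    exact le_of_tendsto' this (fun n => ((bound n).1 x hx).2)
  have hWbUB : ∀ x ∈ Wb, x ≤ 0 := by
    intro x hx
    exact ge_of_tendsto' hlim (fun n => ((bound n).2 x hx).1)
  have hWbLB : ∀ x ∈ Wb, -τ ≤ x := by
    intro x hx
    have : Tendsto (fun n : ℕ => -τ - (2-τ)^n * K) atTop (𝓝 (-τ)) := by
      simpa using (tendsto_const_nhds (x := (-τ:ℝ)) (f := atTop)).sub hlim
    exact le_of_tendsto' this (fun n => ((bound n).2 x hx).2)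
  -- key memberships
  obtain ⟨a0, ha0⟩ := hWa
  obtain ⟨b0, hb0⟩ := hWb
  have m0b : (0:ℝ) ∈ Wb := by
    have hseq : ∀ n : ℕ, (2-τ)^n * b0 ∈ Wb := by
      intro n
      induction n with
      | zero => simpa using hb0
      | succ n ih =>
        have := hB2 _ ih
        have he : (2-τ)*((2-τ)^n * b0) = (2-τ)^(n+1) * b0 := by ring
        rwa [he] at this
    have htend : Tendsto (fun n : ℕ => (2-τ)^n * b0) atTop (𝓝 0) := by
      have := tendsto_pow_atTop_nhds_zero_of_lt_one (le_of_lt hs0) hs1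
      simpa using this.mul_const b0
    exact hcb.isClosed.mem_of_tendsto htend (Filter.Eventually.of_forall hseq)
  have mm1a : (-1:ℝ) ∈ Wa := by
    have hseq : ∀ n : ℕ, (2-τ)^n * (a0 + 1) - 1 ∈ Wa := by
      intro n
      induction n with
      | zero => simpa using ha0
      | succ n ih =>
        have := hA2 _ ih
        have he : (2-τ)*(((2-τ)^n * (a0+1) - 1) - τ) = (2-τ)^(n+1) * (a0+1) - 1 := by
          linear_combination ((2-τ)^n * (a0+1) - τ - 1) * (0 : ℝ) + ht2
        rwa [he] at this
    have htend : Tendsto (fun n : ℕ => (2-τ)^n * (a0+1) - 1) atTop (𝓝 (-1)) := by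
      have h' := (tendsto_pow_atTop_nhds_zero_of_lt_one (le_of_lt hs0) hs1).mul_const (a0+1)
      have := h'.sub (tendsto_const_nhds (x := (1:ℝ)))
      simpa using this
    exact hca.isClosed.mem_of_tendsto htend (Filter.Eventually.of_forall hseq)
  have m1a : (1:ℝ) ∈ Wa := by
    have := hA3 0 m0b
    have he : (2-τ)*((0:ℝ)+τ^2) = 1 := by nlinarith
    rwa [he] at this
  have mtb : (-τ:ℝ) ∈ Wb := by
    have := hB1 (-1) mm1a
    have he : (2-τ)*((-1:ℝ)-2*τ) = -τ := by nlinarith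
    rwa [he] at this
  have hr1 : (2.23:ℝ) < Real.sqrt 5 := by nlinarith [h5, Real.sqrt_nonneg 5]
  have hr2 : Real.sqrt 5 < 2.24 := by nlinarith [h5, Real.sqrt_nonneg 5]
  have hτa : (1.61:ℝ) < τ := by rw [hτ]; linarith
  have hτb : τ < 1.62 := by rw [hτ]; linarith
  have ht3 : τ^3 = 2*τ + 1 := by linear_combination (τ+1)*ht2
  -- the four equations
  have eD : Wa ∩ ((fun x : ℝ => x - τ) '' Wa)
      = (fun x : ℝ => (2 - τ) * x - (τ - 1)) '' (Wa ∩ Wb) := by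
    ext x
    simp only [Set.mem_inter_iff, Set.mem_image]
    constructor
    · rintro ⟨hxa, y, hy, rfl⟩
      rcases hAcases y hy with ⟨q, hq, hqe⟩ | ⟨q, hq, hqe⟩ | ⟨q, hq, hqe⟩
      · exfalso
        have b1 := hWaLB _ hxa
        have b2 := hWaUB q hq
        have m1 := mul_le_mul_of_nonneg_left b2 hs0.le
        linarith only [ht2, hτa, hqe, b1, m1]
      · exfalso
        have b1 := hWaLB _ hxa
        have b2 := hWaUB q hq
        have m1 := mul_le_mul_of_nonneg_left (show q - τ ≤ 1 - τ by linarith) hs0.le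
        linarith only [ht2, hτa, hτb, hqe, b1, m1]
      · rcases hAcases _ hxa with ⟨p, hp, hpe⟩ | ⟨p, hp, hpe⟩ | ⟨p, hp, hpe⟩
        · exfalso
          have b1 := hWaUB y hy
          have b2 := hWaLB p hp
          have m1 := mul_le_mul_of_nonneg_left b2 hs0.le
          linarith only [ht2, hτa, hpe, b1, m1]
        · have h0 : (2-τ) * (p - q) = 0 := by linear_combination hpe - hqe - τ * ht2
          have hpq : p = q := by have := gifs_cancel hτ2 h0; linarith
          refine ⟨q, ⟨by rwa [hpq] at hp, hq⟩, ?_⟩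
          linear_combination hqe + (τ - 1) * ht2
        · exfalso
          have b1 := hWaUB y hy
          have b2 := hWbLB p hp
          have m1 := mul_le_mul_of_nonneg_left b2 hs0.le
          linarith only [ht2, ht3, hτa, hτb, hpe, b1, m1]
    · rintro ⟨z, ⟨hza, hzb⟩, rfl⟩
      constructor
      · have h := hA2 z hza
        have he : (2-τ)*(z-τ) = (2-τ)*z - (τ-1) := by linear_combination ht2
        rwa [he] at h
      · exact ⟨(2-τ)*(z+τ^2), hA3 z hzb, by linear_combination (1-τ) * ht2⟩
  have eC : Wa ∩ Wb
      = (fun x : ℝ => (2 - τ) * x) '' (Wa ∩ Wb)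
        ∪ (fun x : ℝ => (2 - τ) * x - (τ - 1)) '' (Wa ∩ ((fun x : ℝ => x - τ) '' Wa))
        ∪ (fun x : ℝ => (2 - τ) * x) '' (Wb ∩ ((fun x : ℝ => x - τ) '' Wa)) := by
    ext x
    simp only [Set.mem_inter_iff, Set.mem_union, Set.mem_image]
    constructor
    · rintro ⟨hxa, hxb⟩
      rcases hAcases x hxa with ⟨p, hp, hpe⟩ | ⟨p, hp, hpe⟩ | ⟨p, hp, hpe⟩
      · rcases hBcases x hxb with ⟨q, hq, hqe⟩ | ⟨q, hq, hqe⟩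
        · exfalso
          have b1 := hWaLB p hp
          have b2 := hWaUB q hq
          have m1 := mul_le_mul_of_nonneg_left b1 hs0.le
          have m2 := mul_le_mul_of_nonneg_left (show q - 2*τ ≤ 1 - 2*τ by linarith) hs0.le
          linarith only [ht2, hτa, hτb, hpe, hqe, m1, m2]
        · have h0 : (2-τ) * (p - q) = 0 := by linear_combination hpe - hqe
          have hpq : p = q := by have := gifs_cancel hτ2 h0; linarith
          exact Or.inl (Or.inl ⟨p, ⟨hp, by rwa [← hpq] at hq⟩, hpe⟩)
      · rcases hBcases x hxb with ⟨q, hq, hqe⟩ | ⟨q, hq, hqe⟩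
        · have h0 : (2-τ) * (p - (q - τ)) = 0 := by linear_combination hpe - hqe
          have hpq : q - τ = p := by have := gifs_cancel hτ2 h0; linarith
          exact Or.inl (Or.inr ⟨p, ⟨hp, ⟨q, hq, hpq⟩⟩, by linear_combination hpe - ht2⟩)
        · have h0 : (2-τ) * (q - (p - τ)) = 0 := by linear_combination hqe - hpe
          have hpq : p - τ = q := by have := gifs_cancel hτ2 h0; linarith
          exact Or.inr ⟨q, ⟨hq, ⟨p, hp, hpq⟩⟩, hqe⟩
      · exfalso
        have b1 := hWbLB p hp
        have m1 := mul_le_mul_of_nonneg_left b1 hs0.le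
        rcases hBcases x hxb with ⟨q, hq, hqe⟩ | ⟨q, hq, hqe⟩
        · have b2 := hWaUB q hq
          have m2 := mul_le_mul_of_nonneg_left (show q - 2*τ ≤ 1 - 2*τ by linarith) hs0.le
          linarith only [ht2, ht3, hτa, hτb, hpe, hqe, m1, m2]
        · have b2 := hWbUB q hq
          have m2 := mul_le_mul_of_nonneg_left b2 hs0.le
          linarith only [ht2, ht3, hτa, hτb, hpe, hqe, m1, m2]
    · rintro ((⟨z, ⟨hza, hzb⟩, rfl⟩ | ⟨z, ⟨hza, w, hw, hwz⟩, rfl⟩) | ⟨z, ⟨hzb, w, hw, hwz⟩, rfl⟩)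
      · exact ⟨hA1 z hza, hB2 z hzb⟩
      · constructor
        · have h := hA2 z hza
          have he : (2-τ)*(z-τ) = (2-τ)*z - (τ-1) := by linear_combination ht2
          rwa [he] at h
        · have h := hB1 w hw
          have he : (2-τ)*(w-2*τ) = (2-τ)*z - (τ-1) := by linear_combination (2-τ)*hwz + ht2
          rwa [he] at h
      · constructor
        · have h := hA2 w hw
          have he : (2-τ)*(w-τ) = (2-τ)*z := by linear_combination (2-τ)*hwz
          rwa [he] at h
        · exact hB2 z hzb
  have eA : Wa ∩ ((fun x : ℝ => x - 1) '' Wa)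
      = (fun x : ℝ => (2 - τ) * x - (τ - 1)) '' (Wa ∩ ((fun x : ℝ => x - 1) '' Wa))
        ∪ (fun x : ℝ => (2 - τ) * x) '' (Wb ∩ ((fun x : ℝ => x - τ) '' Wa))
        ∪ (fun x : ℝ => (2 - τ) * x) '' (Wa ∩ Wb) := by
    ext x
    simp only [Set.mem_inter_iff, Set.mem_union, Set.mem_image]
    constructor
    · rintro ⟨hxa, y, hy, rfl⟩
      rcases hAcases y hy with ⟨q, hq, hqe⟩ | ⟨q, hq, hqe⟩ | ⟨q, hq, hqe⟩
      · rcases hAcases _ hxa with ⟨p, hp, hpe⟩ | ⟨p, hp, hpe⟩ | ⟨p, hp, hpe⟩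
        · exfalso
          have b1 := hWaUB q hq
          have b2 := hWaLB p hp
          have m1 := mul_le_mul_of_nonneg_left b1 hs0.le
          have m2 := mul_le_mul_of_nonneg_left b2 hs0.le
          linarith only [ht2, hτa, hτb, hqe, hpe, m1, m2]
        · have h0 : (2-τ)*(p - q + 1) = 0 := by linear_combination hpe - hqe - ht2
          have hpq : q - 1 = p := by have := gifs_cancel hτ2 h0; linarith
          exact Or.inl (Or.inl ⟨p, ⟨hp, ⟨q, hq, hpq⟩⟩, by linear_combination hpe - ht2⟩)
        · exfalso
          have b1 := hWaUB y hy
          have b2 := hWbLB p hp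
          have m1 := mul_le_mul_of_nonneg_left b2 hs0.le
          linarith only [ht2, ht3, hτa, hτb, hpe, b1, m1]
      · exfalso
        have b1 := hWaLB _ hxa
        have b2 := hWaUB q hq
        have m1 := mul_le_mul_of_nonneg_left (show q - τ ≤ 1 - τ by linarith) hs0.le
        linarith only [ht2, hτa, hτb, hqe, b1, m1]
      · rcases hAcases _ hxa with ⟨p, hp, hpe⟩ | ⟨p, hp, hpe⟩ | ⟨p, hp, hpe⟩
        · have h0 : (2-τ)*(p - q) = 0 := by linear_combination hpe - hqe + (1-τ)*ht2
          have hpq : p = q := by have := gifs_cancel hτ2 h0; linarith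
          exact Or.inr ⟨p, ⟨hp, by rwa [← hpq] at hq⟩, hpe⟩
        · have h0 : (2-τ)*(q - p + τ) = 0 := by linear_combination hqe - hpe + (τ-1)*ht2
          have hpq : p - τ = q := by have := gifs_cancel hτ2 h0; linarith
          refine Or.inl (Or.inr ⟨q, ⟨hq, ⟨p, hp, hpq⟩⟩, ?_⟩)
          linear_combination hpe + h0
        · exfalso
          have b1 := hWaUB y hy
          have b2 := hWbLB p hp
          have m1 := mul_le_mul_of_nonneg_left b2 hs0.le
          linarith only [ht2, ht3, hτa, hτb, hpe, b1, m1]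
    · rintro ((⟨z, ⟨hza, w, hw, hwz⟩, rfl⟩ | ⟨z, ⟨hzb, w, hw, hwz⟩, rfl⟩) | ⟨z, ⟨hza, hzb⟩, rfl⟩)
      · constructor
        · have h := hA2 z hza
          have he : (2-τ)*(z-τ) = (2-τ)*z - (τ-1) := by linear_combination ht2
          rwa [he] at h
        · exact ⟨(2-τ)*w, hA1 w hw, by linear_combination (2-τ)*hwz⟩
      · constructor
        · have h := hA2 w hw
          have he : (2-τ)*(w-τ) = (2-τ)*z := by linear_combination (2-τ)*hwz
          rwa [he] at h
        · exact ⟨(2-τ)*(z+τ^2), hA3 z hzb, by linear_combination (1-τ)*ht2⟩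
      · exact ⟨hA1 z hza, ⟨(2-τ)*(z+τ^2), hA3 z hzb, by linear_combination (1-τ)*ht2⟩⟩
  have eB : Wb ∩ ((fun x : ℝ => x - τ) '' Wa)
      = {-(τ-1)}
        ∪ (fun x : ℝ => (2 - τ) * x - 2*(τ-1)) '' (Wa ∩ ((fun x : ℝ => x - 1) '' Wa))
        ∪ (fun x : ℝ => (2 - τ) * x - (τ-1)) '' (Wb ∩ ((fun x : ℝ => x - τ) '' Wa)) := by
    ext x
    simp only [Set.mem_inter_iff, Set.mem_union, Set.mem_image, Set.mem_singleton_iff]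
    constructor
    · rintro ⟨hxb, y, hy, rfl⟩
      rcases hBcases _ hxb with ⟨p, hp, hpe⟩ | ⟨p, hp, hpe⟩
      · rcases hAcases y hy with ⟨q, hq, hqe⟩ | ⟨q, hq, hqe⟩ | ⟨q, hq, hqe⟩
        · have h0 : (2-τ)*(q - p - 1) = 0 := by linear_combination hqe - hpe + 2*ht2
          have hpq : q - 1 = p := by have := gifs_cancel hτ2 h0; linarith
          exact Or.inl (Or.inr ⟨p, ⟨hp, ⟨q, hq, hpq⟩⟩, by linear_combination hpe - 2*ht2⟩)
        · exfalso
          have b1 := hWaLB p hp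
          have b2 := hWaUB q hq
          have m1 := mul_le_mul_of_nonneg_left (show -1 - 2*τ ≤ p - 2*τ by linarith) hs0.le
          have m2 := mul_le_mul_of_nonneg_left (show q - τ ≤ 1 - τ by linarith) hs0.le
          linarith only [ht2, ht3, hτa, hτb, hpe, hqe, m1, m2]
        · have h0 : (2-τ)*(q - p + τ) = 0 := by linear_combination hqe - hpe + τ*ht2
          have hpq : p - τ = q := by have := gifs_cancel hτ2 h0; linarith
          exact Or.inr ⟨q, ⟨hq, ⟨p, hp, hpq⟩⟩, by linear_combination hqe + (τ-1)*ht2⟩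
      · have b2 := hWbLB p hp
        have m1 := mul_le_mul_of_nonneg_left b2 hs0.le
        rcases hAcases y hy with ⟨q, hq, hqe⟩ | ⟨q, hq, hqe⟩ | ⟨q, hq, hqe⟩
        · exfalso
          have b3 := hWaUB q hq
          have m2 := mul_le_mul_of_nonneg_left b3 hs0.le
          linarith only [ht2, hτa, hτb, hpe, hqe, m1, m2]
        · exfalso
          have b3 := hWaUB q hq
          have m2 := mul_le_mul_of_nonneg_left (show q - τ ≤ 1 - τ by linarith) hs0.le
          linarith only [ht2, hτa, hτb, hpe, hqe, m1, m2]
        · have b3 := hWbUB q hq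
          have m2 := mul_le_mul_of_nonneg_left b3 hs0.le
          have hy1 : y = 1 := by linarith only [ht2, ht3, hpe, hqe, m1, m2]
          exact Or.inl (Or.inl (by rw [hy1]; ring))
    · rintro ((hx | ⟨z, ⟨hza, w, hw, hwz⟩, rfl⟩) | ⟨z, ⟨hzb, w, hw, hwz⟩, rfl⟩)
      · subst hx
        constructor
        · have h := hB2 _ mtb
          have he : (2-τ)*(-τ) = -(τ-1) := by linear_combination ht2
          rwa [he] at h
        · exact ⟨1, m1a, by ring⟩
      · constructor
        · have h := hB1 z hza
          have he : (2-τ)*(z-2*τ) = (2-τ)*z - 2*(τ-1) := by linear_combination 2*ht2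
          rwa [he] at h
        · exact ⟨(2-τ)*w, hA1 w hw, by linear_combination (2-τ)*hwz⟩
      · constructor
        · have h := hB1 w hw
          have he : (2-τ)*(w-2*τ) = (2-τ)*z - (τ-1) := by linear_combination (2-τ)*hwz + ht2
          rwa [he] at h
        · exact ⟨(2-τ)*(z+τ^2), hA3 z hzb, by linear_combination (1-τ)*ht2⟩
  intro B A C D
  exact ⟨eB, eA, eC, eD⟩
end

section
/- Let F₂ be the free group on two generators a and b. The endomorphism of F₂ determined by a ↦ aab and b ↦ ba (induced by the substitution ρ̃ = (aab, ba)) is not an automorphism of F₂, i.e., it is not bijective. -/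
/-!
The abelianization of `ρ̃` is the unimodular matrix `[[2, 1], [1, 1]]`, so a nonabelian quotient is
needed. Compose with the representation `F₂ → S₃` sending `a` to the 3-cycle `x = finRotate 3` and
`b` to the transposition `y = swap 0 1`. The images `x x y` and `y x` of `aab` and `ba` both fix
`0`, so the composite lands in the stabilizer of `0`. A surjective endomorphism would not shrink
the image of the representation, but `x` itself moves `0`.
-/

theorem MonoidHom.range_comp_of_surjective {G G' H : Type*} [Group G] [Group G'] [Group H]
    {φ : G →* G'} (hφ : Function.Surjective φ) (ψ : G' →* H) : (ψ.comp φ).range = ψ.range := by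
  rw [range_comp, range_eq_top_of_surjective φ hφ, ← range_eq_map]

/-- The endomorphism of the free group on two generators induced by the
substitution `ρ̃ = (a ↦ aab, b ↦ ba)` is not an automorphism. -/
theorem rho_tilde_not_invertible :
    let a : FreeGroup (Fin 2) := FreeGroup.of 0
    let b : FreeGroup (Fin 2) := FreeGroup.of 1
    let φ : FreeGroup (Fin 2) →* FreeGroup (Fin 2) :=
      FreeGroup.lift (fun i => if i = 0 then a * a * b else b * a)
    ¬ Function.Bijective φ := by
  intro a b φ hφ
  let x : Equiv.Perm (Fin 3) := finRotate 3
  let y : Equiv.Perm (Fin 3) := Equiv.swap 0 1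
  let ψ : FreeGroup (Fin 2) →* Equiv.Perm (Fin 3) := FreeGroup.lift (fun i => if i = 0 then x else y)
  let S := MulAction.stabilizer (Equiv.Perm (Fin 3)) (0 : Fin 3)
  have hcomp : ψ.comp φ = FreeGroup.lift (fun i => if i = 0 then x * x * y else y * x) := by
    ext i
    fin_cases i <;> simp [ψ, φ, a, b]
  have hle : (ψ.comp φ).range ≤ S := by
    rw [hcomp]
    refine FreeGroup.range_lift_le ?_
    rintro _ ⟨i, rfl⟩
    fin_cases i <;> simp only [SetLike.mem_coe] <;> decide
  have hx : x ∈ (ψ.comp φ).range := by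
    rw [MonoidHom.range_comp_of_surjective hφ.2]
    exact ⟨a, by simp [ψ, a]⟩
  exact absurd (MulAction.mem_stabilizer_iff.mp (hle hx)) (by decide)
end
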